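/- arXiv:2004.10019 — 13 statements merged into one kernel-verified Lean document; each statement's English description precedes it below -/
import Mathlib

section
/- Let (M_n)_{n≥0} be a martingale with M_0 = 0 and |M_n − M_{n−1}| ≤ c almost surely for all n ≥ 1, and let Var_n = ∑_{k=1}^n E[(M_k − M_{k−1})² | 𝓕_{k−1}]. Then for every x > 0 and every y > 0, P[∃ n ≥ 1 such that M_n ≥ x and Var_n ≤ y] ≤ exp(−x² / (2(y + c·x))). (Freedman's inequality.) -/
open MeasureTheory ProbabilityTheory

lemma freedman_exp_le_inv_one_sub {u : ℝ} (hu : u < 1) : Real.exp u ≤ 1 / (1 - u) := by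
  have h := Real.add_one_le_exp (-u)
  rw [le_div_iff₀ (by linarith)]
  calc Real.exp u * (1 - u) ≤ Real.exp u * Real.exp (-u) := by
        nlinarith [Real.exp_pos u]
    _ = 1 := by rw [← Real.exp_add]; simp

lemma freedman_exp_quad_pos {u : ℝ} (hu : 0 ≤ u) :
    Real.exp u ≤ 1 + u + u ^ 2 / 2 * Real.exp u := by
  set F : ℝ → ℝ := fun u => u ^ 2 / 2 * Real.exp u - Real.exp u + 1 + u with hFdef
  set G : ℝ → ℝ := fun u => (u + u ^ 2 / 2 - 1) * Real.exp u + 1 with hGdef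
  have hF : ∀ t : ℝ, HasDerivAt F (G t) t := by
    intro t
    have h1 : HasDerivAt (fun u : ℝ => u ^ 2 / 2 * Real.exp u)
        (t * Real.exp t + t ^ 2 / 2 * Real.exp t) t := by
      have := ((hasDerivAt_pow 2 t).div_const 2).mul (Real.hasDerivAt_exp t)
      exact this.congr_deriv (by ring)
    have := ((h1.sub (Real.hasDerivAt_exp t)).add_const 1).add (hasDerivAt_id t)
    refine this.congr_deriv ?_; simp [hGdef]; ring
  have hG : ∀ t : ℝ, HasDerivAt G ((2 * t + t ^ 2 / 2) * Real.exp t) t := by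
    intro t
    have h1 : HasDerivAt (fun u : ℝ => u + u ^ 2 / 2 - 1) (1 + t) t := by
      have := ((hasDerivAt_id t).add ((hasDerivAt_pow 2 t).div_const 2)).sub_const 1
      exact this.congr_deriv (by ring)
    have := (h1.mul (Real.hasDerivAt_exp t)).add_const 1
    exact this.congr_deriv (by ring)
  have hGnonneg : ∀ t ∈ Set.Ici (0:ℝ), 0 ≤ G t := by
    have hGmono : MonotoneOn G (Set.Ici 0) := by
      refine monotoneOn_of_deriv_nonneg (convex_Ici 0)
        (fun t _ => ((hG t).continuousAt).continuousWithinAt)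
        (fun t _ => ((hG t).differentiableAt).differentiableWithinAt) (fun t ht => ?_)
      rw [(hG t).deriv]
      rw [interior_Ici] at ht
      have : (0:ℝ) < t := ht
      positivity
    intro t ht
    have := hGmono (Set.self_mem_Ici) ht ht
    simpa [hGdef] using this
  have hFmono : MonotoneOn F (Set.Ici 0) := by
    refine monotoneOn_of_deriv_nonneg (convex_Ici 0)
      (fun t _ => ((hF t).continuousAt).continuousWithinAt)
      (fun t _ => ((hF t).differentiableAt).differentiableWithinAt) (fun t ht => ?_)
    rw [(hF t).deriv]
    exact hGnonneg t (interior_subset ht)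
  have := hFmono Set.self_mem_Ici hu hu
  simp only [hFdef] at this
  simp only [pow_two, Real.exp_zero] at this ⊢
  nlinarith [this]

lemma freedman_exp_quad_neg {u : ℝ} (hu : u ≤ 0) : Real.exp u ≤ 1 + u + u ^ 2 / 2 := by
  have h := Real.quadratic_le_exp_of_nonneg (neg_nonneg.2 hu)
  have h2 : Real.exp u * Real.exp (-u) = 1 := by rw [← Real.exp_add]; simp
  nlinarith [Real.exp_pos u, Real.exp_pos (-u), sq_nonneg u, sq_nonneg (u^2 + 2*u)]

lemma freedman_exp_quad_abs (u : ℝ) : Real.exp u ≤ 1 + u + u ^ 2 / 2 * Real.exp |u| := by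
  rcases le_or_gt u 0 with h | h
  · have := freedman_exp_quad_neg h
    have h1 : (1:ℝ) ≤ Real.exp |u| := Real.one_le_exp (abs_nonneg u)
    nlinarith [sq_nonneg u]
  · rw [abs_of_pos h]; exact freedman_exp_quad_pos h.le

/-- Freedman's inequality for martingales with bounded increments. -/
theorem freedman_inequality
    {Ω : Type*} {m0 : MeasurableSpace Ω} {μ : Measure Ω} [IsProbabilityMeasure μ]
    (𝓕 : Filtration ℕ m0) (M : ℕ → Ω → ℝ) (c : ℝ) (hc : 0 < c)
    (hM : Martingale M 𝓕 μ) (hM0 : M 0 = 0)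
    (hbdd : ∀ n : ℕ, 1 ≤ n → ∀ᵐ ω ∂μ, |M n ω - M (n - 1) ω| ≤ c)
    (Var : ℕ → Ω → ℝ)
    (hVar : ∀ n ω, Var n ω
      = ∑ k ∈ Finset.Icc 1 n, (μ[fun ω' => (M k ω' - M (k - 1) ω') ^ 2 | 𝓕 (k - 1)]) ω)
    (x y : ℝ) (hx : 0 < x) (hy : 0 < y) :
    μ {ω | ∃ n : ℕ, 1 ≤ n ∧ x ≤ M n ω ∧ Var n ω ≤ y}
      ≤ ENNReal.ofReal (Real.exp (-(x ^ 2) / (2 * (y + c * x)))) := by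
  have hyx : (0:ℝ) < y + c * x := by positivity
  set L : ℝ := x / (y + c * x) with hLdef
  have hL : 0 < L := div_pos hx hyx
  have hLc : L * c < 1 := by
    rw [hLdef, div_mul_eq_mul_div, div_lt_one hyx]; nlinarith
  set β : ℝ := L ^ 2 / 2 * Real.exp (L * c) with hβdef
  have hβ : 0 < β := by positivity
  set S : ℕ → Ω → ℝ := fun n ω => Real.exp (L * M n ω - β * Var n ω) with hSdef
  -- basic facts about Var
  have hVar0 : ∀ ω, Var 0 ω = 0 := fun ω => by simp [hVar]
  have hS0 : S 0 = fun _ => 1 := by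
    funext ω; simp [hSdef, hVar0, hM0]
  have hVarsucc : ∀ n ω, Var (n + 1) ω
      = Var n ω + (μ[fun ω' => (M (n + 1) ω' - M n ω') ^ 2 | 𝓕 n]) ω := by
    intro n ω
    rw [hVar, hVar, Finset.sum_Icc_succ_top (Nat.le_add_left 1 n)]
    simp
  -- measurability
  have hMsm : ∀ n, StronglyMeasurable[𝓕 n] (M n) := fun n => hM.stronglyAdapted n
  have hMmeas : ∀ n, Measurable (M n) := fun n => ((hMsm n).mono (𝓕.le n)).measurable
  have hVar_sm : ∀ n j, n ≤ j + 1 → StronglyMeasurable[𝓕 j] (Var n) := by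
    intro n j hnj
    have hfe : Var n = fun ω => ∑ k ∈ Finset.Icc 1 n,
        (μ[fun ω' => (M k ω' - M (k - 1) ω') ^ 2 | 𝓕 (k - 1)]) ω := funext (hVar n)
    rw [hfe]
    refine Finset.stronglyMeasurable_fun_sum _ fun k hk => ?_
    refine stronglyMeasurable_condExp.mono (𝓕.mono ?_)
    have := (Finset.mem_Icc.1 hk)
    omega
  have hVarmeas : ∀ n, Measurable (Var n) := fun n =>
    ((hVar_sm n n (by omega)).mono (𝓕.le n)).measurable
  -- increments
  have hΔint : ∀ n : ℕ, Integrable (fun ω => M (n + 1) ω - M n ω) μ := fun n =>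
    (hM.integrable (n + 1)).sub (hM.integrable n)
  have hΔbdd : ∀ n : ℕ, ∀ᵐ ω ∂μ, |M (n + 1) ω - M n ω| ≤ c := by
    intro n
    have := hbdd (n + 1) (Nat.le_add_left 1 n)
    simpa using this
  have hΔsq_int : ∀ n : ℕ, Integrable (fun ω => (M (n + 1) ω - M n ω) ^ 2) μ := by
    intro n
    refine Integrable.mono' (integrable_const (c ^ 2))
      ((((hMmeas (n + 1)).sub (hMmeas n)).pow_const 2).aestronglyMeasurable) ?_
    filter_upwards [hΔbdd n] with ω hω
    rw [Real.norm_eq_abs, abs_pow]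
    exact pow_le_pow_left₀ (abs_nonneg _) hω 2
  have hMbdd : ∀ n : ℕ, ∀ᵐ ω ∂μ, |M n ω| ≤ n * c := by
    intro n
    induction n with
    | zero => simp [hM0]
    | succ n ih =>
      filter_upwards [ih, hΔbdd n] with ω h1 h2
      have : |M (n + 1) ω| ≤ |M n ω| + |M (n + 1) ω - M n ω| := by
        calc |M (n + 1) ω| = |M n ω + (M (n + 1) ω - M n ω)| := by ring_nf
          _ ≤ |M n ω| + |M (n + 1) ω - M n ω| := abs_add_le _ _
      push_cast
      nlinarith
  have hVar_nonneg : ∀ n : ℕ, ∀ᵐ ω ∂μ, 0 ≤ Var n ω := by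
    intro n
    have h : ∀ k : ℕ, ∀ᵐ ω ∂μ,
        0 ≤ (μ[fun ω' => (M k ω' - M (k - 1) ω') ^ 2 | 𝓕 (k - 1)]) ω := by
      intro k
      exact condExp_nonneg (Filter.Eventually.of_forall fun ω => sq_nonneg _)
    filter_upwards [ae_all_iff.2 h] with ω hω
    rw [hVar]
    exact Finset.sum_nonneg fun k _ => hω k
  -- properties of S
  have hS_sm : ∀ n, StronglyMeasurable[𝓕 n] (S n) := by
    intro n
    exact (Measurable.exp ((((hMsm n).measurable).const_mul L).sub
      (((hVar_sm n n (by omega)).measurable).const_mul β))).stronglyMeasurable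
  have hS_int : ∀ n, Integrable (S n) μ := by
    intro n
    refine Integrable.mono' (integrable_const (Real.exp (L * (n * c))))
      (((hS_sm n).mono (𝓕.le n)).aestronglyMeasurable) ?_
    filter_upwards [hMbdd n, hVar_nonneg n] with ω h1 h2
    rw [Real.norm_eq_abs, abs_of_pos (Real.exp_pos _), Real.exp_le_exp]
    have : L * M n ω ≤ L * (n * c) :=
      mul_le_mul_of_nonneg_left (le_trans (le_abs_self _) h1) hL.le
    nlinarith
  -- the supermartingale property
  have hsuper : Supermartingale S 𝓕 μ := by
    refine supermartingale_nat hS_sm hS_int ?_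
    intro n
    set Δ : Ω → ℝ := fun ω => M (n + 1) ω - M n ω with hΔdef
    set V : Ω → ℝ := μ[fun ω' => (M (n + 1) ω' - M n ω') ^ 2 | 𝓕 n] with hVdef
    set G : Ω → ℝ := fun ω => Real.exp (L * M n ω - β * Var (n + 1) ω) with hGdef
    set E : Ω → ℝ := fun ω => Real.exp (L * Δ ω) with hEdef
    have hG_sm : StronglyMeasurable[𝓕 n] G := by
      exact (Measurable.exp ((((hMsm n).measurable).const_mul L).sub
        (((hVar_sm (n + 1) n (by omega)).measurable).const_mul β))).stronglyMeasurable
    have hprod : S (n + 1) = G * E := by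
      funext ω
      show Real.exp _ = Real.exp _ * Real.exp _
      rw [← Real.exp_add]
      congr 1
      ring
    have hE_int : Integrable E μ := by
      refine Integrable.mono' (integrable_const (Real.exp (L * c)))
        ((Measurable.exp ((((hMmeas (n + 1)).sub (hMmeas n))).const_mul L)).aestronglyMeasurable) ?_
      filter_upwards [hΔbdd n] with ω hω
      rw [Real.norm_eq_abs, abs_of_pos (Real.exp_pos _), Real.exp_le_exp]
      calc L * Δ ω ≤ L * |Δ ω| := mul_le_mul_of_nonneg_left (le_abs_self _) hL.le
        _ ≤ L * c := mul_le_mul_of_nonneg_left hω hL.le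
    have hGE_int : Integrable (G * E) μ := by rw [← hprod]; exact hS_int (n + 1)
    have step1 : μ[S (n + 1) | 𝓕 n] =ᵐ[μ] G * μ[E | 𝓕 n] := by
      rw [hprod]
      exact condExp_mul_of_stronglyMeasurable_left hG_sm hGE_int hE_int
    -- bound the conditional expectation of E
    set g : Ω → ℝ := fun ω => 1 + L * Δ ω + β * Δ ω ^ 2 with hgdef
    have hg_int : Integrable g μ := by
      refine Integrable.add (Integrable.add (integrable_const 1) ?_) ?_
      · exact (hΔint n).const_mul L
      · exact (hΔsq_int n).const_mul β
    have hEg : E ≤ᵐ[μ] g := by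
      filter_upwards [hΔbdd n] with ω hω
      have h1 := freedman_exp_quad_abs (L * Δ ω)
      have h2 : |L * Δ ω| ≤ L * c := by
        rw [abs_mul, abs_of_pos hL]
        exact mul_le_mul_of_nonneg_left hω hL.le
      have h3 : Real.exp |L * Δ ω| ≤ Real.exp (L * c) := Real.exp_le_exp.2 h2
      have h4 : (L * Δ ω) ^ 2 / 2 * Real.exp |L * Δ ω|
          ≤ (L * Δ ω) ^ 2 / 2 * Real.exp (L * c) :=
        mul_le_mul_of_nonneg_left h3 (by positivity)
      show Real.exp (L * Δ ω) ≤ 1 + L * Δ ω + β * Δ ω ^ 2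
      have : β * Δ ω ^ 2 = (L * Δ ω) ^ 2 / 2 * Real.exp (L * c) := by
        rw [hβdef]; ring
      rw [this]
      exact h1.trans (by linarith)
    have step2 : μ[E | 𝓕 n] ≤ᵐ[μ] μ[g | 𝓕 n] := condExp_mono hE_int hg_int hEg
    -- compute the conditional expectation of g
    have hmart : μ[M (n + 1) | 𝓕 n] =ᵐ[μ] M n := hM.condExp_ae_eq (Nat.le_succ n)
    have hMn_ce : μ[M n | 𝓕 n] = M n :=
      condExp_of_stronglyMeasurable (𝓕.le n) (hMsm n) (hM.integrable n)
    have hΔ_ce : μ[Δ | 𝓕 n] =ᵐ[μ] 0 := by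
      have h5 : μ[Δ | 𝓕 n] =ᵐ[μ] μ[M (n + 1) | 𝓕 n] - μ[M n | 𝓕 n] :=
        condExp_sub (hM.integrable (n + 1)) (hM.integrable n) _
      filter_upwards [h5, hmart] with ω e1 e2
      have e3 : (μ[M n | 𝓕 n]) ω = M n ω := congrFun hMn_ce ω
      simp only [Pi.sub_apply, Pi.zero_apply] at e1 ⊢
      rw [e1, e2, e3, sub_self]
    have step3 : μ[g | 𝓕 n] =ᵐ[μ] fun ω => 1 + β * V ω := by
      have ha : μ[g | 𝓕 n] =ᵐ[μ]
          μ[fun ω => 1 + L * Δ ω | 𝓕 n] + μ[fun ω => β * Δ ω ^ 2 | 𝓕 n] :=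
        condExp_add (Integrable.add (integrable_const 1) ((hΔint n).const_mul L))
          ((hΔsq_int n).const_mul β) _
      have hb : μ[fun ω => 1 + L * Δ ω | 𝓕 n] =ᵐ[μ]
          μ[fun _ => (1:ℝ) | 𝓕 n] + μ[fun ω => L * Δ ω | 𝓕 n] :=
        condExp_add (integrable_const 1) ((hΔint n).const_mul L) _
      have hc1 : μ[fun _ => (1:ℝ) | 𝓕 n] = fun _ => (1:ℝ) := condExp_const (𝓕.le n) 1
      have hd : μ[fun ω => L * Δ ω | 𝓕 n] =ᵐ[μ] L • μ[Δ | 𝓕 n] := condExp_smul L Δ _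
      have he : μ[fun ω => β * Δ ω ^ 2 | 𝓕 n] =ᵐ[μ]
          β • μ[fun ω => Δ ω ^ 2 | 𝓕 n] := condExp_smul β _ _
      filter_upwards [ha, hb, hd, he, hΔ_ce] with ω e1 e2 e3 e4 e5
      simp only [Pi.add_apply, Pi.smul_apply, smul_eq_mul, Pi.zero_apply] at e1 e2 e3 e4 e5
      rw [e1, e2, e3, e4, e5, hc1]
      have hVω : (μ[fun ω => Δ ω ^ 2 | 𝓕 n]) = V := rfl
      rw [hVω]
      ring
    have step4 : (fun ω => 1 + β * V ω) ≤ᵐ[μ] fun ω => Real.exp (β * V ω) :=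
      Filter.Eventually.of_forall fun ω => by
        show 1 + β * V ω ≤ Real.exp (β * V ω)
        have := Real.add_one_le_exp (β * V ω); linarith
    have hfin : (fun ω => G ω * Real.exp (β * V ω)) = S n := by
      funext ω
      show Real.exp _ * Real.exp _ = Real.exp _
      rw [← Real.exp_add]
      congr 1
      have hVω : (μ[fun ω' => (M (n + 1) ω' - M n ω') ^ 2 | 𝓕 n]) ω = V ω := rfl
      rw [hVarsucc n ω, hVω]
      ring
    calc μ[S (n + 1) | 𝓕 n] =ᵐ[μ] G * μ[E | 𝓕 n] := step1
      _ ≤ᵐ[μ] S n := by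
        filter_upwards [step2, step3, step4] with ω e2 e3 e4
        have hGnn : 0 ≤ G ω := (Real.exp_pos _).le
        have h6 : (μ[E | 𝓕 n]) ω ≤ Real.exp (β * V ω) := by
          calc (μ[E | 𝓕 n]) ω ≤ (μ[g | 𝓕 n]) ω := e2
            _ = 1 + β * V ω := e3
            _ ≤ Real.exp (β * V ω) := e4
        calc (G * μ[E | 𝓕 n]) ω = G ω * (μ[E | 𝓕 n]) ω := rfl
          _ ≤ G ω * Real.exp (β * V ω) := mul_le_mul_of_nonneg_left h6 hGnn
          _ = S n ω := by rw [← hfin]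
  -- now the maximal-inequality part
  set A : ℕ → Set Ω := fun n => {ω | ∃ k, k ≤ n ∧ x ≤ M k ω ∧ Var k ω ≤ y} with hAdef
  have hA_meas : ∀ n, MeasurableSet (A n) := by
    intro n
    have : A n = ⋃ (k : ℕ) (_ : k ≤ n), ({ω | x ≤ M k ω} ∩ {ω | Var k ω ≤ y}) := by
      ext ω
      simp only [hAdef, Set.mem_setOf_eq, Set.mem_iUnion, Set.mem_inter_iff]
      tauto
    rw [this]
    exact MeasurableSet.iUnion fun k => MeasurableSet.iUnion fun _ =>
      (measurableSet_le measurable_const (hMmeas k)).inter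
        (measurableSet_le (hVarmeas k) measurable_const)
  set sset : Set (ℝ × ℝ) := {p | x ≤ p.1 ∧ p.2 ≤ y} with hssetdef
  have hsmeas : MeasurableSet sset :=
    (measurableSet_le measurable_const measurable_fst).inter
      (measurableSet_le measurable_snd measurable_const)
  set u : ℕ → Ω → ℝ × ℝ := fun k ω => (M k ω, Var k ω) with hudef
  have hu_adapted : Adapted 𝓕 u := fun k => ((hMsm k).prodMk (hVar_sm k k (by omega))).measurable
  have hAn_bound : ∀ n : ℕ, μ (A n) ≤ ENNReal.ofReal (Real.exp (β * y - L * x)) := by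
    intro n
    set τ : Ω → WithTop ℕ := fun ω => ((hittingBtwn u sset 0 n ω : ℕ) : WithTop ℕ) with hτdef
    have hτ : IsStoppingTime 𝓕 τ := hu_adapted.isStoppingTime_hittingBtwn hsmeas
    have hτle : ∀ ω, τ ω ≤ n := fun ω => WithTop.coe_le_coe.2 (hittingBtwn_le (u := u) (s := sset) (n := 0) ω)
    have hsubm := hsuper.neg
    have hmono := hsubm.expected_stoppedValue_mono (isStoppingTime_const 𝓕 0) hτ
      (fun ω => WithTop.coe_le_coe.2 (Nat.zero_le _)) hτle
    rw [stoppedValue_const] at hmono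
    have hneg : stoppedValue (-S) τ = -(stoppedValue S τ) := rfl
    have h0 : ((-S) 0 : Ω → ℝ) = fun _ => (-1 : ℝ) := by
      funext ω
      show -(S 0 ω) = -1
      rw [hS0]
    rw [h0, hneg, integral_neg, integral_const] at hmono
    have hIle : ∫ ω, stoppedValue S τ ω ∂μ ≤ 1 := by
      simp only [measure_univ, probReal_univ, ENNReal.toReal_one, smul_eq_mul, one_mul,
        Pi.neg_apply, integral_neg] at hmono
      linarith
    have hSτ_int : Integrable (stoppedValue S τ) μ := by
      have h := hsubm.integrable_stoppedValue hτ hτle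
      rw [hneg] at h
      exact integrable_neg_iff.1 h
    have hlow : ∀ ω ∈ A n, Real.exp (L * x - β * y) ≤ stoppedValue S τ ω := by
      rintro ω ⟨k, hk, hxk, hyk⟩
      have hmem : stoppedValue u τ ω ∈ sset :=
        stoppedValue_hittingBtwn_mem ⟨k, ⟨Nat.zero_le _, hk⟩, ⟨hxk, hyk⟩⟩
      have h1 : x ≤ M (τ ω).untopA ω := hmem.1
      have h2 : Var (τ ω).untopA ω ≤ y := hmem.2
      show Real.exp (L * x - β * y) ≤ Real.exp (L * M (τ ω).untopA ω - β * Var (τ ω).untopA ω)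
      apply Real.exp_le_exp.2
      have h3 : L * x ≤ L * M (τ ω).untopA ω := mul_le_mul_of_nonneg_left h1 hL.le
      have h4 : β * Var (τ ω).untopA ω ≤ β * y := mul_le_mul_of_nonneg_left h2 hβ.le
      linarith
    have hkey : Real.exp (L * x - β * y) * (μ (A n)).toReal ≤ 1 := by
      rw [mul_comm, ← smul_eq_mul, ← measureReal_def]
      refine le_trans (le_trans
        (setIntegral_ge_of_const_le (hA_meas n) (measure_ne_top μ _) hlow
          hSτ_int.integrableOn) ?_) hIle
      exact setIntegral_le_integral hSτ_int
        (Filter.Eventually.of_forall fun ω => le_of_lt (Real.exp_pos _))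
    have hεpos : (0:ℝ) < Real.exp (L * x - β * y) := Real.exp_pos _
    have htoReal : (μ (A n)).toReal ≤ Real.exp (β * y - L * x) := by
      have hinv : Real.exp (β * y - L * x) = 1 / Real.exp (L * x - β * y) := by
        rw [one_div, ← Real.exp_neg]
        ring_nf
      rw [hinv, le_div_iff₀ hεpos]
      nlinarith [hkey]
    rw [ENNReal.le_ofReal_iff_toReal_le (measure_ne_top μ _) (Real.exp_pos _).le]
    exact htoReal
  have hexp_bound : Real.exp (β * y - L * x) ≤ Real.exp (-(x ^ 2) / (2 * (y + c * x))) := by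
    apply Real.exp_le_exp.2
    have he : Real.exp (L * c) ≤ 1 / (1 - L * c) := freedman_exp_le_inv_one_sub hLc
    have h1 : 1 - L * c = y / (y + c * x) := by
      rw [hLdef]; field_simp; ring
    have h2 : Real.exp (L * c) ≤ (y + c * x) / y := by
      rw [h1, one_div_div] at he
      exact he
    have hβle : β ≤ L ^ 2 / 2 * ((y + c * x) / y) := by
      rw [hβdef]
      exact mul_le_mul_of_nonneg_left h2 (by positivity)
    have hβy : β * y ≤ x ^ 2 / (2 * (y + c * x)) := by
      have heq : L ^ 2 / 2 * ((y + c * x) / y) * y = x ^ 2 / (2 * (y + c * x)) := by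
        rw [hLdef]; field_simp
      nlinarith [hβle]
    have hLx : L * x = x ^ 2 / (y + c * x) := by
      rw [hLdef]; field_simp
    have hsplit : -(x ^ 2) / (2 * (y + c * x))
        = x ^ 2 / (2 * (y + c * x)) - x ^ 2 / (y + c * x) := by
      field_simp
      ring
    rw [hLx, hsplit]
    linarith
  have hsubset : {ω | ∃ n : ℕ, 1 ≤ n ∧ x ≤ M n ω ∧ Var n ω ≤ y} ⊆ ⋃ n, A n := by
    rintro ω ⟨n, _, h2, h3⟩
    exact Set.mem_iUnion.2 ⟨n, ⟨n, le_rfl, h2, h3⟩⟩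
  have hAmono : Monotone A := by
    rintro a b hab ω ⟨k, hk, h⟩
    exact ⟨k, hk.trans hab, h⟩
  refine le_trans (measure_mono hsubset) ?_
  rw [hAmono.measure_iUnion]
  refine iSup_le fun n => le_trans (hAn_bound n) ?_
  exact ENNReal.ofReal_le_ofReal hexp_bound
end

section
/- Let (M_n)_{n≥0} be a martingale with M_0 = 0 and |M_n − M_{n−1}| ≤ c almost surely, and let Var_n = ∑_{k=1}^n E[(M_k − M_{k−1})² | 𝓕_{k−1}]. Then for every positive integer n, every ε > 0 and every p ∈ (0,1), P[ |M_n| ≥ 2·√(Var_n · log(1/p)) + 2·√(ε · log(1/p)) + 2c·log(1/p) ] ≤ (2n c²/ε + 2)·p. -/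
open MeasureTheory ProbabilityTheory

namespace MartingaleSelfNormalized

/-- Quadratic upper bound for `exp` on `[-1, 1]`. -/
lemma exp_le_one_add_add_sq {x : ℝ} (hx : |x| ≤ 1) : Real.exp x ≤ 1 + x + x ^ 2 := by
  have h := Real.exp_bound hx (by norm_num : 0 < 3)
  have hsum : ∑ i ∈ Finset.range 3, x ^ i / (Nat.factorial i) = 1 + x + x ^ 2 / 2 := by
    simp [Finset.sum_range_succ, Nat.factorial]
  rw [hsum] at h
  have hx3 : |x| ^ 3 ≤ x ^ 2 := by
    have h1 : |x| ^ 3 ≤ |x| ^ 2 := pow_le_pow_of_le_one (abs_nonneg x) hx (by norm_num)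
    simpa [sq_abs] using h1
  have hnum : (|x| ^ 3 * ((3 : ℕ).succ / ((Nat.factorial 3 : ℕ) * (3:ℕ)) : ℝ))
      = |x| ^ 3 * (2 / 9) := by norm_num [Nat.factorial]
  rw [hnum] at h
  have h2 := (abs_le.mp h).2
  nlinarith [h2, hx3]

lemma sqrt_add_le {x y : ℝ} (hx : 0 ≤ x) (hy : 0 ≤ y) :
    Real.sqrt (x + y) ≤ Real.sqrt x + Real.sqrt y := by
  have h : x + y ≤ (Real.sqrt x + Real.sqrt y) ^ 2 := by
    nlinarith [Real.sq_sqrt hx, Real.sq_sqrt hy, Real.sqrt_nonneg x, Real.sqrt_nonneg y]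
  calc Real.sqrt (x + y) ≤ Real.sqrt ((Real.sqrt x + Real.sqrt y) ^ 2) := Real.sqrt_le_sqrt h
  _ = Real.sqrt x + Real.sqrt y := Real.sqrt_sq (by positivity)

variable {Ω : Type*} {m0 : MeasurableSpace Ω} {μ : Measure Ω} [IsProbabilityMeasure μ]
  {𝓕 : Filtration ℕ m0} {M : ℕ → Ω → ℝ} {c : ℝ}

/-- The predictable quadratic variation. -/
noncomputable def pvar (𝓕 : Filtration ℕ m0) (μ : Measure Ω) (M : ℕ → Ω → ℝ) (n : ℕ) :
    Ω → ℝ :=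
  fun ω => ∑ k ∈ Finset.Icc 1 n, (μ[fun ω' => (M k ω' - M (k - 1) ω') ^ 2 | 𝓕 (k - 1)]) ω

lemma integrable_of_abs_le {f : Ω → ℝ} (hf : AEStronglyMeasurable f μ) (C : ℝ)
    (h : ∀ᵐ ω ∂μ, |f ω| ≤ C) : Integrable f μ :=
  (integrable_const C).mono' hf (by simpa [Real.norm_eq_abs] using h)

lemma pvar_stronglyMeasurable (m n : ℕ) (hnm : n ≤ m + 1) :
    StronglyMeasurable[𝓕 m] (pvar 𝓕 μ M n) := by
  apply Finset.stronglyMeasurable_fun_sum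
  intro k hk
  have hk' : k - 1 ≤ m := by
    have := (Finset.mem_Icc.mp hk).2
    omega
  exact stronglyMeasurable_condExp.mono (𝓕.mono hk')

lemma M_stronglyMeasurable (hM : Martingale M 𝓕 μ) (n : ℕ) :
    StronglyMeasurable[m0] (M n) :=
  (hM.stronglyAdapted n).mono (𝓕.le n)

lemma increment_integrable (hM : Martingale M 𝓕 μ) (k : ℕ) :
    Integrable (fun ω => M k ω - M (k - 1) ω) μ :=
  (hM.integrable k).sub (hM.integrable (k - 1))

lemma increment_sq_integrable (hM : Martingale M 𝓕 μ) (hc : 0 < c)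
    (hbdd : ∀ n : ℕ, 1 ≤ n → ∀ᵐ ω ∂μ, |M n ω - M (n - 1) ω| ≤ c) (k : ℕ) (hk : 1 ≤ k) :
    Integrable (fun ω => (M k ω - M (k - 1) ω) ^ 2) μ := by
  refine integrable_of_abs_le ?_ (c ^ 2) ?_
  · exact (((M_stronglyMeasurable hM k).sub (M_stronglyMeasurable hM (k - 1))).pow 2).aestronglyMeasurable
  · filter_upwards [hbdd k hk] with ω hω
    have h0 : |M k ω - M (k - 1) ω| ^ 2 ≤ c ^ 2 := by
      exact pow_le_pow_left₀ (abs_nonneg _) hω 2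
    calc |(M k ω - M (k - 1) ω) ^ 2| = |M k ω - M (k - 1) ω| ^ 2 := by
          rw [abs_pow, sq_abs, ← sq_abs]
    _ ≤ c ^ 2 := h0

lemma condexp_sq_bounds (hM : Martingale M 𝓕 μ) (hc : 0 < c)
    (hbdd : ∀ n : ℕ, 1 ≤ n → ∀ᵐ ω ∂μ, |M n ω - M (n - 1) ω| ≤ c) (k : ℕ) (hk : 1 ≤ k) :
    ∀ᵐ ω ∂μ, 0 ≤ (μ[fun ω' => (M k ω' - M (k - 1) ω') ^ 2 | 𝓕 (k - 1)]) ω ∧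
      (μ[fun ω' => (M k ω' - M (k - 1) ω') ^ 2 | 𝓕 (k - 1)]) ω ≤ c ^ 2 := by
  have hnn : 0 ≤ᵐ[μ] μ[fun ω' => (M k ω' - M (k - 1) ω') ^ 2 | 𝓕 (k - 1)] :=
    condExp_nonneg (Filter.Eventually.of_forall fun ω => sq_nonneg _)
  have hub : μ[fun ω' => (M k ω' - M (k - 1) ω') ^ 2 | 𝓕 (k - 1)]
      ≤ᵐ[μ] μ[(fun _ => c ^ 2 : Ω → ℝ) | 𝓕 (k - 1)] := by
    refine condExp_mono (increment_sq_integrable hM hc hbdd k hk) (integrable_const _) ?_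
    filter_upwards [hbdd k hk] with ω hω
    have : |M k ω - M (k - 1) ω| ^ 2 ≤ c ^ 2 := pow_le_pow_left₀ (abs_nonneg _) hω 2
    simpa [sq_abs] using this
  rw [condExp_const (𝓕.le (k - 1))] at hub
  filter_upwards [hnn, hub] with ω h1 h2
  exact ⟨h1, h2⟩

lemma pvar_bounds (hM : Martingale M 𝓕 μ) (hc : 0 < c)
    (hbdd : ∀ n : ℕ, 1 ≤ n → ∀ᵐ ω ∂μ, |M n ω - M (n - 1) ω| ≤ c) (n : ℕ) :
    ∀ᵐ ω ∂μ, 0 ≤ pvar 𝓕 μ M n ω ∧ pvar 𝓕 μ M n ω ≤ n * c ^ 2 := by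
  have h : ∀ᵐ ω ∂μ, ∀ k : ℕ, k ∈ Finset.Icc 1 n →
      (0 ≤ (μ[fun ω' => (M k ω' - M (k - 1) ω') ^ 2 | 𝓕 (k - 1)]) ω ∧
        (μ[fun ω' => (M k ω' - M (k - 1) ω') ^ 2 | 𝓕 (k - 1)]) ω ≤ c ^ 2) := by
    rw [MeasureTheory.ae_all_iff]
    intro k
    by_cases hk : k ∈ Finset.Icc 1 n
    · have hk1 : 1 ≤ k := (Finset.mem_Icc.mp hk).1
      filter_upwards [condexp_sq_bounds hM hc hbdd k hk1] with ω hω _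
      exact hω
    · filter_upwards with ω hω; exact absurd hω hk
  filter_upwards [h] with ω hω
  constructor
  · exact Finset.sum_nonneg fun k hk => (hω k hk).1
  · calc pvar 𝓕 μ M n ω ≤ ∑ _k ∈ Finset.Icc 1 n, c ^ 2 :=
        Finset.sum_le_sum fun k hk => (hω k hk).2
    _ = n * c ^ 2 := by
        rw [Finset.sum_const, Nat.card_Icc]
        simp [nsmul_eq_mul]

lemma M_abs_le (hM0 : M 0 = 0)
    (hbdd : ∀ n : ℕ, 1 ≤ n → ∀ᵐ ω ∂μ, |M n ω - M (n - 1) ω| ≤ c) (n : ℕ) :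
    ∀ᵐ ω ∂μ, |M n ω| ≤ n * c := by
  induction n with
  | zero => filter_upwards with ω; simp [hM0]
  | succ m ih =>
    filter_upwards [ih, hbdd (m + 1) (Nat.le_add_left 1 m)] with ω h1 h2
    have h3 : |M (m + 1) ω| ≤ |M m ω| + |M (m + 1) ω - M m ω| := by
      have := abs_add_le (M m ω) (M (m + 1) ω - M m ω)
      simpa using this
    have h2' : |M (m + 1) ω - M m ω| ≤ c := by simpa using h2
    have : |M (m + 1) ω| ≤ m * c + c := by linarith
    calc |M (m + 1) ω| ≤ m * c + c := this
    _ = (m + 1 : ℕ) * c := by push_cast; ring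

/-- Conditional mgf bound for a single increment. -/
lemma condexp_exp_le (hM : Martingale M 𝓕 μ) (hc : 0 < c)
    (hbdd : ∀ n : ℕ, 1 ≤ n → ∀ᵐ ω ∂μ, |M n ω - M (n - 1) ω| ≤ c)
    {l : ℝ} (hl0 : 0 ≤ l) (hlc : l * c ≤ 1) (k : ℕ) (hk : 1 ≤ k) :
    μ[fun ω => Real.exp (l * (M k ω - M (k - 1) ω)) | 𝓕 (k - 1)]
      ≤ᵐ[μ] fun ω =>
        Real.exp (l ^ 2 * (μ[fun ω' => (M k ω' - M (k - 1) ω') ^ 2 | 𝓕 (k - 1)]) ω) := by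
  set m := 𝓕 (k - 1)
  set Δ : Ω → ℝ := fun ω => M k ω - M (k - 1) ω with hΔ
  set Δsq : Ω → ℝ := fun ω => (M k ω - M (k - 1) ω) ^ 2 with hΔsq
  have hΔint : Integrable Δ μ := increment_integrable hM k
  have hΔsqint : Integrable Δsq μ := increment_sq_integrable hM hc hbdd k hk
  have hΔmeas : StronglyMeasurable[m0] Δ :=
    (M_stronglyMeasurable hM k).sub (M_stronglyMeasurable hM (k - 1))
  -- X = exp (l Δ) is integrable
  have hXint : Integrable (fun ω => Real.exp (l * Δ ω)) μ := by
    refine integrable_of_abs_le ?_ (Real.exp (l * c)) ?_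
    · exact (Real.continuous_exp.comp_stronglyMeasurable
        (stronglyMeasurable_const.mul hΔmeas)).aestronglyMeasurable
    · filter_upwards [hbdd k hk] with ω hω
      rw [abs_of_pos (Real.exp_pos _)]
      apply Real.exp_le_exp.mpr
      have : l * Δ ω ≤ l * |Δ ω| := by
        have := le_abs_self (Δ ω)
        nlinarith
      nlinarith
  -- pointwise bound
  have hptw : (fun ω => Real.exp (l * Δ ω))
      ≤ᵐ[μ] (fun _ => (1 : ℝ)) + l • Δ + (l ^ 2) • Δsq := by
    filter_upwards [hbdd k hk] with ω hω
    have habs : |l * Δ ω| ≤ 1 := by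
      rw [abs_mul, abs_of_nonneg hl0]
      calc l * |Δ ω| ≤ l * c := by nlinarith
      _ ≤ 1 := hlc
    have h1 := exp_le_one_add_add_sq habs
    have h2 : (l * Δ ω) ^ 2 = l ^ 2 * Δsq ω := by simp [hΔsq, hΔ]; ring
    simp only [Pi.add_apply, Pi.smul_apply, smul_eq_mul]
    calc Real.exp (l * Δ ω) ≤ 1 + l * Δ ω + (l * Δ ω) ^ 2 := h1
    _ = 1 + l * Δ ω + l ^ 2 * Δsq ω := by rw [h2]
  have hgint : Integrable ((fun _ => (1 : ℝ)) + l • Δ + (l ^ 2) • Δsq) μ :=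
    ((integrable_const 1).add (hΔint.smul l)).add (hΔsqint.smul (l ^ 2))
  have hmono := condExp_mono (m := m) hXint hgint hptw
  -- compute the conditional expectation of the quadratic
  have hcalc : μ[(fun _ => (1 : ℝ)) + l • Δ + (l ^ 2) • Δsq | m]
      =ᵐ[μ] fun ω => 1 + l * (μ[Δ | m]) ω + l ^ 2 * (μ[Δsq | m]) ω := by
    have e1 := condExp_add (μ := μ) (m := m)
      ((integrable_const (1 : ℝ)).add (hΔint.smul l)) (hΔsqint.smul (l ^ 2))
    have e2 := condExp_add (μ := μ) (m := m) (integrable_const (1 : ℝ)) (hΔint.smul l)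
    have e3 := condExp_smul (μ := μ) (m := m) (l : ℝ) Δ
    have e4 := condExp_smul (μ := μ) (m := m) (l ^ 2 : ℝ) Δsq
    have e5 : μ[(fun _ => (1 : ℝ)) | m] = fun _ => (1 : ℝ) := condExp_const (𝓕.le (k - 1)) _
    filter_upwards [e1, e2, e3, e4] with ω h1 h2 h3 h4
    simp only [Pi.add_apply] at h1 h2
    rw [h1, h2, e5]
    simp only [Pi.smul_apply, smul_eq_mul] at h3 h4 ⊢
    rw [h3, h4]
  have hzero : μ[Δ | m] =ᵐ[μ] 0 := by
    have h1 : μ[Δ | m] =ᵐ[μ] μ[M k | m] - μ[M (k - 1) | m] :=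
      condExp_sub (hM.integrable k) (hM.integrable (k - 1)) m
    have h2 : μ[M k | m] =ᵐ[μ] M (k - 1) := hM.condExp_ae_eq (Nat.sub_le k 1)
    have h3 : μ[M (k - 1) | m] = M (k - 1) :=
      condExp_of_stronglyMeasurable (𝓕.le (k - 1)) (hM.stronglyAdapted (k - 1))
        (hM.integrable (k - 1))
    filter_upwards [h1, h2] with ω e1 e2
    simp only [Pi.sub_apply, Pi.zero_apply] at *
    rw [e1, e2, congrFun h3 ω, sub_self]
  filter_upwards [hmono, hcalc, hzero] with ω h1 h2 h3
  have h4 : (μ[(fun _ => (1 : ℝ)) + l • Δ + (l ^ 2) • Δsq | m]) ω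
      = 1 + l ^ 2 * (μ[Δsq | m]) ω := by
    rw [h2]
    simp only [Pi.zero_apply] at h3
    rw [h3]; ring
  calc (μ[fun ω => Real.exp (l * Δ ω) | m]) ω
      ≤ 1 + l ^ 2 * (μ[Δsq | m]) ω := by rw [← h4]; exact h1
  _ ≤ Real.exp (l ^ 2 * (μ[Δsq | m]) ω) := by
      have := Real.add_one_le_exp (l ^ 2 * (μ[Δsq | m]) ω)
      linarith

/-- Exponential supermartingale property. -/
lemma integral_exp_le_one (hM : Martingale M 𝓕 μ) (hc : 0 < c) (hM0 : M 0 = 0)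
    (hbdd : ∀ n : ℕ, 1 ≤ n → ∀ᵐ ω ∂μ, |M n ω - M (n - 1) ω| ≤ c)
    {l : ℝ} (hl0 : 0 ≤ l) (hlc : l * c ≤ 1) (n : ℕ) :
    ∫ ω, Real.exp (l * M n ω - l ^ 2 * pvar 𝓕 μ M n ω) ∂μ ≤ 1 := by
  induction n with
  | zero =>
    have : ∀ ω, Real.exp (l * M 0 ω - l ^ 2 * pvar 𝓕 μ M 0 ω) = 1 := by
      intro ω
      simp [pvar, hM0]
    rw [integral_congr_ae (Filter.Eventually.of_forall this)]
    simp
  | succ m ih =>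
    set Δ : Ω → ℝ := fun ω => M (m + 1) ω - M m ω with hΔdef
    have hΔeq : (fun ω => M (m + 1) ω - M ((m + 1) - 1) ω) = Δ := by
      simp [hΔdef]
    set σsq : Ω → ℝ := μ[fun ω' => (M (m + 1) ω' - M ((m + 1) - 1) ω') ^ 2 | 𝓕 ((m + 1) - 1)]
      with hσdef
    have hVsucc : ∀ ω, pvar 𝓕 μ M (m + 1) ω = pvar 𝓕 μ M m ω + σsq ω := by
      intro ω
      rw [pvar, Finset.sum_Icc_succ_top (Nat.le_add_left 1 m)]
      rfl
    set G : Ω → ℝ := fun ω => Real.exp (l * M m ω - l ^ 2 * pvar 𝓕 μ M (m + 1) ω) with hGdef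
    set X : Ω → ℝ := fun ω => Real.exp (l * Δ ω) with hXdef
    have hsplit : ∀ ω, Real.exp (l * M (m + 1) ω - l ^ 2 * pvar 𝓕 μ M (m + 1) ω)
        = G ω * X ω := by
      intro ω
      rw [hGdef, hXdef]
      simp only []
      rw [← Real.exp_add]
      congr 1
      simp only [hΔdef]
      ring
    -- measurability facts
    have hGmeas : StronglyMeasurable[𝓕 m] G := by
      apply Real.continuous_exp.comp_stronglyMeasurable
      exact (stronglyMeasurable_const.mul (hM.stronglyAdapted m)).sub
        (stronglyMeasurable_const.mul (pvar_stronglyMeasurable m (m + 1) le_rfl))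
    have hVnonneg := pvar_bounds hM hc hbdd (m + 1)
    have hVnonneg' := pvar_bounds hM hc hbdd m
    have hMabs := M_abs_le hM0 hbdd m
    have hMabs' := M_abs_le hM0 hbdd (m + 1)
    have hGXmeas : StronglyMeasurable[m0]
        (fun ω => Real.exp (l * M (m + 1) ω - l ^ 2 * pvar 𝓕 μ M (m + 1) ω)) := by
      apply Real.continuous_exp.comp_stronglyMeasurable
      exact (stronglyMeasurable_const.mul (M_stronglyMeasurable hM (m + 1))).sub
        (stronglyMeasurable_const.mul
          ((pvar_stronglyMeasurable (m + 1) (m + 1) (Nat.le_succ _)).mono (𝓕.le (m + 1))))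
    have hGXint : Integrable (fun ω => G ω * X ω) μ := by
      have : Integrable (fun ω => Real.exp (l * M (m + 1) ω - l ^ 2 * pvar 𝓕 μ M (m + 1) ω)) μ := by
        refine integrable_of_abs_le hGXmeas.aestronglyMeasurable
          (Real.exp (l * ((m + 1) * c))) ?_
        filter_upwards [hVnonneg, hMabs'] with ω h1 h2
        rw [abs_of_pos (Real.exp_pos _)]
        apply Real.exp_le_exp.mpr
        have : l * M (m + 1) ω ≤ l * ((m + 1) * c) := by
          have h2' := (abs_le.mp h2).2
          push_cast at h2'
          nlinarith
        nlinarith [h1.1, sq_nonneg l]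
      exact this.congr (Filter.Eventually.of_forall fun ω => (hsplit ω))
    have hXint : Integrable X μ := by
      refine integrable_of_abs_le ?_ (Real.exp (l * c)) ?_
      · exact (Real.continuous_exp.comp_stronglyMeasurable
          (stronglyMeasurable_const.mul
            ((M_stronglyMeasurable hM (m + 1)).sub (M_stronglyMeasurable hM m)))).aestronglyMeasurable
      · filter_upwards [hbdd (m + 1) (Nat.le_add_left 1 m)] with ω hω
        rw [hXdef]
        simp only []
        rw [abs_of_pos (Real.exp_pos _)]
        apply Real.exp_le_exp.mpr
        have hω' : |Δ ω| ≤ c := by simpa [hΔdef] using hω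
        have := le_abs_self (Δ ω)
        nlinarith
    -- the key conditional bound
    have hkey := condexp_exp_le hM hc hbdd hl0 hlc (m + 1) (Nat.le_add_left 1 m)
    have hkey' : μ[X | 𝓕 m] ≤ᵐ[μ] fun ω => Real.exp (l ^ 2 * σsq ω) := by
      have : (fun ω => Real.exp (l * (M (m + 1) ω - M ((m + 1) - 1) ω))) = X := by
        funext ω; rw [hXdef]; simp [hΔdef]
      rw [this] at hkey
      exact hkey
    -- pull-out
    have hpull : μ[fun ω => G ω * X ω | 𝓕 m] =ᵐ[μ] fun ω => G ω * (μ[X | 𝓕 m]) ω := by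
      have := condExp_mul_of_stronglyMeasurable_left (μ := μ) hGmeas
        (by exact hGXint) hXint
      filter_upwards [this] with ω hω
      exact hω
    -- target of the monotone step
    have hRHSeq : ∀ ω, G ω * Real.exp (l ^ 2 * σsq ω)
        = Real.exp (l * M m ω - l ^ 2 * pvar 𝓕 μ M m ω) := by
      intro ω
      rw [hGdef]
      simp only []
      rw [← Real.exp_add]
      congr 1
      rw [hVsucc ω]
      ring
    have hRHSint : Integrable (fun ω => Real.exp (l * M m ω - l ^ 2 * pvar 𝓕 μ M m ω)) μ := by
      refine integrable_of_abs_le ?_ (Real.exp (l * (m * c))) ?_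
      · refine (Real.continuous_exp.comp_stronglyMeasurable ?_).aestronglyMeasurable
        exact (stronglyMeasurable_const.mul (M_stronglyMeasurable hM m)).sub
          (stronglyMeasurable_const.mul
            ((pvar_stronglyMeasurable m m (Nat.le_succ _)).mono (𝓕.le m)))
      · filter_upwards [hVnonneg', hMabs] with ω h1 h2
        rw [abs_of_pos (Real.exp_pos _)]
        apply Real.exp_le_exp.mpr
        have : l * M m ω ≤ l * (m * c) := by
          have := (abs_le.mp h2).2
          nlinarith
        nlinarith [h1.1, sq_nonneg l]
    have hGnonneg : ∀ ω, 0 ≤ G ω := fun ω => (Real.exp_pos _).le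
    calc ∫ ω, Real.exp (l * M (m + 1) ω - l ^ 2 * pvar 𝓕 μ M (m + 1) ω) ∂μ
        = ∫ ω, G ω * X ω ∂μ := integral_congr_ae (Filter.Eventually.of_forall hsplit)
    _ = ∫ ω, (μ[fun ω => G ω * X ω | 𝓕 m]) ω ∂μ := (integral_condExp (𝓕.le m)).symm
    _ = ∫ ω, G ω * (μ[X | 𝓕 m]) ω ∂μ := integral_congr_ae hpull
    _ ≤ ∫ ω, Real.exp (l * M m ω - l ^ 2 * pvar 𝓕 μ M m ω) ∂μ := by
        apply integral_mono_ae
        · exact integrable_condExp.congr hpull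
        · exact hRHSint
        · filter_upwards [hkey'] with ω hω
          rw [← hRHSeq ω]
          exact mul_le_mul_of_nonneg_left hω (hGnonneg ω)
    _ ≤ 1 := ih

/-- One-sided tail bound. -/
lemma tail_bound_one_sided (hM : Martingale M 𝓕 μ) (hc : 0 < c) (hM0 : M 0 = 0)
    (hbdd : ∀ n : ℕ, 1 ≤ n → ∀ᵐ ω ∂μ, |M n ω - M (n - 1) ω| ≤ c)
    (n : ℕ) {l a v L : ℝ} (hl0 : 0 ≤ l) (hlc : l * c ≤ 1)
    (hla : L ≤ l * a - l ^ 2 * v) :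
    μ {ω | a ≤ M n ω ∧ pvar 𝓕 μ M n ω ≤ v} ≤ ENNReal.ofReal (Real.exp (-L)) := by
  set f : Ω → ℝ := fun ω => Real.exp (l * M n ω - l ^ 2 * pvar 𝓕 μ M n ω) with hfdef
  have hfint : Integrable f μ := by
    refine integrable_of_abs_le ?_ (Real.exp (l * (n * c))) ?_
    · refine (Real.continuous_exp.comp_stronglyMeasurable ?_).aestronglyMeasurable
      exact (stronglyMeasurable_const.mul (M_stronglyMeasurable hM n)).sub
        (stronglyMeasurable_const.mul
          ((pvar_stronglyMeasurable n n (Nat.le_succ _)).mono (𝓕.le n)))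
    · filter_upwards [pvar_bounds hM hc hbdd n, M_abs_le hM0 hbdd n] with ω h1 h2
      rw [abs_of_pos (Real.exp_pos _)]
      apply Real.exp_le_exp.mpr
      have : l * M n ω ≤ l * (n * c) := by
        have := (abs_le.mp h2).2
        nlinarith
      nlinarith [h1.1, sq_nonneg l]
  have hint_le : ∫ ω, f ω ∂μ ≤ 1 := integral_exp_le_one hM hc hM0 hbdd hl0 hlc n
  have hsubset : {ω | a ≤ M n ω ∧ pvar 𝓕 μ M n ω ≤ v} ⊆ {ω | Real.exp L ≤ f ω} := by
    intro ω hω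
    have h1 : l * a ≤ l * M n ω := mul_le_mul_of_nonneg_left hω.1 hl0
    have h2 : l ^ 2 * pvar 𝓕 μ M n ω ≤ l ^ 2 * v :=
      mul_le_mul_of_nonneg_left hω.2 (sq_nonneg l)
    have : L ≤ l * M n ω - l ^ 2 * pvar 𝓕 μ M n ω := by linarith
    exact Real.exp_le_exp.mpr this
  have hmarkov := mul_meas_ge_le_integral_of_nonneg
    (Filter.Eventually.of_forall fun ω => (Real.exp_pos _).le) hfint (Real.exp L)
  have hμfin : μ {ω | Real.exp L ≤ f ω} ≠ ⊤ := measure_ne_top μ _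
  have htoReal : (μ {ω | Real.exp L ≤ f ω}).toReal ≤ Real.exp (-L) := by
    have hpos : 0 < Real.exp L := Real.exp_pos _
    have h1 : Real.exp L * (μ {ω | Real.exp L ≤ f ω}).toReal ≤ 1 := le_trans hmarkov hint_le
    rw [Real.exp_neg, ← one_div, le_div_iff₀ hpos, mul_comm]
    exact h1
  calc μ {ω | a ≤ M n ω ∧ pvar 𝓕 μ M n ω ≤ v} ≤ μ {ω | Real.exp L ≤ f ω} :=
      measure_mono hsubset
  _ ≤ ENNReal.ofReal (Real.exp (-L)) := by
      rw [ENNReal.le_ofReal_iff_toReal_le hμfin (Real.exp_pos _).le]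
      exact htoReal

/-- One-sided tail bound with optimized choice of `l`. -/
lemma tail_bound_choice (hM : Martingale M 𝓕 μ) (hc : 0 < c) (hM0 : M 0 = 0)
    (hbdd : ∀ n : ℕ, 1 ≤ n → ∀ᵐ ω ∂μ, |M n ω - M (n - 1) ω| ≤ c)
    (n : ℕ) {v L : ℝ} (hv : 0 ≤ v) (hL : 0 < L) :
    μ {ω | 2 * Real.sqrt (v * L) + 2 * c * L ≤ M n ω ∧ pvar 𝓕 μ M n ω ≤ v}
      ≤ ENNReal.ofReal (Real.exp (-L)) := by
  set a : ℝ := 2 * Real.sqrt (v * L) + 2 * c * L with hadef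
  obtain ⟨l, hl0, hlc, hla⟩ : ∃ l : ℝ, 0 ≤ l ∧ l * c ≤ 1 ∧ L ≤ l * a - l ^ 2 * v := by
    by_cases hcase : c ^ 2 * L ≤ v
    · have hvpos : 0 < v := lt_of_lt_of_le (by positivity) hcase
      refine ⟨Real.sqrt (L / v), Real.sqrt_nonneg _, ?_, ?_⟩
      · have hsq : (Real.sqrt (L / v) * c) ^ 2 ≤ 1 := by
          rw [mul_pow, Real.sq_sqrt (by positivity)]
          rw [div_mul_eq_mul_div, div_le_one hvpos]
          nlinarith
        nlinarith [mul_nonneg (Real.sqrt_nonneg (L / v)) hc.le]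
      · have h2 : Real.sqrt (L / v) * Real.sqrt (v * L) = L := by
          rw [← Real.sqrt_mul (by positivity)]
          rw [show L / v * (v * L) = L ^ 2 by field_simp]
          exact Real.sqrt_sq hL.le
        have h3 : Real.sqrt (L / v) ^ 2 * v = L := by
          rw [Real.sq_sqrt (by positivity)]
          field_simp
        have h4 : 0 ≤ Real.sqrt (L / v) * (2 * c * L) := by positivity
        have h5 : Real.sqrt (L / v) * a - Real.sqrt (L / v) ^ 2 * v
            = 2 * (Real.sqrt (L / v) * Real.sqrt (v * L))
              + Real.sqrt (L / v) * (2 * c * L) - Real.sqrt (L / v) ^ 2 * v := by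
          rw [hadef]; ring
        rw [h5, h2, h3]
        linarith
    · push_neg at hcase
      refine ⟨1 / c, by positivity, by field_simp; exact le_rfl, ?_⟩
      have h1 : (1 / c) ^ 2 * v < L := by
        rw [div_pow, one_pow, div_mul_eq_mul_div, div_lt_iff₀ (by positivity)]
        nlinarith
      have h2 : 0 ≤ Real.sqrt (v * L) / c := by positivity
      have h3 : (1 / c) * a = 2 * (Real.sqrt (v * L) / c) + 2 * L := by
        rw [hadef]; field_simp
      linarith [h3, h1, h2]
  exact tail_bound_one_sided hM hc hM0 hbdd n hl0 hlc hla

lemma pvar_neg : pvar 𝓕 μ (-M) = pvar 𝓕 μ M := by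
  funext n ω
  unfold pvar
  refine Finset.sum_congr rfl fun k _ => ?_
  congr 1
  funext ω'
  simp only [Pi.neg_apply]
  ring

/-- Two-sided tail bound. -/
lemma tail_bound_two_sided (hM : Martingale M 𝓕 μ) (hc : 0 < c) (hM0 : M 0 = 0)
    (hbdd : ∀ n : ℕ, 1 ≤ n → ∀ᵐ ω ∂μ, |M n ω - M (n - 1) ω| ≤ c)
    (n : ℕ) {v L : ℝ} (hv : 0 ≤ v) (hL : 0 < L) :
    μ {ω | 2 * Real.sqrt (v * L) + 2 * c * L ≤ |M n ω| ∧ pvar 𝓕 μ M n ω ≤ v}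
      ≤ ENNReal.ofReal (Real.exp (-L)) + ENNReal.ofReal (Real.exp (-L)) := by
  set a : ℝ := 2 * Real.sqrt (v * L) + 2 * c * L with hadef
  have hM0' : (-M) 0 = 0 := by
    funext ω
    simp [hM0]
  have hbdd' : ∀ k : ℕ, 1 ≤ k → ∀ᵐ ω ∂μ, |(-M) k ω - (-M) (k - 1) ω| ≤ c := by
    intro k hk
    filter_upwards [hbdd k hk] with ω hω
    have : (-M) k ω - (-M) (k - 1) ω = -(M k ω - M (k - 1) ω) := by
      simp only [Pi.neg_apply]; ring
    rw [this, abs_neg]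
    exact hω
  have hpos := tail_bound_choice hM hc hM0 hbdd n hv hL
  have hneg := tail_bound_choice hM.neg hc hM0' hbdd' n hv hL
  rw [pvar_neg] at hneg
  have hsub : {ω | a ≤ |M n ω| ∧ pvar 𝓕 μ M n ω ≤ v}
      ⊆ {ω | a ≤ M n ω ∧ pvar 𝓕 μ M n ω ≤ v}
        ∪ {ω | a ≤ (-M) n ω ∧ pvar 𝓕 μ M n ω ≤ v} := by
    intro ω hω
    rcases le_abs.mp hω.1 with h | h
    · exact Or.inl ⟨h, hω.2⟩
    · exact Or.inr ⟨by simpa using h, hω.2⟩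
  calc μ {ω | a ≤ |M n ω| ∧ pvar 𝓕 μ M n ω ≤ v}
      ≤ μ ({ω | a ≤ M n ω ∧ pvar 𝓕 μ M n ω ≤ v}
        ∪ {ω | a ≤ (-M) n ω ∧ pvar 𝓕 μ M n ω ≤ v}) := measure_mono hsub
  _ ≤ μ {ω | a ≤ M n ω ∧ pvar 𝓕 μ M n ω ≤ v}
      + μ {ω | a ≤ (-M) n ω ∧ pvar 𝓕 μ M n ω ≤ v} := measure_union_le _ _
  _ ≤ ENNReal.ofReal (Real.exp (-L)) + ENNReal.ofReal (Real.exp (-L)) :=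
      add_le_add hpos hneg

end MartingaleSelfNormalized

open MartingaleSelfNormalized

/-- Self-normalized concentration bound for martingales with bounded increments
(Lemma 3 in the paper). -/
theorem martingale_self_normalized_bound
    {Ω : Type*} {m0 : MeasurableSpace Ω} {μ : Measure Ω} [IsProbabilityMeasure μ]
    (𝓕 : Filtration ℕ m0) (M : ℕ → Ω → ℝ) (c : ℝ) (hc : 0 < c)
    (hM : Martingale M 𝓕 μ) (hM0 : M 0 = 0)
    (hbdd : ∀ n : ℕ, 1 ≤ n → ∀ᵐ ω ∂μ, |M n ω - M (n - 1) ω| ≤ c)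
    (Var : ℕ → Ω → ℝ)
    (hVar : ∀ n ω, Var n ω
      = ∑ k ∈ Finset.Icc 1 n, (μ[fun ω' => (M k ω' - M (k - 1) ω') ^ 2 | 𝓕 (k - 1)]) ω)
    (n : ℕ) (hn : 1 ≤ n) (ε p : ℝ) (hε : 0 < ε) (hp : p ∈ Set.Ioo (0 : ℝ) 1) :
    μ {ω | 2 * Real.sqrt (Var n ω * Real.log (1 / p))
            + 2 * Real.sqrt (ε * Real.log (1 / p)) + 2 * c * Real.log (1 / p) ≤ |M n ω|}
      ≤ ENNReal.ofReal ((2 * n * c ^ 2 / ε + 2) * p) := by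
  obtain ⟨hp0, hp1⟩ := hp
  set L : ℝ := Real.log (1 / p) with hLdef
  have hL : 0 < L := Real.log_pos (one_lt_one_div hp0 hp1)
  have hexp : Real.exp (-L) = p := by
    rw [hLdef, one_div, Real.log_inv, neg_neg, Real.exp_log hp0]
  set V : Ω → ℝ := pvar 𝓕 μ M n with hVdef
  have hVar' : ∀ ω, Var n ω = V ω := fun ω => hVar n ω
  set J : ℕ := Nat.floor (n * c ^ 2 / ε) with hJdef
  set E : ℕ → Set Ω := fun j =>
    {ω | 2 * Real.sqrt (((j : ℝ) + 1) * ε * L) + 2 * c * L ≤ |M n ω|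
      ∧ pvar 𝓕 μ M n ω ≤ ((j : ℝ) + 1) * ε} with hEdef
  set N : Set Ω := {ω | ¬(0 ≤ V ω ∧ V ω ≤ n * c ^ 2)} with hNdef
  have hN : μ N = 0 := by
    have h := pvar_bounds hM hc hbdd n
    rw [ae_iff] at h
    exact h
  have hEbound : ∀ j : ℕ, μ (E j) ≤ ENNReal.ofReal p + ENNReal.ofReal p := by
    intro j
    have h := tail_bound_two_sided hM hc hM0 hbdd n
      (v := ((j : ℝ) + 1) * ε) (L := L) (by positivity) hL
    rw [hexp] at h
    exact h
  have hsub : {ω | 2 * Real.sqrt (Var n ω * L) + 2 * Real.sqrt (ε * L) + 2 * c * L ≤ |M n ω|}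
      ⊆ N ∪ ⋃ j ∈ Finset.range (J + 1), E j := by
    intro ω hω
    by_cases hωN : ω ∈ N
    · exact Or.inl hωN
    · right
      have hP : 0 ≤ V ω ∧ V ω ≤ n * c ^ 2 := not_not.mp hωN
      obtain ⟨hV0, hVub⟩ := hP
      set j : ℕ := Nat.floor (V ω / ε) with hjdef
      have hj_le : j ≤ J := by
        apply Nat.floor_mono
        gcongr
      have hjV : (j : ℝ) * ε ≤ V ω := by
        have h := Nat.floor_le (show (0 : ℝ) ≤ V ω / ε by positivity)
        rw [le_div_iff₀ hε] at h
        exact h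
      have hVj : V ω ≤ ((j : ℝ) + 1) * ε := by
        have h := Nat.lt_floor_add_one (V ω / ε)
        rw [div_lt_iff₀ hε] at h
        exact le_of_lt (by linarith [h])
      have hsq : Real.sqrt (((j : ℝ) + 1) * ε * L) ≤ Real.sqrt (V ω * L) + Real.sqrt (ε * L) := by
        have h1 : ((j : ℝ) + 1) * ε * L = (j : ℝ) * ε * L + ε * L := by ring
        rw [h1]
        calc Real.sqrt ((j : ℝ) * ε * L + ε * L)
            ≤ Real.sqrt (V ω * L + ε * L) := Real.sqrt_le_sqrt (by nlinarith [hL.le])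
        _ ≤ Real.sqrt (V ω * L) + Real.sqrt (ε * L) :=
            sqrt_add_le (mul_nonneg hV0 hL.le) (by positivity)
      have hωE : ω ∈ E j := by
        constructor
        · have h0 : 2 * Real.sqrt (Var n ω * L) + 2 * Real.sqrt (ε * L) + 2 * c * L
              ≤ |M n ω| := hω
          rw [hVar'] at h0
          have h1 : 2 * Real.sqrt (((j : ℝ) + 1) * ε * L) + 2 * c * L
              ≤ 2 * Real.sqrt (V ω * L) + 2 * Real.sqrt (ε * L) + 2 * c * L := by
            linarith [hsq]
          linarith
        · exact hVj
      exact Set.mem_biUnion (Finset.mem_range.mpr (Nat.lt_succ_of_le hj_le)) hωE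
  have hcast : ((J : ℝ) + 1) * (2 * p) ≤ (2 * n * c ^ 2 / ε + 2) * p := by
    have hJle : (J : ℝ) ≤ n * c ^ 2 / ε := Nat.floor_le (by positivity)
    have h2 := mul_le_mul_of_nonneg_left hJle (by positivity : (0:ℝ) ≤ 2 * p)
    calc ((J : ℝ) + 1) * (2 * p) = 2 * p * (J : ℝ) + 2 * p := by ring
    _ ≤ 2 * p * ((n : ℝ) * c ^ 2 / ε) + 2 * p := by linarith
    _ = (2 * n * c ^ 2 / ε + 2) * p := by ring
  calc μ {ω | 2 * Real.sqrt (Var n ω * L) + 2 * Real.sqrt (ε * L) + 2 * c * L ≤ |M n ω|}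
      ≤ μ (N ∪ ⋃ j ∈ Finset.range (J + 1), E j) := measure_mono hsub
  _ ≤ μ N + μ (⋃ j ∈ Finset.range (J + 1), E j) := measure_union_le _ _
  _ = μ (⋃ j ∈ Finset.range (J + 1), E j) := by rw [hN, zero_add]
  _ ≤ ∑ j ∈ Finset.range (J + 1), μ (E j) := measure_biUnion_finset_le _ _
  _ ≤ ∑ _j ∈ Finset.range (J + 1), (ENNReal.ofReal p + ENNReal.ofReal p) :=
      Finset.sum_le_sum fun j _ => hEbound j
  _ = (J + 1 : ℕ) * (ENNReal.ofReal p + ENNReal.ofReal p) := by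
      rw [Finset.sum_const, Finset.card_range, nsmul_eq_mul]
  _ = ENNReal.ofReal (((J : ℝ) + 1) * (2 * p)) := by
      rw [← ENNReal.ofReal_add hp0.le hp0.le]
      rw [← ENNReal.ofReal_natCast (J + 1)]
      rw [← ENNReal.ofReal_mul (by positivity)]
      congr 1
      push_cast
      ring
  _ ≤ ENNReal.ofReal ((2 * n * c ^ 2 / ε + 2) * p) := ENNReal.ofReal_le_ofReal hcast
end

section
/- For every j ≥ 1, the stage-length sequence satisfies e_j ≥ S_j/(2H); that is, each stage length is at least a 1/(2H) fraction of the total number of items contained in the first j stages. -/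
/-- Each stage length is at least a `1/(2H)` fraction of the total number of items
contained in the first `j` stages. -/
theorem stage_length_ge_frac_of_partial_sum
    (H : ℕ) (hH : 1 ≤ H) (e : ℕ → ℕ)
    (he1 : e 1 = H)
    (herec : ∀ i : ℕ, 1 ≤ i → e (i + 1) = ⌊(1 + 1 / (H : ℝ)) * (e i : ℝ)⌋₊)
    (S : ℕ → ℕ) (hS : ∀ j : ℕ, S j = ∑ i ∈ Finset.Icc 1 j, e i) :
    ∀ j : ℕ, 1 ≤ j → (S j : ℝ) / (2 * (H : ℝ)) ≤ (e j : ℝ) := by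
  have hH0 : 0 < H := hH
  -- natural number recurrence: e (i+1) = e i + e i / H  (nat division)
  have hrec : ∀ i : ℕ, 1 ≤ i → e (i + 1) = e i + e i / H := by
    intro i hi
    rw [herec i hi]
    have h1 : (1 + 1/(H:ℝ)) * (e i : ℝ) = (e i : ℝ)/(H:ℝ) + (e i : ℕ) := by
      push_cast
      field_simp
      ring
    rw [h1, Nat.floor_add_natCast (by positivity), Nat.floor_div_natCast, Nat.floor_natCast]
    omega
  -- lower bound: e (n+1) ≥ H + n, in particular e j ≥ H for j ≥ 1
  have hlb : ∀ n : ℕ, H + n ≤ e (n + 1) := by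
    intro n
    induction n with
    | zero => simp [he1]
    | succ n ih =>
      have h := hrec (n+1) (by omega)
      have hdiv : 1 ≤ e (n+1) / H := by
        rw [Nat.le_div_iff_mul_le hH0]; omega
      omega
  have hge : ∀ j : ℕ, 1 ≤ j → H ≤ e j := by
    intro j hj
    have := hlb (j - 1)
    have hj1 : j - 1 + 1 = j := by omega
    rw [hj1] at this
    omega
  -- main claim in ℕ : S j ≤ 2 * H * e j
  have main : ∀ j : ℕ, 1 ≤ j → S j ≤ 2 * H * e j := by
    intro j hj
    induction j, hj using Nat.le_induction with
    | base =>
      rw [hS]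
      simp only [Finset.Icc_self, Finset.sum_singleton, he1]
      nlinarith
    | succ j hj ih =>
      have hSsucc : S (j+1) = S j + e (j+1) := by
        rw [hS, hS, Finset.sum_Icc_succ_top (by omega)]
      have hr := hrec j hj
      set d := e j / H with hd
      have hdm : H * d + e j % H = e j := Nat.div_add_mod (e j) H
      have hrem : e j % H < H := Nat.mod_lt _ hH0
      have hd1 : 1 ≤ d := by
        rw [hd, Nat.one_le_div_iff hH0]
        exact hge j hj
      have key : 2 * H * e j + e (j+1) ≤ 2 * H * e (j+1) := by
        rw [hr]
        have hHz : (1:ℤ) ≤ (H:ℤ) := by exact_mod_cast hH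
        have hdz : (1:ℤ) ≤ (d:ℤ) := by exact_mod_cast hd1
        have hdmz : (H:ℤ) * (d:ℤ) + ((e j % H : ℕ):ℤ) = (e j : ℤ) := by exact_mod_cast hdm
        have hremz : ((e j % H : ℕ):ℤ) < (H:ℤ) := by exact_mod_cast hrem
        have hprod : (0:ℤ) ≤ ((H:ℤ)-1) * ((d:ℤ)-1) :=
          mul_nonneg (by linarith) (by linarith)
        zify
        nlinarith [hprod, hdmz, hremz]
      calc S (j+1) = S j + e (j+1) := hSsucc
        _ ≤ 2 * H * e j + e (j+1) := by omega
        _ ≤ 2 * H * e (j+1) := key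
  intro j hj
  have h2H : (0:ℝ) < 2 * (H:ℝ) := by positivity
  rw [div_le_iff₀ h2H]
  have hm := main j hj
  have : (S j : ℝ) ≤ (2 * H * e j : ℕ) := by exact_mod_cast hm
  push_cast at this
  linarith
end

section
/- For every α ∈ (0,1) and every real N ≥ 1, ∑_{j ≥ 1, S_j ≤ N} min{e_{j+1}, N − S_j} / (S_j)^α ≤ (2^α/(1−α)) · N^{1−α}, where the (finite) sum ranges over all indices j with S_j ≤ N. -/
/-!
Write `m_j = min (e_{j+1}, N - S_j)`. Since `x ↦ x ^ (-α)` is convex, the increment of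
`x ↦ x ^ (1 - α)` over `[S_j, S_j + m_j]` is at least `(1 - α) m_j` times the value of `x ^ (-α)`
at the midpoint `S_j + m_j / 2`, and that midpoint is at most `2 S_j` because
`e_{j+1} ≤ 2 e_j ≤ 2 S_j`. Hence each term is at most `2 ^ α / (1 - α)` times that increment.
The intervals `[S_j, S_j + m_j]` are disjoint, increasing with `j`, and contained in `[0, N]`, so
the increments add up to at most `N ^ (1 - α)`.
-/

open Real

section

open Set

theorem convexOn_rpow_of_nonpos {p : ℝ} (hp : p ≤ 0) :
    ConvexOn ℝ (Ioi 0) fun x : ℝ ↦ x ^ p := by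
  refine ⟨convex_Ioi 0, fun x (hx : 0 < x) y (hy : 0 < y) a b ha hb hab ↦ ?_⟩
  simp only [smul_eq_mul]
  have hxy : 0 < a * x + b * y := (convex_Ioi (0 : ℝ)) hx hy ha hb hab
  rw [rpow_def_of_pos hx, rpow_def_of_pos hy, rpow_def_of_pos hxy]
  calc exp (log (a * x + b * y) * p) ≤ exp ((a * log x + b * log y) * p) :=
        exp_le_exp.2 <| mul_le_mul_of_nonpos_right
          (strictConcaveOn_log_Ioi.concaveOn.2 hx hy ha hb hab) hp
    _ = exp (a * (log x * p) + b * (log y * p)) := by ring_nf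
    _ ≤ a * exp (log x * p) + b * exp (log y * p) := convexOn_exp.2 trivial trivial ha hb hab

theorem two_mul_mul_le_sub_of_convexOn_deriv {φ φ' : ℝ → ℝ} {c u : ℝ} (hu : 0 ≤ u)
    (hφ : ∀ x ∈ Icc (c - u) (c + u), HasDerivAt φ (φ' x) x)
    (hφ' : ConvexOn ℝ (Icc (c - u) (c + u)) φ') :
    2 * u * φ' c ≤ φ (c + u) - φ (c - u) := by
  set ψ : ℝ → ℝ := fun v ↦ φ (c + v) - φ (c - v) - 2 * v * φ' c
  have hmem : ∀ v ∈ Icc 0 u, c + v ∈ Icc (c - u) (c + u) ∧ c - v ∈ Icc (c - u) (c + u) :=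
    fun v hv ↦ ⟨⟨by linarith [hv.1], by linarith [hv.2]⟩,
      ⟨by linarith [hv.2], by linarith [hv.1]⟩⟩
  have hψ : ∀ v ∈ Icc 0 u, HasDerivAt ψ (φ' (c + v) + φ' (c - v) - 2 * φ' c) v := by
    intro v hv
    have hright := (hφ _ (hmem v hv).1).comp_const_add c v
    have hleft := (hφ _ (hmem v hv).2).comp_const_sub c v
    have hlin := ((hasDerivAt_id' v).const_mul 2).mul_const (φ' c)
    exact ((hright.sub hleft).sub hlin).congr_deriv (by ring)
  have hmono : MonotoneOn ψ (Icc 0 u) := by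
    refine monotoneOn_of_hasDerivWithinAt_nonneg (convex_Icc 0 u)
      (fun v hv ↦ (hψ v hv).continuousAt.continuousWithinAt)
      (fun v hv ↦ (hψ v (interior_subset hv)).hasDerivWithinAt) fun v hv ↦ ?_
    have hmid := hφ'.2 (hmem v (interior_subset hv)).1 (hmem v (interior_subset hv)).2
      (by norm_num : (0 : ℝ) ≤ 1 / 2) (by norm_num : (0 : ℝ) ≤ 1 / 2) (by norm_num)
    simp only [smul_eq_mul] at hmid
    rw [show 1 / 2 * (c + v) + 1 / 2 * (c - v) = c by ring] at hmid
    linarith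
  have := hmono ⟨le_rfl, hu⟩ ⟨hu, le_rfl⟩ hu
  simp only [ψ, add_zero, sub_zero, mul_zero, zero_mul] at this
  linarith

theorem div_rpow_le_rpow_add_sub_rpow {α s m : ℝ} (hα₀ : 0 ≤ α) (hα₁ : α < 1)
    (hs : 0 < s) (hm₀ : 0 ≤ m) (hm : m ≤ 2 * s) :
    m / s ^ α ≤ 2 ^ α / (1 - α) * ((s + m) ^ (1 - α) - s ^ (1 - α)) := by
  have hmid := two_mul_mul_le_sub_of_convexOn_deriv (φ := fun x ↦ x ^ (1 - α))
    (φ' := fun x ↦ (1 - α) * x ^ (1 - α - 1)) (c := s + m / 2) (u := m / 2) (by linarith)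
    (fun x hx ↦ hasDerivAt_rpow_const (Or.inl (show (0 : ℝ) < x by linarith [hx.1]).ne'))
    (((convexOn_rpow_of_nonpos (by linarith)).smul (by linarith)).subset
      (fun x hx ↦ (by linarith [hx.1] : (0 : ℝ) < x)) (convex_Icc _ _))
  simp only [show s + m / 2 + m / 2 = s + m by ring, show s + m / 2 - m / 2 = s by ring,
    show 1 - α - 1 = -α by ring] at hmid
  have hα : 0 < 1 - α := by linarith
  calc m / s ^ α = 2 ^ α / (1 - α) * (m * (1 - α) * (2 * s) ^ (-α)) := by
        rw [mul_rpow zero_le_two hs.le, rpow_neg zero_le_two, rpow_neg hs.le]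
        field_simp
    _ ≤ 2 ^ α / (1 - α) * (2 * (m / 2) * ((1 - α) * (s + m / 2) ^ (-α))) := by
        rw [show 2 * (m / 2) * ((1 - α) * (s + m / 2) ^ (-α))
          = m * (1 - α) * (s + m / 2) ^ (-α) by ring]
        refine mul_le_mul_of_nonneg_left (mul_le_mul_of_nonneg_left ?_ (by positivity))
          (by positivity)
        exact rpow_le_rpow_of_nonpos (by linarith) (by linarith) (by linarith)
    _ ≤ 2 ^ α / (1 - α) * ((s + m) ^ (1 - α) - s ^ (1 - α)) := by gcongr

end

open Finset

theorem sum_sub_le_sub_of_ordered_subintervals {ι : Type*} [LinearOrder ι] {g : ℝ → ℝ}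
    {L U : ℝ} (hg : MonotoneOn g (Set.Icc L U)) (hLU : L ≤ U) (F : Finset ι) (a b : ι → ℝ)
    (hsub : ∀ j ∈ F, L ≤ a j ∧ a j ≤ b j ∧ b j ≤ U)
    (hord : ∀ j ∈ F, ∀ k ∈ F, j < k → b j ≤ a k) :
    ∑ j ∈ F, (g (b j) - g (a j)) ≤ g U - g L := by
  induction F using Finset.induction_on_max generalizing U with
  | empty => simpa using hg ⟨le_rfl, hLU⟩ ⟨hLU, le_rfl⟩ hLU
  | insert k F hlt ih =>
    obtain ⟨hLa, hab, hbU⟩ := hsub k (mem_insert_self k F)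
    -- the intervals indexed by `F` all lie in `[L, a k]`
    have hF := ih (hg.mono (Set.Icc_subset_Icc_right (hab.trans hbU))) hLa
      (fun j hj ↦ ⟨(hsub j (mem_insert_of_mem hj)).1, (hsub j (mem_insert_of_mem hj)).2.1,
        hord j (mem_insert_of_mem hj) k (mem_insert_self k F) (hlt j hj)⟩)
      (fun j hj l hl ↦ hord j (mem_insert_of_mem hj) l (mem_insert_of_mem hl))
    have hgb : g (b k) ≤ g U := hg ⟨hLa.trans hab, hbU⟩ ⟨hLU, le_rfl⟩ hbU
    rw [sum_insert fun hk ↦ (hlt k hk).false]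
    linarith

theorem sum_div_rpow_le_of_ordered {ι : Type*} [LinearOrder ι] (F : Finset ι) (s m : ι → ℝ)
    {α N : ℝ} (hα₀ : 0 ≤ α) (hα₁ : α < 1) (hN : 0 ≤ N) (hs : ∀ j ∈ F, 0 < s j)
    (hm : ∀ j ∈ F, 0 ≤ m j ∧ m j ≤ 2 * s j ∧ s j + m j ≤ N)
    (hord : ∀ j ∈ F, ∀ k ∈ F, j < k → s j + m j ≤ s k) :
    ∑ j ∈ F, m j / s j ^ α ≤ 2 ^ α / (1 - α) * N ^ (1 - α) :=
  calc ∑ j ∈ F, m j / s j ^ α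
      ≤ ∑ j ∈ F, 2 ^ α / (1 - α) * ((s j + m j) ^ (1 - α) - s j ^ (1 - α)) :=
        sum_le_sum fun j hj ↦ div_rpow_le_rpow_add_sub_rpow hα₀ hα₁ (hs j hj) (hm j hj).1
          (hm j hj).2.1
    _ ≤ 2 ^ α / (1 - α) * (N ^ (1 - α) - 0 ^ (1 - α)) := by
        rw [← mul_sum]
        gcongr
        refine sum_sub_le_sub_of_ordered_subintervals
          ((monotoneOn_rpow_Ici_of_exponent_nonneg (by linarith)).mono Set.Icc_subset_Ici_self)
          hN F _ _ (fun j hj ↦ ⟨(hs j hj).le, ?_, (hm j hj).2.2⟩) hord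
        linarith [(hm j hj).1]
    _ = 2 ^ α / (1 - α) * N ^ (1 - α) := by rw [zero_rpow (by linarith), sub_zero]

theorem tsum_subtype_eq_sum_of_mem_iff {β : Type*} [AddCommMonoid β] [TopologicalSpace β]
    {p : ℕ → Prop} (F : Finset ℕ) (hF : ∀ j, j ∈ F ↔ p j) (f : ℕ → β) :
    ∑' j : {j // p j}, f j = ∑ j ∈ F, f j := by
  rw [← F.tsum_subtype f, ← (Equiv.subtypeEquivRight hF).tsum_eq]
  rfl

section Stages

variable {H : ℕ} {e S : ℕ → ℕ}

theorem stage_le_stage_succ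
    (herec : ∀ i : ℕ, 1 ≤ i → e (i + 1) = ⌊(1 + 1 / (H : ℝ)) * (e i : ℝ)⌋₊)
    {i : ℕ} (hi : 1 ≤ i) : e i ≤ e (i + 1) := by
  rw [herec i hi]
  exact Nat.le_floor (le_mul_of_one_le_left (by positivity) (by simp))

theorem first_le_stage (he1 : e 1 = H)
    (herec : ∀ i : ℕ, 1 ≤ i → e (i + 1) = ⌊(1 + 1 / (H : ℝ)) * (e i : ℝ)⌋₊)
    {i : ℕ} (hi : 1 ≤ i) : H ≤ e i := by
  induction i, hi using Nat.le_induction with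
  | base => exact he1.ge
  | succ i hi ih => exact ih.trans (stage_le_stage_succ herec hi)

theorem stage_succ_le_two_mul (hH : 1 ≤ H)
    (herec : ∀ i : ℕ, 1 ≤ i → e (i + 1) = ⌊(1 + 1 / (H : ℝ)) * (e i : ℝ)⌋₊)
    {i : ℕ} (hi : 1 ≤ i) : e (i + 1) ≤ 2 * e i := by
  rw [herec i hi, ← Nat.floor_natCast (R := ℝ) (2 * e i)]
  refine Nat.floor_le_floor ?_
  have hH' : 1 / (H : ℝ) ≤ 1 := div_le_one_of_le₀ (by exact_mod_cast hH) (Nat.cast_nonneg H)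
  push_cast
  nlinarith [(Nat.cast_nonneg (e i) : (0 : ℝ) ≤ e i)]

theorem partialSum_succ (hS : ∀ j : ℕ, S j = ∑ i ∈ Finset.Icc 1 j, e i) (j : ℕ) :
    S (j + 1) = S j + e (j + 1) := by
  rw [hS, hS, sum_Icc_succ_top (Nat.le_add_left 1 j)]

theorem partialSum_mono (hS : ∀ j : ℕ, S j = ∑ i ∈ Finset.Icc 1 j, e i) : Monotone S :=
  monotone_nat_of_le_succ fun j ↦ (partialSum_succ hS j).symm ▸ Nat.le_add_right _ _

theorem stage_le_partialSum (hS : ∀ j : ℕ, S j = ∑ i ∈ Finset.Icc 1 j, e i) {j : ℕ}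
    (hj : 1 ≤ j) : e j ≤ S j :=
  hS j ▸ single_le_sum (fun _ _ ↦ Nat.zero_le _) (mem_Icc.2 ⟨hj, le_rfl⟩)

theorem self_le_partialSum (hS : ∀ j : ℕ, S j = ∑ i ∈ Finset.Icc 1 j, e i)
    (he : ∀ i, 1 ≤ i → 1 ≤ e i) (j : ℕ) : j ≤ S j := by
  rw [hS]
  simpa using card_nsmul_le_sum (Icc 1 j) e 1 fun i hi ↦ he i (mem_Icc.1 hi).1

theorem stage_succ_le_two_mul_partialSum (hH : 1 ≤ H)
    (herec : ∀ i : ℕ, 1 ≤ i → e (i + 1) = ⌊(1 + 1 / (H : ℝ)) * (e i : ℝ)⌋₊)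
    (hS : ∀ j : ℕ, S j = ∑ i ∈ Finset.Icc 1 j, e i) {j : ℕ} (hj : 1 ≤ j) :
    e (j + 1) ≤ 2 * S j :=
  (stage_succ_le_two_mul hH herec hj).trans (Nat.mul_le_mul_left 2 (stage_le_partialSum hS hj))

theorem partialSum_add_stage_succ_le (hS : ∀ j : ℕ, S j = ∑ i ∈ Finset.Icc 1 j, e i)
    {j k : ℕ} (hjk : j < k) : S j + e (j + 1) ≤ S k :=
  partialSum_succ hS j ▸ partialSum_mono hS hjk

end Stages

/-- Summing `min(e_{j+1}, N - S_j) / S_j^α` over all stages completed within the first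
`N` items is bounded by `(2^α/(1-α)) · N^(1-α)`. -/
theorem stage_sum_rpow_bound
    (H : ℕ) (hH : 1 ≤ H) (e : ℕ → ℕ)
    (he1 : e 1 = H)
    (herec : ∀ i : ℕ, 1 ≤ i → e (i + 1) = ⌊(1 + 1 / (H : ℝ)) * (e i : ℝ)⌋₊)
    (S : ℕ → ℕ) (hS : ∀ j : ℕ, S j = ∑ i ∈ Finset.Icc 1 j, e i)
    (α N : ℝ) (hα : α ∈ Set.Ioo (0 : ℝ) 1) (hN : 1 ≤ N) :
    ∑' j : {j : ℕ // 1 ≤ j ∧ (S j : ℝ) ≤ N},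
        min ((e ((j : ℕ) + 1) : ℝ)) (N - (S (j : ℕ) : ℝ)) / ((S (j : ℕ) : ℝ)) ^ α
      ≤ (2 : ℝ) ^ α / (1 - α) * N ^ (1 - α) := by
  obtain ⟨hα₀, hα₁⟩ := hα
  have he : ∀ i, 1 ≤ i → 1 ≤ e i := fun i hi ↦ hH.trans (first_le_stage he1 herec hi)
  set F := (Icc 1 ⌊N⌋₊).filter fun j ↦ (S j : ℝ) ≤ N
  have hF : ∀ j, j ∈ F ↔ 1 ≤ j ∧ (S j : ℝ) ≤ N := fun j ↦ by
    simp only [F, mem_filter, mem_Icc, and_congr_left_iff, and_iff_left_iff_imp]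
    exact fun hSj _ ↦ Nat.le_floor ((Nat.cast_le.2 (self_le_partialSum hS he j)).trans hSj)
  rw [tsum_subtype_eq_sum_of_mem_iff F hF
    (fun j ↦ min (e (j + 1) : ℝ) (N - S j) / (S j : ℝ) ^ α)]
  refine sum_div_rpow_le_of_ordered F _ _ hα₀.le hα₁ (by linarith) (fun j hj ↦ ?_)
    (fun j hj ↦ ?_) (fun j _ k _ hjk ↦ ?_)
  · exact Nat.cast_pos.2 (((hF j).1 hj).1.trans (self_le_partialSum hS he j))
  · obtain ⟨hj, hSj⟩ := (hF j).1 hj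
    have h2 : (e (j + 1) : ℝ) ≤ 2 * S j := by
      exact_mod_cast stage_succ_le_two_mul_partialSum hH herec hS hj
    exact ⟨le_min (by positivity) (by linarith), (min_le_left _ _).trans h2,
      by linarith [min_le_right (e (j + 1) : ℝ) (N - S j)]⟩
  · have : ((S j + e (j + 1) : ℕ) : ℝ) ≤ S k := by
      exact_mod_cast partialSum_add_stage_succ_le hS hjk
    push_cast at this
    linarith [min_le_left (e (j + 1) : ℝ) (N - S j)]
end

section
/- For every real N ≥ 1, ∑_{j ≥ 1, S_j ≤ N} min{e_{j+1}, N − S_j} / S_j ≤ 2·log N, where the (finite) sum ranges over all indices j with S_j ≤ N. -/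
lemma key_ineq {t : ℝ} (h1 : 1 ≤ t) (h3 : t ≤ 3) : t - 1 ≤ 2 * Real.log t := by
  have hlog3 : 1 ≤ Real.log 3 := by
    rw [Real.le_log_iff_exp_le (by norm_num)]
    calc Real.exp 1 ≤ 2.7182818286 := Real.exp_one_lt_d9.le
    _ ≤ 3 := by norm_num
  have hconc := strictConcaveOn_log_Ioi.concaveOn
  have ha : (0:ℝ) ≤ (3 - t)/2 := by linarith
  have hb : (0:ℝ) ≤ (t - 1)/2 := by linarith
  have hab : (3 - t)/2 + (t - 1)/2 = 1 := by ring
  have h2 := hconc.2 (Set.mem_Ioi.2 (by norm_num : (0:ℝ) < 1))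
    (Set.mem_Ioi.2 (by norm_num : (0:ℝ) < 3)) ha hb hab
  simp only [smul_eq_mul, Real.log_one, mul_zero, zero_add, mul_one] at h2
  have heq : (3 - t)/2 + (t - 1)/2 * 3 = t := by ring
  rw [heq] at h2
  nlinarith [mul_nonneg hb (by linarith : (0:ℝ) ≤ Real.log 3 - 1)]

/-- Summing `min(e_{j+1}, N - S_j) / S_j` over all stages completed within the first
`N` items is bounded by `2 log N`. -/
theorem stage_sum_log_bound
    (H : ℕ) (hH : 1 ≤ H) (e : ℕ → ℕ)
    (he1 : e 1 = H)
    (herec : ∀ i : ℕ, 1 ≤ i → e (i + 1) = ⌊(1 + 1 / (H : ℝ)) * (e i : ℝ)⌋₊)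
    (S : ℕ → ℕ) (hS : ∀ j : ℕ, S j = ∑ i ∈ Finset.Icc 1 j, e i)
    (N : ℝ) (hN : 1 ≤ N) :
    ∑' j : {j : ℕ // 1 ≤ j ∧ (S j : ℝ) ≤ N},
        min ((e ((j : ℕ) + 1) : ℝ)) (N - (S (j : ℕ) : ℝ)) / (S (j : ℕ) : ℝ)
      ≤ 2 * Real.log N := by
  classical
  have hH' : (1:ℝ) ≤ (H:ℝ) := by exact_mod_cast hH
  have hHpos : (0:ℝ) < (H:ℝ) := by linarith
  have hcoef1 : (1:ℝ) ≤ 1 + 1/(H:ℝ) := by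
    have : (0:ℝ) ≤ 1/(H:ℝ) := by positivity
    linarith
  have hcoef2 : 1 + 1/(H:ℝ) ≤ 2 := by
    have : 1/(H:ℝ) ≤ 1 := by rw [div_le_one hHpos]; exact hH'
    linarith
  -- e is monotone and positive on [1, ∞)
  have he_mono : ∀ i, 1 ≤ i → e i ≤ e (i+1) := by
    intro i hi
    rw [herec i hi]
    apply Nat.le_floor
    nlinarith [(Nat.cast_nonneg (e i) : (0:ℝ) ≤ (e i : ℝ)), div_nonneg (zero_le_one) hHpos.le]
  have he_pos : ∀ i, 1 ≤ i → 1 ≤ e i := by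
    intro i
    induction i with
    | zero => intro h; omega
    | succ n ih =>
      intro _
      rcases Nat.eq_zero_or_pos n with h|h
      · subst h; rw [he1]; exact hH
      · exact le_trans (ih h) (he_mono n h)
  have he_le2 : ∀ i, 1 ≤ i → (e (i+1) : ℝ) ≤ 2 * (e i : ℝ) := by
    intro i hi
    rw [herec i hi]
    refine le_trans (Nat.floor_le (by positivity)) ?_
    exact mul_le_mul_of_nonneg_right hcoef2 (Nat.cast_nonneg _)
  -- S facts
  have hSsucc : ∀ j, S (j+1) = S j + e (j+1) := by
    intro j
    rw [hS, hS, Finset.sum_Icc_succ_top (by omega : 1 ≤ j + 1)]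
  have hS_mono : ∀ ⦃a b : ℕ⦄, a ≤ b → S a ≤ S b := by
    intro a b hab
    rw [hS, hS]
    exact Finset.sum_le_sum_of_subset (Finset.Icc_subset_Icc_right hab)
  have hS_ge : ∀ j, j ≤ S j := by
    intro j
    rw [hS]
    calc j = ∑ _i ∈ Finset.Icc 1 j, 1 := by simp [Nat.card_Icc]
    _ ≤ ∑ i ∈ Finset.Icc 1 j, e i :=
        Finset.sum_le_sum (fun i hi => he_pos i (Finset.mem_Icc.1 hi).1)
  have he_le_S : ∀ j, 1 ≤ j → e j ≤ S j := by
    intro j hj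
    rw [hS]
    exact Finset.single_le_sum (fun i _ => Nat.zero_le _)
      (Finset.mem_Icc.2 ⟨hj, le_refl j⟩)
  -- the potential function
  set g : ℕ → ℝ := fun j => 2 * Real.log (min ((S j : ℝ)) N) with hg
  -- per-term bound
  have hterm : ∀ j, 1 ≤ j → (S j : ℝ) ≤ N →
      min ((e (j + 1) : ℝ)) (N - (S j : ℝ)) / (S j : ℝ) ≤ g (j+1) - g j := by
    intro j hj hjN
    set a : ℝ := (S j : ℝ) with hadef
    have ha1 : (1:ℝ) ≤ a := by rw [hadef]; exact_mod_cast le_trans hj (hS_ge j)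
    have hapos : (0:ℝ) < a := by linarith
    set b : ℝ := min ((S (j+1) : ℝ)) N with hbdef
    have hba : a ≤ b := by
      rw [hadef, hbdef]
      exact le_min (by exact_mod_cast hS_mono (Nat.le_succ j)) hjN
    have hb3 : b ≤ 3 * a := by
      refine le_trans (min_le_left _ _) ?_
      have h1 : (S (j+1) : ℝ) = a + (e (j+1) : ℝ) := by
        rw [hadef, hSsucc j]; push_cast; ring
      have h2 : (e (j+1) : ℝ) ≤ 2 * (e j : ℝ) := he_le2 j hj
      have h3 : (e j : ℝ) ≤ a := by rw [hadef]; exact_mod_cast he_le_S j hj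
      linarith
    have hmin : min ((e (j + 1) : ℝ)) (N - a) = b - a := by
      have h1 : (e (j+1) : ℝ) = (S (j+1) : ℝ) - a := by
        rw [hadef, hSsucc j]; push_cast; ring
      rw [hbdef, h1, min_sub_sub_right]
    have hkey := key_ineq (t := b / a) ((one_le_div hapos).2 hba)
      ((div_le_iff₀ hapos).2 (by linarith))
    have hlog : Real.log (b / a) = Real.log b - Real.log a :=
      Real.log_div (by linarith) (by linarith)
    have hgj : g j = 2 * Real.log a := by
      rw [hg]; simp only []
      rw [min_eq_left hjN]
    have hgj1 : g (j+1) = 2 * Real.log b := rfl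
    rw [hmin, hgj, hgj1]
    rw [sub_div, div_self (ne_of_gt hapos)]
    rw [hlog] at hkey
    linarith
  -- identify the tsum with a finite sum
  set s : Set ℕ := {j : ℕ | 1 ≤ j ∧ (S j : ℝ) ≤ N} with hsdef
  set f : ℕ → ℝ := fun j => min ((e (j + 1) : ℝ)) (N - (S j : ℝ)) / (S j : ℝ) with hfdef
  set M : ℕ := ⌈N⌉₊ + 1 with hM
  set F : Finset ℕ := (Finset.range M).filter (fun j => 1 ≤ j ∧ (S j : ℝ) ≤ N) with hF
  have hmemF : ∀ j : ℕ, j ∈ F ↔ j ∈ s := by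
    intro j
    rw [hF, Finset.mem_filter, Finset.mem_range]
    constructor
    · rintro ⟨_, h⟩; exact h
    · rintro ⟨h1, h2⟩
      refine ⟨?_, h1, h2⟩
      have : (j : ℝ) ≤ N := le_trans (by exact_mod_cast hS_ge j) h2
      have : (j : ℝ) ≤ (⌈N⌉₊ : ℝ) := le_trans this (Nat.le_ceil N)
      have : j ≤ ⌈N⌉₊ := by exact_mod_cast this
      omega
  have hlogN : 0 ≤ Real.log N := Real.log_nonneg hN
  have hsum_eq : (∑' j : {j : ℕ // 1 ≤ j ∧ (S j : ℝ) ≤ N},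
      min ((e ((j : ℕ) + 1) : ℝ)) (N - (S (j : ℕ) : ℝ)) / (S (j : ℕ) : ℝ))
      = ∑ j ∈ F, f j := by
    have h1 : (∑' j : {j : ℕ // 1 ≤ j ∧ (S j : ℝ) ≤ N},
        min ((e ((j : ℕ) + 1) : ℝ)) (N - (S (j : ℕ) : ℝ)) / (S (j : ℕ) : ℝ))
        = ∑' j : s, f (j : ℕ) := rfl
    rw [h1, tsum_subtype s f]
    rw [tsum_eq_sum (s := F) (f := s.indicator f) ?_]
    · exact Finset.sum_congr rfl (fun j hj => Set.indicator_of_mem ((hmemF j).1 hj) f)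
    · intro j hj
      exact Set.indicator_of_notMem (fun hjs => hj ((hmemF j).2 hjs)) f
  rw [hsum_eq]
  rcases Finset.eq_empty_or_nonempty F with hFe | hFne
  · rw [hFe, Finset.sum_empty]; linarith
  · set k : ℕ := F.max' hFne with hk
    have hkF : k ∈ F := F.max'_mem hFne
    have hkprop : 1 ≤ k ∧ (S k : ℝ) ≤ N := ((hmemF k).1 hkF)
    have hkM : k < M := by
      have := Finset.mem_filter.1 hkF
      exact Finset.mem_range.1 this.1
    have hFeq : F = Finset.Icc 1 k := by
      ext j
      rw [Finset.mem_Icc]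
      constructor
      · intro hj
        exact ⟨((hmemF j).1 hj).1, F.le_max' j hj⟩
      · rintro ⟨h1, h2⟩
        rw [hmemF]
        refine ⟨h1, ?_⟩
        exact le_trans (by exact_mod_cast hS_mono h2) hkprop.2
    rw [hFeq]
    have hstep : ∑ j ∈ Finset.Icc 1 k, f j ≤ ∑ j ∈ Finset.Icc 1 k, (g (j+1) - g j) := by
      apply Finset.sum_le_sum
      intro j hj
      rw [Finset.mem_Icc] at hj
      have hjN : (S j : ℝ) ≤ N :=
        le_trans (by exact_mod_cast hS_mono hj.2) hkprop.2
      exact hterm j hj.1 hjN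
    have htel : ∑ j ∈ Finset.Icc 1 k, (g (j+1) - g j) = g (k+1) - g 1 := by
      have hconv : ∑ j ∈ Finset.Icc 1 k, (g (j+1) - g j)
          = ∑ i ∈ Finset.range k, (g ((i+1)+1) - g (i+1)) := by
        rw [← Finset.Ico_add_one_right_eq_Icc, Finset.sum_Ico_eq_sum_range]
        simp [add_comm]
      rw [hconv]
      exact Finset.sum_range_sub (fun i => g (i + 1)) k
    have hg1 : 0 ≤ g 1 := by
      simp only [hg]
      have : (1:ℝ) ≤ min ((S 1 : ℝ)) N := by
        refine le_min ?_ hN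
        exact_mod_cast le_trans (by omega : 1 ≤ 1) (hS_ge 1)
      have := Real.log_nonneg this
      linarith
    have hgk : g (k+1) ≤ 2 * Real.log N := by
      simp only [hg]
      have hpos : (0:ℝ) < min ((S (k+1) : ℝ)) N := by
        refine lt_min ?_ (by linarith)
        have : 1 ≤ S (k+1) := le_trans (by omega) (hS_ge (k+1))
        exact_mod_cast Nat.lt_of_lt_of_le Nat.zero_lt_one this
      have := Real.log_le_log hpos (min_le_right ((S (k+1) : ℝ)) N)
      linarith
    linarith
end

section
/- For every α ∈ (0,1) and every nonnegative weight function w : X → [0,∞), the stage-based visit counts satisfy ∑_{t ∈ {1,…,T}, n(t) > 0} w(x_t)/n(t)^α ≤ (2^α/(1−α)) · ∑_{x ∈ X, N(x) ≥ 1} w(x)·N(x)^{1−α}. -/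
open Finset

/-- Key calculus fact: `∑_{m=1}^M m^{-α} ≤ M^{1-α}/(1-α)` for `α ∈ (0,1)`. -/
lemma aux_sum_inv_rpow_le {α : ℝ} (hα0 : 0 < α) (hα1 : α < 1) :
    ∀ M : ℕ, ∑ m ∈ Finset.Icc 1 M, ((m : ℝ)) ^ (-α) ≤ (M : ℝ) ^ (1 - α) / (1 - α) := by
  have hp : (0 : ℝ) < 1 - α := by linarith
  intro M
  induction M with
  | zero =>
      simp [Real.zero_rpow (by linarith : (1:ℝ) - α ≠ 0)]
  | succ M ih =>
      rw [Finset.sum_Icc_succ_top (by omega : 1 ≤ M + 1)]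
      have hb : (0 : ℝ) < (M : ℝ) + 1 := by positivity
      have hbern := rpow_one_add_le_one_add_mul_self
        (s := -(1 / ((M : ℝ) + 1))) (p := 1 - α)
        (by
          have : 1 / ((M : ℝ) + 1) ≤ 1 := by
            rw [div_le_one hb]; linarith
          linarith)
        (by linarith) (by linarith)
      have h1 : (1 : ℝ) + -(1 / ((M : ℝ) + 1)) = (M : ℝ) / ((M : ℝ) + 1) := by
        field_simp
        ring
      rw [h1] at hbern
      have h2 : ((M : ℝ) / ((M : ℝ) + 1)) ^ (1 - α)
          = (M : ℝ) ^ (1 - α) / ((M : ℝ) + 1) ^ (1 - α) :=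
        Real.div_rpow (by positivity) hb.le _
      rw [h2] at hbern
      have hbp : (0 : ℝ) < ((M : ℝ) + 1) ^ (1 - α) := Real.rpow_pos_of_pos hb _
      -- multiply through by ((M:ℝ)+1)^(1-α)
      have key : (M : ℝ) ^ (1 - α) + (1 - α) * ((M : ℝ) + 1) ^ (-α)
          ≤ ((M : ℝ) + 1) ^ (1 - α) := by
        have h3 : ((M : ℝ) + 1) ^ (-α) = ((M : ℝ) + 1) ^ (1 - α) / ((M : ℝ) + 1) := by
          rw [Real.rpow_sub hb, Real.rpow_one, Real.rpow_neg hb.le]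
          have hbap : (0:ℝ) < ((M : ℝ) + 1) ^ α := Real.rpow_pos_of_pos hb α
          field_simp
        have h4 := mul_le_mul_of_nonneg_right hbern hbp.le
        rw [div_mul_cancel₀ _ hbp.ne'] at h4
        rw [h3]
        have h5 : (1 + (1 - α) * -(1 / ((M : ℝ) + 1))) * ((M : ℝ) + 1) ^ (1 - α)
            = ((M : ℝ) + 1) ^ (1 - α)
              - (1 - α) * (((M : ℝ) + 1) ^ (1 - α) / ((M : ℝ) + 1)) := by
          field_simp
          ring
        rw [h5] at h4
        linarith
      have hcast : (((M + 1 : ℕ) : ℝ)) = (M : ℝ) + 1 := by push_cast; ring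
      rw [hcast]
      have h6 : (M : ℝ) ^ (1 - α) / (1 - α) + ((M : ℝ) + 1) ^ (-α)
          ≤ ((M : ℝ) + 1) ^ (1 - α) / (1 - α) := by
        rw [div_add' _ _ _ hp.ne', div_le_div_iff₀ hp hp]
        nlinarith [key]
      linarith [ih]

/-- Lemma 4 (first bound): weighted sum of `1/n(t)^α` over time steps, where `n(t)` is the
number of visits to `x_t` prior to its current stage, is bounded via total visit counts. -/
theorem stage_visit_sum_rpow_bound
    (H : ℕ) (hH : 1 ≤ H) (e : ℕ → ℕ)
    (he1 : e 1 = H)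
    (herec : ∀ i : ℕ, 1 ≤ i → e (i + 1) = ⌊(1 + 1 / (H : ℝ)) * (e i : ℝ)⌋₊)
    (S : ℕ → ℕ) (hS : ∀ j : ℕ, S j = ∑ i ∈ Finset.Icc 1 j, e i)
    (X : Type*) [Fintype X] [DecidableEq X]
    (T : ℕ) (hT : 1 ≤ T) (x : ℕ → X)
    (cnt : ℕ → ℕ)
    (hcnt : ∀ t : ℕ, cnt t = ((Finset.Icc 1 t).filter (fun τ => x τ = x t)).card)
    (Nv : X → ℕ)
    (hNv : ∀ s : X, Nv s = ((Finset.Icc 1 T).filter (fun t => x t = s)).card)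
    (j : ℕ → ℕ)
    (hj : ∀ t ∈ Finset.Icc 1 T, 1 ≤ j t ∧ S (j t - 1) < cnt t ∧ cnt t ≤ S (j t))
    (n : ℕ → ℕ) (hn : ∀ t : ℕ, n t = S (j t - 1))
    (w : X → ℝ) (hw : ∀ s : X, 0 ≤ w s)
    (α : ℝ) (hα : α ∈ Set.Ioo (0 : ℝ) 1) :
    ∑ t ∈ (Finset.Icc 1 T).filter (fun t => 0 < n t), w (x t) / (n t : ℝ) ^ α
      ≤ (2 : ℝ) ^ α / (1 - α)
          * ∑ s ∈ Finset.univ.filter (fun s : X => 1 ≤ Nv s), w s * (Nv s : ℝ) ^ (1 - α) := by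
  obtain ⟨hα0, hα1⟩ := hα
  have hp : (0 : ℝ) < 1 - α := by linarith
  have hHR : (0 : ℝ) < (H : ℝ) := by exact_mod_cast hH
  -- basic facts about S
  have hS0 : S 0 = 0 := by simp [hS]
  have hSsucc : ∀ k : ℕ, S (k + 1) = S k + e (k + 1) := by
    intro k
    rw [hS, hS, Finset.sum_Icc_succ_top (by omega : 1 ≤ k + 1)]
  -- e doubles at most
  have hdouble : ∀ i : ℕ, 1 ≤ i → e (i + 1) ≤ 2 * e i := by
    intro i hi
    rw [herec i hi]
    calc ⌊(1 + 1 / (H : ℝ)) * (e i : ℝ)⌋₊ ≤ ⌊((2 * e i : ℕ) : ℝ)⌋₊ := by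
          apply Nat.floor_mono
          push_cast
          have h1 : 1 / (H : ℝ) ≤ 1 := by
            rw [div_le_one hHR]; exact_mod_cast hH
          nlinarith [(Nat.cast_nonneg (e i) : (0:ℝ) ≤ (e i : ℝ))]
      _ = 2 * e i := Nat.floor_natCast _
  -- key: e (k+1) ≤ S k + 1 for k ≥ 1
  have hkey : ∀ k : ℕ, 1 ≤ k → e (k + 1) ≤ S k + 1 := by
    intro k hk
    induction k with
    | zero => omega
    | succ m ihm =>
        rcases Nat.eq_or_lt_of_le hk with h | h
        · -- m + 1 = 1, i.e. m = 0 : base case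
          have hm0 : m = 0 := by omega
          subst hm0
          have he2 : e 2 = H + 1 := by
            rw [herec 1 le_rfl, he1]
            have : (1 + 1 / (H : ℝ)) * (H : ℝ) = ((H + 1 : ℕ) : ℝ) := by
              field_simp
              norm_num
            rw [this, Nat.floor_natCast]
          have hS1 : S 1 = H := by
            rw [hS]; simp [he1]
          rw [he2, hS1]
        · have hm1 : 1 ≤ m := by omega
          have := hdouble (m + 1) (by omega)
          have h2 := ihm hm1
          rw [hSsucc m] at *
          omega
  -- per-t facts
  set A := (Finset.Icc 1 T).filter (fun t => 0 < n t) with hA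
  have hfacts : ∀ t ∈ A, 2 ≤ cnt t ∧ cnt t - 1 ≤ 2 * n t ∧ cnt t ≤ Nv (x t) ∧ 1 ≤ n t := by
    intro t ht
    rw [hA, Finset.mem_filter] at ht
    obtain ⟨htI, hnt⟩ := ht
    obtain ⟨hj1, hlt, hle⟩ := hj t htI
    rw [Finset.mem_Icc] at htI
    have hnS := hn t
    -- j t ≥ 2
    have hj2 : 1 ≤ j t - 1 := by
      by_contra hcon
      have : j t - 1 = 0 := by omega
      rw [this, hS0] at hnS
      omega
    have hjeq : j t = (j t - 1) + 1 := by omega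
    have hSe : S (j t) = S (j t - 1) + e ((j t - 1) + 1) := by
      conv_lhs => rw [hjeq]
      exact hSsucc _
    have hekey := hkey (j t - 1) hj2
    have hcle2n : cnt t ≤ 2 * n t + 1 := by omega
    have hcnt2 : 2 ≤ cnt t := by omega
    refine ⟨hcnt2, by omega, ?_, by omega⟩
    rw [hcnt t, hNv (x t)]
    apply Finset.card_le_card
    apply Finset.filter_subset_filter
    exact Finset.Icc_subset_Icc_right htI.2
  -- Step 1: termwise bound
  have step1 : ∑ t ∈ A, w (x t) / (n t : ℝ) ^ α
      ≤ (2:ℝ) ^ α * ∑ t ∈ A, w (x t) * ((cnt t - 1 : ℕ) : ℝ) ^ (-α) := by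
    rw [Finset.mul_sum]
    apply Finset.sum_le_sum
    intro t ht
    obtain ⟨hc2, hcle, _, hn1⟩ := hfacts t ht
    have hnpos : (0:ℝ) < (n t : ℝ) := by exact_mod_cast hn1
    have hcpos : (0:ℝ) < ((cnt t - 1 : ℕ) : ℝ) := by
      have : 1 ≤ cnt t - 1 := by omega
      exact_mod_cast this
    have hcast : ((cnt t - 1 : ℕ) : ℝ) ≤ 2 * (n t : ℝ) := by exact_mod_cast hcle
    have h1 : ((cnt t - 1 : ℕ) : ℝ) ^ α ≤ (2 * (n t : ℝ)) ^ α :=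
      Real.rpow_le_rpow hcpos.le hcast hα0.le
    have h2 : (2 * (n t : ℝ)) ^ α = 2 ^ α * (n t : ℝ) ^ α :=
      Real.mul_rpow (by norm_num) hnpos.le
    have hnpow : (0:ℝ) < (n t : ℝ) ^ α := Real.rpow_pos_of_pos hnpos _
    have hcpow : (0:ℝ) < ((cnt t - 1 : ℕ) : ℝ) ^ α := Real.rpow_pos_of_pos hcpos _
    have hdiv : (1:ℝ) / (n t : ℝ) ^ α ≤ 2 ^ α / ((cnt t - 1 : ℕ) : ℝ) ^ α := by
      rw [div_le_div_iff₀ hnpow hcpow]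
      rw [h2] at h1
      linarith
    have hrw : ((cnt t - 1 : ℕ) : ℝ) ^ (-α) = 1 / ((cnt t - 1 : ℕ) : ℝ) ^ α := by
      rw [Real.rpow_neg hcpos.le, one_div]
    rw [hrw]
    calc w (x t) / (n t : ℝ) ^ α = w (x t) * (1 / (n t : ℝ) ^ α) := by ring
      _ ≤ w (x t) * (2 ^ α / ((cnt t - 1 : ℕ) : ℝ) ^ α) :=
          mul_le_mul_of_nonneg_left hdiv (hw _)
      _ = 2 ^ α * (w (x t) * (1 / ((cnt t - 1 : ℕ) : ℝ) ^ α)) := by ring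
  -- Step 2: fiberwise decomposition
  have step2 : ∑ t ∈ A, w (x t) * ((cnt t - 1 : ℕ) : ℝ) ^ (-α)
      = ∑ s : X, ∑ t ∈ A.filter (fun t => x t = s),
          w s * ((cnt t - 1 : ℕ) : ℝ) ^ (-α) := by
    rw [← Finset.sum_fiberwise A (fun t => x t)
        (fun t => w (x t) * ((cnt t - 1 : ℕ) : ℝ) ^ (-α))]
    apply Finset.sum_congr rfl
    intro s _
    apply Finset.sum_congr rfl
    intro t ht
    rw [Finset.mem_filter] at ht
    rw [ht.2]
  -- Step 3: per-fiber bound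
  have step3 : ∀ s : X, ∑ t ∈ A.filter (fun t => x t = s), ((cnt t - 1 : ℕ) : ℝ) ^ (-α)
      ≤ ∑ k ∈ Finset.Icc 1 (Nv s - 1), ((k : ℕ) : ℝ) ^ (-α) := by
    intro s
    set B := A.filter (fun t => x t = s) with hB
    have hmemB : ∀ t ∈ B, t ∈ A ∧ x t = s := by
      intro t ht; rw [hB, Finset.mem_filter] at ht; exact ht
    -- injectivity of cnt · - 1 on B
    have hinj : ∀ t₁ ∈ B, ∀ t₂ ∈ B, cnt t₁ - 1 = cnt t₂ - 1 → t₁ = t₂ := by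
      have hmono : ∀ t₁ ∈ B, ∀ t₂ ∈ B, t₁ < t₂ → cnt t₁ < cnt t₂ := by
        intro t₁ ht₁ t₂ ht₂ hlt
        obtain ⟨ht₁A, hx₁⟩ := hmemB t₁ ht₁
        obtain ⟨ht₂A, hx₂⟩ := hmemB t₂ ht₂
        rw [hA, Finset.mem_filter, Finset.mem_Icc] at ht₁A ht₂A
        rw [hcnt t₁, hcnt t₂, hx₁, hx₂]
        apply Finset.card_lt_card
        constructor
        · exact Finset.filter_subset_filter _ (Finset.Icc_subset_Icc_right hlt.le)
        · intro hsub
          have ht₂mem : t₂ ∈ (Finset.Icc 1 t₂).filter (fun τ => x τ = s) := by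
            rw [Finset.mem_filter, Finset.mem_Icc]
            exact ⟨⟨ht₂A.1.1, le_rfl⟩, hx₂⟩
          have := hsub ht₂mem
          rw [Finset.mem_filter, Finset.mem_Icc] at this
          omega
      intro t₁ ht₁ t₂ ht₂ heq
      obtain ⟨ht₁A, _⟩ := hmemB t₁ ht₁
      obtain ⟨ht₂A, _⟩ := hmemB t₂ ht₂
      have h1 := (hfacts t₁ ht₁A).1
      have h2 := (hfacts t₂ ht₂A).1
      rcases lt_trichotomy t₁ t₂ with h | h | h
      · have := hmono t₁ ht₁ t₂ ht₂ h; omega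
      · exact h
      · have := hmono t₂ ht₂ t₁ ht₁ h; omega
    have himg : ∀ t ∈ B, cnt t - 1 ∈ Finset.Icc 1 (Nv s - 1) := by
      intro t ht
      obtain ⟨htA, hxs⟩ := hmemB t ht
      obtain ⟨h2, _, hcle, _⟩ := hfacts t htA
      rw [hxs] at hcle
      rw [Finset.mem_Icc]
      omega
    calc ∑ t ∈ B, ((cnt t - 1 : ℕ) : ℝ) ^ (-α)
        = ∑ k ∈ B.image (fun t => cnt t - 1), ((k : ℕ) : ℝ) ^ (-α) :=
          (Finset.sum_image (f := fun k : ℕ => ((k:ℝ)) ^ (-α)) (g := fun t => cnt t - 1) hinj).symm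
      _ ≤ ∑ k ∈ Finset.Icc 1 (Nv s - 1), ((k : ℕ) : ℝ) ^ (-α) := by
          apply Finset.sum_le_sum_of_subset_of_nonneg
          · intro k hk
            rw [Finset.mem_image] at hk
            obtain ⟨t, ht, rfl⟩ := hk
            exact himg t ht
          · intro k _ _
            positivity
  -- Step 4 & assembly
  have step4 : ∀ s : X, ∑ k ∈ Finset.Icc 1 (Nv s - 1), ((k : ℕ) : ℝ) ^ (-α)
      ≤ (Nv s : ℝ) ^ (1 - α) / (1 - α) := by
    intro s
    calc ∑ k ∈ Finset.Icc 1 (Nv s - 1), ((k : ℕ) : ℝ) ^ (-α)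
        ≤ ((Nv s - 1 : ℕ) : ℝ) ^ (1 - α) / (1 - α) := aux_sum_inv_rpow_le hα0 hα1 _
      _ ≤ (Nv s : ℝ) ^ (1 - α) / (1 - α) := by
          have hmono : ((Nv s - 1 : ℕ) : ℝ) ^ (1 - α) ≤ (Nv s : ℝ) ^ (1 - α) :=
            Real.rpow_le_rpow (Nat.cast_nonneg _) (by exact_mod_cast Nat.sub_le _ _) hp.le
          exact (div_le_div_iff_of_pos_right hp).mpr hmono
  -- Step 5: collapse to the support of Nv
  have step5 : ∑ s : X, ∑ t ∈ A.filter (fun t => x t = s),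
        w s * ((cnt t - 1 : ℕ) : ℝ) ^ (-α)
      ≤ ∑ s ∈ Finset.univ.filter (fun s : X => 1 ≤ Nv s),
          w s * ((Nv s : ℝ) ^ (1 - α) / (1 - α)) := by
    have hcollapse : ∑ s ∈ Finset.univ.filter (fun s : X => 1 ≤ Nv s),
          (∑ t ∈ A.filter (fun t => x t = s), w s * ((cnt t - 1 : ℕ) : ℝ) ^ (-α))
        = ∑ s : X, ∑ t ∈ A.filter (fun t => x t = s),
            w s * ((cnt t - 1 : ℕ) : ℝ) ^ (-α) := by
      apply Finset.sum_subset (Finset.filter_subset _ _)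
      intro s _ hs
      rw [Finset.mem_filter, not_and] at hs
      have hNv0 : Nv s = 0 := by
        by_contra hcon
        exact absurd (by omega : 1 ≤ Nv s) (hs (Finset.mem_univ s))
      have hempty : A.filter (fun t => x t = s) = ∅ := by
        apply Finset.eq_empty_of_forall_notMem
        intro t ht
        rw [Finset.mem_filter] at ht
        obtain ⟨_, _, hcle, _⟩ := hfacts t ht.1
        rw [ht.2] at hcle
        omega
      rw [hempty, Finset.sum_empty]
    rw [← hcollapse]
    apply Finset.sum_le_sum
    intro s _
    calc ∑ t ∈ A.filter (fun t => x t = s), w s * ((cnt t - 1 : ℕ) : ℝ) ^ (-α)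
        = w s * ∑ t ∈ A.filter (fun t => x t = s), ((cnt t - 1 : ℕ) : ℝ) ^ (-α) :=
          (Finset.mul_sum _ _ _).symm
      _ ≤ w s * ((Nv s : ℝ) ^ (1 - α) / (1 - α)) :=
          mul_le_mul_of_nonneg_left ((step3 s).trans (step4 s)) (hw s)
  -- assemble
  have h2pos : (0:ℝ) ≤ (2:ℝ) ^ α := (Real.rpow_pos_of_pos (by norm_num) α).le
  calc ∑ t ∈ A, w (x t) / (n t : ℝ) ^ α
      ≤ (2:ℝ) ^ α * ∑ t ∈ A, w (x t) * ((cnt t - 1 : ℕ) : ℝ) ^ (-α) := step1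
    _ = (2:ℝ) ^ α * ∑ s : X, ∑ t ∈ A.filter (fun t => x t = s),
          w s * ((cnt t - 1 : ℕ) : ℝ) ^ (-α) := by rw [step2]
    _ ≤ (2:ℝ) ^ α * ∑ s ∈ Finset.univ.filter (fun s : X => 1 ≤ Nv s),
          w s * ((Nv s : ℝ) ^ (1 - α) / (1 - α)) := by
        exact mul_le_mul_of_nonneg_left step5 h2pos
    _ = (2 : ℝ) ^ α / (1 - α)
          * ∑ s ∈ Finset.univ.filter (fun s : X => 1 ≤ Nv s),
              w s * (Nv s : ℝ) ^ (1 - α) := by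
        rw [Finset.mul_sum, Finset.mul_sum]
        apply Finset.sum_congr rfl
        intro s _
        field_simp
end

section
/- For every nonnegative weight function w : X → [0,∞), the stage-based visit counts satisfy ∑_{t ∈ {1,…,T}, n(t) > 0} w(x_t)/n(t) ≤ 2 · ∑_{x ∈ X, N(x) ≥ 1} w(x)·log(N(x)). -/
open Finset

lemma keylog (u : ℝ) (h0 : 0 ≤ u) (h2 : u ≤ 2) : u ≤ 2 * Real.log (1 + u) := by
  have hlog3 : (1:ℝ) ≤ Real.log 3 := by
    rw [Real.le_log_iff_exp_le (by norm_num : (0:ℝ) < 3)]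
    have := Real.exp_one_lt_d9
    linarith
  have hconc := strictConcaveOn_log_Ioi.concaveOn
  have h13 : (1:ℝ) ∈ Set.Ioi (0:ℝ) := by norm_num
  have h33 : (3:ℝ) ∈ Set.Ioi (0:ℝ) := by norm_num
  have ha : (0:ℝ) ≤ 1 - u/2 := by linarith
  have hb : (0:ℝ) ≤ u/2 := by linarith
  have hab : (1 - u/2) + u/2 = 1 := by ring
  have hkey := hconc.2 h13 h33 ha hb hab
  simp only [smul_eq_mul, Real.log_one, mul_zero, zero_add, mul_one] at hkey
  have harg : 1 - u/2 + u/2 * 3 = 1 + u := by ring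
  rw [harg] at hkey
  nlinarith [hkey, hlog3, hb]

lemma stage_phi_bound (H : ℕ) (hH : 1 ≤ H) (S : ℕ → ℕ)
    (hS0 : S 0 = 0) (hS1 : S 1 = H) (hmono : Monotone S)
    (hgrow : ∀ i : ℕ, 1 ≤ i → S (i+1) ≤ 3 * S i)
    (g : ℕ → ℕ)
    (hg : ∀ c j : ℕ, 1 ≤ j → S (j-1) < c → c ≤ S j → g c = S (j-1))
    (hex : ∀ c : ℕ, ∃ j, c ≤ S j) :
    ∀ N : ℕ, 1 ≤ N →
      ∑ c ∈ (Finset.Icc 1 N).filter (fun c => 0 < g c), (1:ℝ)/(g c) ≤ 2 * Real.log N := by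
  classical
  have key : ∀ K : ℕ, ∑ c ∈ (Finset.Icc 1 K).filter (fun c => 0 < g c), (1:ℝ)/(g c)
      = ∑ c ∈ Finset.Ioc 0 K, (if 0 < g c then (1:ℝ)/(g c) else 0) := by
    intro K
    rw [Finset.sum_filter, show Finset.Icc 1 K = Finset.Ioc 0 K from Finset.Icc_add_one_left_eq_Ioc 0 K]
  intro N
  induction N using Nat.strong_induction_on with
  | _ N ih =>
  intro hN
  have hexN := hex N
  set J := Nat.find hexN with hJdef
  have hJspec : N ≤ S J := Nat.find_spec hexN
  have hJ1 : 1 ≤ J := by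
    rcases Nat.eq_zero_or_pos J with h0 | h
    · exfalso; rw [h0, hS0] at hJspec; omega
    · exact h
  have hlogN : (0:ℝ) ≤ Real.log N := Real.log_nonneg (by exact_mod_cast hN)
  by_cases hJcase : J = 1
  · have hempty : (Finset.Icc 1 N).filter (fun c => 0 < g c) = ∅ := by
      apply Finset.filter_false_of_mem
      intro c hc
      simp only [Finset.mem_Icc] at hc
      have hgc : g c = S 0 := hg c 1 le_rfl (by rw [hS0]; omega)
        (le_trans hc.2 (by rw [← hJcase]; exact hJspec))
      rw [hgc, hS0]; omega
    rw [hempty]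
    simp only [Finset.sum_empty]
    linarith
  · have hJ2 : 2 ≤ J := by omega
    set M := S (J - 1) with hMdef
    have hMlt : M < N := by
      have := Nat.find_min hexN (m := J - 1) (by omega)
      omega
    have hM1 : 1 ≤ M := by
      have : S 1 ≤ S (J-1) := hmono (by omega)
      omega
    have hMpos : (0:ℝ) < M := by exact_mod_cast hM1
    have hNpos : (0:ℝ) < N := by exact_mod_cast hN
    have hN3M : N ≤ 3 * M := by
      have h1 : S ((J-1)+1) ≤ 3 * S (J-1) := hgrow (J-1) (by omega)
      have h2 : (J-1)+1 = J := by omega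
      rw [h2] at h1
      omega
    rw [key N, ← Finset.sum_Ioc_consecutive _ (Nat.zero_le M) hMlt.le]
    have hpiece2 : ∑ c ∈ Finset.Ioc M N, (if 0 < g c then (1:ℝ)/(g c) else 0)
        = ((N - M : ℕ) : ℝ) * (1/(M:ℝ)) := by
      rw [Finset.sum_congr rfl (fun c hc => ?_), Finset.sum_const, Nat.card_Ioc,
        nsmul_eq_mul]
      · simp only [Finset.mem_Ioc] at hc
        have hgc : g c = M := hg c J hJ1 hc.1 (le_trans hc.2 hJspec)
        rw [hgc, if_pos (by omega)]
    rw [hpiece2]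
    have hpiece1 : ∑ c ∈ Finset.Ioc 0 M, (if 0 < g c then (1:ℝ)/(g c) else 0)
        ≤ 2 * Real.log M := by
      rw [← key M]; exact ih M hMlt hM1
    have hcast : ((N - M : ℕ) : ℝ) = (N:ℝ) - M := by
      push_cast [Nat.cast_sub hMlt.le]; ring
    set u : ℝ := ((N:ℝ) - M)/M with hudef
    have hu0 : 0 ≤ u := by
      apply div_nonneg _ hMpos.le
      have : (M:ℝ) ≤ N := by exact_mod_cast hMlt.le
      linarith
    have hu2 : u ≤ 2 := by
      rw [hudef, div_le_iff₀ hMpos]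
      have : (N:ℝ) ≤ 3 * M := by exact_mod_cast hN3M
      linarith
    have hku := keylog u hu0 hu2
    have h1u : 1 + u = (N:ℝ)/M := by
      rw [hudef, add_div' _ _ _ hMpos.ne']; ring
    rw [h1u, Real.log_div (ne_of_gt hNpos) (ne_of_gt hMpos)] at hku
    have hueq : ((N - M : ℕ) : ℝ) * (1/(M:ℝ)) = u := by
      rw [hcast, hudef]; ring
    rw [hueq]
    linarith

/-- Lemma 4 (α = 1 case): weighted sum of `1/n(t)` over time steps, where `n(t)` is the
number of visits to `x_t` prior to its current stage, is bounded via log of visit counts. -/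
theorem stage_visit_sum_log_bound
    (H : ℕ) (hH : 1 ≤ H) (e : ℕ → ℕ)
    (he1 : e 1 = H)
    (herec : ∀ i : ℕ, 1 ≤ i → e (i + 1) = ⌊(1 + 1 / (H : ℝ)) * (e i : ℝ)⌋₊)
    (S : ℕ → ℕ) (hS : ∀ j : ℕ, S j = ∑ i ∈ Finset.Icc 1 j, e i)
    (X : Type*) [Fintype X] [DecidableEq X]
    (T : ℕ) (hT : 1 ≤ T) (x : ℕ → X)
    (cnt : ℕ → ℕ)
    (hcnt : ∀ t : ℕ, cnt t = ((Finset.Icc 1 t).filter (fun τ => x τ = x t)).card)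
    (Nv : X → ℕ)
    (hNv : ∀ s : X, Nv s = ((Finset.Icc 1 T).filter (fun t => x t = s)).card)
    (j : ℕ → ℕ)
    (hj : ∀ t ∈ Finset.Icc 1 T, 1 ≤ j t ∧ S (j t - 1) < cnt t ∧ cnt t ≤ S (j t))
    (n : ℕ → ℕ) (hn : ∀ t : ℕ, n t = S (j t - 1))
    (w : X → ℝ) (hw : ∀ s : X, 0 ≤ w s) :
    ∑ t ∈ (Finset.Icc 1 T).filter (fun t => 0 < n t), w (x t) / (n t : ℝ)
      ≤ 2 * ∑ s ∈ Finset.univ.filter (fun s : X => 1 ≤ Nv s), w s * Real.log (Nv s) := by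
  classical
  have hHpos : (0:ℝ) < H := by exact_mod_cast hH
  -- facts about e
  have heH : ∀ i : ℕ, 1 ≤ i → H ≤ e i := by
    intro i hi
    induction i with
    | zero => omega
    | succ k ihk =>
      rcases Nat.eq_zero_or_pos k with h0 | hk1
      · subst h0; rw [he1]
      · have hek := ihk hk1
        rw [herec k hk1]
        have hle : (e k : ℝ) ≤ (1 + 1/(H:ℝ)) * e k := by
          have h1 : (0:ℝ) ≤ 1/(H:ℝ) := by positivity
          nlinarith [Nat.cast_nonneg (α := ℝ) (e k)]
        have h2 : e k ≤ ⌊(1 + 1/(H:ℝ)) * (e k : ℝ)⌋₊ := Nat.le_floor hle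
        omega
  have hee : ∀ i : ℕ, 1 ≤ i → e (i+1) ≤ 2 * e i := by
    intro i hi
    rw [herec i hi]
    have h1 : (1 + 1/(H:ℝ)) * (e i : ℝ) ≤ 2 * (e i : ℝ) := by
      have hinv : 1/(H:ℝ) ≤ 1 := by
        rw [div_le_one hHpos]; exact_mod_cast hH
      nlinarith [Nat.cast_nonneg (α := ℝ) (e i)]
    have h2 : (⌊(1 + 1/(H:ℝ)) * (e i : ℝ)⌋₊ : ℝ) ≤ 2 * (e i : ℝ) :=
      le_trans (Nat.floor_le (by positivity)) h1
    exact_mod_cast h2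
  -- facts about S
  have hS0 : S 0 = 0 := by rw [hS]; simp
  have hS1 : S 1 = H := by rw [hS]; simp [he1]
  have hmono : Monotone S := by
    intro a b hab
    rw [hS, hS]
    exact Finset.sum_le_sum_of_subset (Finset.Icc_subset_Icc_right hab)
  have heS : ∀ i : ℕ, 1 ≤ i → e i ≤ S i := by
    intro i hi
    rw [hS i]
    exact Finset.single_le_sum (f := e) (fun k _ => Nat.zero_le _)
      (Finset.mem_Icc.mpr ⟨hi, le_rfl⟩)
  have hgrow : ∀ i : ℕ, 1 ≤ i → S (i+1) ≤ 3 * S i := by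
    intro i hi
    have hsum : S (i+1) = S i + e (i+1) := by
      rw [hS, hS, Finset.sum_Icc_succ_top (by omega : 1 ≤ i + 1)]
    have h1 := hee i hi
    have h2 := heS i hi
    omega
  have hexc : ∀ c : ℕ, ∃ k, c ≤ S k := by
    intro c
    refine ⟨c, ?_⟩
    have h1 : (Finset.Icc 1 c).card • 1 ≤ ∑ i ∈ Finset.Icc 1 c, e i :=
      Finset.card_nsmul_le_sum _ _ _ (fun i hi => by
        have := heH i (Finset.mem_Icc.mp hi).1; omega)
    rw [Nat.card_Icc, smul_eq_mul] at h1
    rw [hS]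
    omega
  -- stage function
  set g : ℕ → ℕ := fun c => S (Nat.find (hexc c) - 1) with hgdef
  have hg : ∀ c k : ℕ, 1 ≤ k → S (k-1) < c → c ≤ S k → g c = S (k-1) := by
    intro c k hk h1 h2
    have hle : Nat.find (hexc c) ≤ k := Nat.find_le h2
    have hnlt : ¬ (Nat.find (hexc c) < k) := by
      intro hlt
      have h3 : Nat.find (hexc c) ≤ k - 1 := by omega
      have h4 : S (Nat.find (hexc c)) ≤ S (k-1) := hmono h3
      have h5 : c ≤ S (Nat.find (hexc c)) := Nat.find_spec (hexc c)
      omega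
    have heq : Nat.find (hexc c) = k := by omega
    simp only [hgdef]
    rw [heq]
  have hng : ∀ t ∈ Finset.Icc 1 T, n t = g (cnt t) := by
    intro t ht
    obtain ⟨h1, h2, h3⟩ := hj t ht
    rw [hn, hg (cnt t) (j t) h1 h2 h3]
  -- fiberwise decomposition
  set B := (Finset.Icc 1 T).filter (fun t => 0 < n t) with hBdef
  have step1 : ∑ t ∈ B, w (x t) / (n t : ℝ)
      = ∑ s ∈ Finset.univ, ∑ t ∈ B.filter (fun t => x t = s), w (x t) / (n t : ℝ) :=
    (Finset.sum_fiberwise_of_maps_to (fun t _ => Finset.mem_univ (x t)) _).symm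
  have hper : ∀ s : X, ∑ t ∈ B.filter (fun t => x t = s), w (x t) / (n t : ℝ)
      ≤ if 1 ≤ Nv s then 2 * (w s * Real.log (Nv s)) else 0 := by
    intro s
    set F := (Finset.Icc 1 T).filter (fun t => x t = s) with hFdef
    have hcard : F.card = Nv s := (hNv s).symm
    have hBF : B.filter (fun t => x t = s) = F.filter (fun t => 0 < n t) := by
      ext t
      simp only [hBdef, hFdef, Finset.mem_filter]
      tauto
    rw [hBF]
    by_cases hNs : 1 ≤ Nv s
    · rw [if_pos hNs]
      have hmapsto : ∀ t ∈ F, cnt t ∈ Finset.Icc 1 (Nv s) := by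
        intro t htF
        have ht' : t ∈ Finset.Icc 1 T := (Finset.mem_filter.mp htF).1
        have hxts : x t = s := (Finset.mem_filter.mp htF).2
        rw [Finset.mem_Icc]
        constructor
        · rw [hcnt t]
          have htm : t ∈ (Finset.Icc 1 t).filter (fun τ => x τ = x t) :=
            Finset.mem_filter.mpr ⟨Finset.mem_Icc.mpr ⟨(Finset.mem_Icc.mp ht').1, le_rfl⟩, rfl⟩
          exact Finset.card_pos.mpr ⟨t, htm⟩
        · rw [hcnt t, hNv s]
          simp only [hxts]
          exact Finset.card_le_card
            (Finset.monotone_filter_left _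
              (Finset.Icc_subset_Icc_right (Finset.mem_Icc.mp ht').2))
      have hmonocnt : ∀ t1 ∈ F, ∀ t2 ∈ F, t1 < t2 → cnt t1 < cnt t2 := by
        intro t1 h1 t2 h2 hlt
        have hx1 : x t1 = s := (Finset.mem_filter.mp h1).2
        have hx2 : x t2 = s := (Finset.mem_filter.mp h2).2
        have h2T : t2 ∈ Finset.Icc 1 T := (Finset.mem_filter.mp h2).1
        rw [hcnt t1, hcnt t2]
        simp only [hx1, hx2]
        apply Finset.card_lt_card
        constructor
        · exact Finset.monotone_filter_left _ (Finset.Icc_subset_Icc_right hlt.le)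
        · intro hsub
          have ht2mem : t2 ∈ (Finset.Icc 1 t2).filter (fun τ => x τ = s) :=
            Finset.mem_filter.mpr
              ⟨Finset.mem_Icc.mpr ⟨(Finset.mem_Icc.mp h2T).1, le_rfl⟩, hx2⟩
          have := hsub ht2mem
          simp only [Finset.mem_filter, Finset.mem_Icc] at this
          omega
      have hinj : ∀ t1 ∈ F, ∀ t2 ∈ F, cnt t1 = cnt t2 → t1 = t2 := by
        intro t1 h1 t2 h2 heq
        rcases lt_trichotomy t1 t2 with h | h | h
        · exact absurd heq (ne_of_lt (hmonocnt _ h1 _ h2 h))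
        · exact h
        · exact absurd heq.symm (ne_of_lt (hmonocnt _ h2 _ h1 h))
      have hsurj : ∀ c ∈ Finset.Icc 1 (Nv s), ∃ t, ∃ _ : t ∈ F, cnt t = c := by
        have hs := Finset.surj_on_of_inj_on_of_card_le (s := F) (t := Finset.Icc 1 (Nv s))
          (fun t _ => cnt t) (fun t ht => hmapsto t ht)
          (fun a₁ a₂ ha₁ ha₂ hh => hinj a₁ ha₁ a₂ ha₂ hh)
          (by rw [Nat.card_Icc, hcard]; omega)
        intro c hc
        obtain ⟨a, ha, hac⟩ := hs c hc
        exact ⟨a, ha, hac.symm⟩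
      have hsum : ∑ t ∈ F.filter (fun t => 0 < n t), w (x t) / (n t : ℝ)
          = ∑ c ∈ (Finset.Icc 1 (Nv s)).filter (fun c => 0 < g c), w s * ((1:ℝ)/(g c)) := by
        apply Finset.sum_bij (i := fun t _ => cnt t)
        · intro t ht
          obtain ⟨htF, hnt⟩ := Finset.mem_filter.mp ht
          refine Finset.mem_filter.mpr ⟨hmapsto t htF, ?_⟩
          have := hng t (Finset.mem_filter.mp htF).1
          omega
        · intro a₁ ha₁ a₂ ha₂ hh
          exact hinj a₁ (Finset.mem_filter.mp ha₁).1 a₂ (Finset.mem_filter.mp ha₂).1 hh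
        · intro c hc
          obtain ⟨hc1, hc2⟩ := Finset.mem_filter.mp hc
          obtain ⟨t, htF, hct⟩ := hsurj c hc1
          refine ⟨t, Finset.mem_filter.mpr ⟨htF, ?_⟩, hct⟩
          rw [hng t (Finset.mem_filter.mp htF).1, hct]
          exact hc2
        · intro t ht
          have htF := (Finset.mem_filter.mp ht).1
          rw [(Finset.mem_filter.mp htF).2, hng t (Finset.mem_filter.mp htF).1,
            div_eq_mul_one_div]
      rw [hsum, ← Finset.mul_sum]
      have hphi := stage_phi_bound H hH S hS0 hS1 hmono hgrow g hg hexc (Nv s) hNs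
      calc w s * ∑ c ∈ (Finset.Icc 1 (Nv s)).filter (fun c => 0 < g c), (1:ℝ)/(g c)
          ≤ w s * (2 * Real.log (Nv s)) := mul_le_mul_of_nonneg_left hphi (hw s)
        _ = 2 * (w s * Real.log (Nv s)) := by ring
    · rw [if_neg hNs]
      have hFe : F = ∅ := Finset.card_eq_zero.mp (by omega)
      rw [hFe]
      simp
  calc ∑ t ∈ B, w (x t) / (n t : ℝ)
      = ∑ s ∈ Finset.univ, ∑ t ∈ B.filter (fun t => x t = s), w (x t) / (n t : ℝ) := step1
    _ ≤ ∑ s ∈ Finset.univ, (if 1 ≤ Nv s then 2 * (w s * Real.log (Nv s)) else 0) :=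
        Finset.sum_le_sum (fun s _ => hper s)
    _ = ∑ s ∈ Finset.univ.filter (fun s : X => 1 ≤ Nv s), 2 * (w s * Real.log (Nv s)) :=
        (Finset.sum_filter _ _).symm
    _ = 2 * ∑ s ∈ Finset.univ.filter (fun s : X => 1 ≤ Nv s), w s * Real.log (Nv s) := by
        rw [Finset.mul_sum]
end

section
/- For every α ∈ (0,1) and every nonnegative weight function w : X → [0,∞), the previous-stage lengths satisfy ∑_{t ∈ {1,…,T}, ě(t) > 0} w(x_t)/ě(t)^α ≤ (2^{2α}·H^α/(1−α)) · ∑_{x ∈ X, N(x) ≥ 1} w(x)·N(x)^{1−α}. -/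
private lemma sum_inv_rpow_le {α : ℝ} (h0 : 0 < α) (h1 : α < 1) :
    ∀ N : ℕ, ∑ c ∈ Finset.Icc 1 N, ((c : ℝ) ^ α)⁻¹ ≤ (N : ℝ) ^ (1 - α) / (1 - α) := by
  have h1' : (0:ℝ) < 1 - α := by linarith
  intro N
  induction N with
  | zero => simp [Real.zero_rpow (by linarith : (1:ℝ) - α ≠ 0)]
  | succ n ih =>
    rw [Finset.sum_Icc_succ_top (by omega : 1 ≤ n + 1)]
    have hn1 : (0:ℝ) < (n:ℝ) + 1 := by positivity
    have hpow_pos : (0:ℝ) < ((n:ℝ) + 1) ^ α := Real.rpow_pos_of_pos hn1 α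
    have hamgm : (n:ℝ) ^ (1-α) * ((n:ℝ)+1) ^ α ≤ (n:ℝ) + α := by
      have h := Real.geom_mean_le_arith_mean2_weighted
        (by linarith : (0:ℝ) ≤ 1 - α) (le_of_lt h0)
        (Nat.cast_nonneg n) (by linarith : (0:ℝ) ≤ (n:ℝ)+1) (by ring)
      nlinarith [h]
    have hsplit : ((n:ℝ)+1) ^ (1-α) = ((n:ℝ)+1) * (((n:ℝ)+1) ^ α)⁻¹ := by
      rw [Real.rpow_sub hn1, Real.rpow_one, div_eq_mul_inv]
    have hmain : (n:ℝ) ^ (1-α) + (1-α) * (((n:ℝ)+1) ^ α)⁻¹ ≤ ((n:ℝ)+1) ^ (1-α) := by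
      have h2 : (n:ℝ) ^ (1-α) ≤ ((n:ℝ) + α) * (((n:ℝ)+1) ^ α)⁻¹ := by
        rw [← le_div_iff₀ hpow_pos] at hamgm
        rwa [div_eq_mul_inv] at hamgm
      rw [hsplit]; nlinarith [h2]
    have hc : (((n+1:ℕ)):ℝ) = (n:ℝ) + 1 := by push_cast; ring
    rw [hc]
    have ih' : (∑ c ∈ Finset.Icc 1 n, ((c : ℝ) ^ α)⁻¹) * (1-α) ≤ (n:ℝ) ^ (1-α) :=
      (le_div_iff₀ h1').mp ih
    rw [le_div_iff₀ h1']
    nlinarith [ih', hmain]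

set_option maxHeartbeats 1000000 in
/-- Lemma 4 (second bound): weighted sum of `1/eCheck(t)^α` over time steps, where `eCheck(t)` is the
length of the stage immediately before the current stage of `x_t`. -/
theorem prev_stage_sum_rpow_bound
    (H : ℕ) (hH : 1 ≤ H) (e : ℕ → ℕ)
    (he1 : e 1 = H)
    (herec : ∀ i : ℕ, 1 ≤ i → e (i + 1) = ⌊(1 + 1 / (H : ℝ)) * (e i : ℝ)⌋₊)
    (S : ℕ → ℕ) (hS : ∀ j : ℕ, S j = ∑ i ∈ Finset.Icc 1 j, e i)
    (X : Type*) [Fintype X] [DecidableEq X]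
    (T : ℕ) (hT : 1 ≤ T) (x : ℕ → X)
    (cnt : ℕ → ℕ)
    (hcnt : ∀ t : ℕ, cnt t = ((Finset.Icc 1 t).filter (fun τ => x τ = x t)).card)
    (Nv : X → ℕ)
    (hNv : ∀ s : X, Nv s = ((Finset.Icc 1 T).filter (fun t => x t = s)).card)
    (j : ℕ → ℕ)
    (hj : ∀ t ∈ Finset.Icc 1 T, 1 ≤ j t ∧ S (j t - 1) < cnt t ∧ cnt t ≤ S (j t))
    (eCheck : ℕ → ℕ) (heCheck : ∀ t : ℕ, eCheck t = if 2 ≤ j t then e (j t - 1) else 0)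
    (w : X → ℝ) (hw : ∀ s : X, 0 ≤ w s)
    (α : ℝ) (hα : α ∈ Set.Ioo (0 : ℝ) 1) :
    ∑ t ∈ (Finset.Icc 1 T).filter (fun t => 0 < eCheck t), w (x t) / (eCheck t : ℝ) ^ α
      ≤ (2 : ℝ) ^ (2 * α) * (H : ℝ) ^ α / (1 - α)
          * ∑ s ∈ Finset.univ.filter (fun s : X => 1 ≤ Nv s), w s * (Nv s : ℝ) ^ (1 - α) := by
  obtain ⟨hα0, hα1⟩ := hα
  have hH0 : (0:ℝ) < H := by exact_mod_cast hH
  -- basic facts about e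
  have heH : ∀ k, 1 ≤ k → H ≤ e k := by
    intro k hk
    induction k, hk using Nat.le_induction with
    | base => omega
    | succ k hk ih =>
      rw [herec k hk]
      refine le_trans ih (Nat.le_floor ?_)
      have : (1:ℝ) ≤ 1 + 1/(H:ℝ) := by
        have := one_div_nonneg.2 hH0.le; linarith
      nlinarith [Nat.cast_nonneg (α := ℝ) (e k)]
  have hdouble : ∀ k, 1 ≤ k → e (k+1) ≤ 2 * e k := by
    intro k hk
    rw [herec k hk]
    have h2 : (1 + 1/(H:ℝ)) * (e k : ℝ) ≤ ((2 * e k : ℕ) : ℝ) := by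
      push_cast
      have : 1/(H:ℝ) ≤ 1 := by rw [div_le_one hH0]; exact_mod_cast hH
      nlinarith [Nat.cast_nonneg (α := ℝ) (e k)]
    calc ⌊(1 + 1/(H:ℝ)) * (e k : ℝ)⌋₊ ≤ ⌊((2 * e k : ℕ) : ℝ)⌋₊ := Nat.floor_le_floor h2
      _ = 2 * e k := Nat.floor_natCast _
  have hE3 : ∀ k, 1 ≤ k → (H+1) * e k + 1 ≤ H * e (k+1) + H := by
    intro k hk
    have hfl : (1 + 1/(H:ℝ)) * (e k : ℝ) < e (k+1) + 1 := by
      rw [herec k hk]; exact Nat.lt_floor_add_one _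
    have : ((H:ℝ)+1) * (e k : ℝ) < H * e (k+1) + H := by
      have h0 : (H:ℝ) ≠ 0 := ne_of_gt hH0
      have := mul_lt_mul_of_pos_left hfl hH0
      field_simp at this ⊢
      nlinarith [this]
    exact_mod_cast this
  have hemono : ∀ k, 1 ≤ k → e k < e (k+1) := by
    intro k hk
    have h1 := hE3 k hk
    have h2 := heH k hk
    have : H * e k < H * e (k+1) := by nlinarith
    exact Nat.lt_of_mul_lt_mul_left this
  have hS1 : S 1 = H := by simp [hS, he1]
  have hSrec : ∀ k, 1 ≤ k → S (k+1) = S k + e (k+1) := by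
    intro k hk
    rw [hS, hS, Finset.sum_Icc_succ_top (by omega : 1 ≤ k + 1)]
  -- the key invariant: S k ≤ 2 H e k
  have hSle : ∀ k, 1 ≤ k → (S k : ℤ) ≤ 2 * H * e k := by
    have inv : ∀ k, 1 ≤ k →
        (H:ℤ) * (H-1) * (max 0 (2*H-1-(e k:ℤ))) * ((max 0 (2*H-1-(e k:ℤ))) + 1)
          ≤ 2 * H^2 * (2 * H * e k - S k) := by
      intro k hk
      induction k, hk using Nat.le_induction with
      | base =>
        rw [he1, hS1]
        have hH' : (1:ℤ) ≤ H := by exact_mod_cast hH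
        have hmax : max 0 (2*(H:ℤ)-1-H) = (H:ℤ) - 1 := by
          rw [max_eq_right]; · ring_nf
          · linarith
        rw [hmax]
        have hsq : ((H:ℤ)-1)*((H:ℤ)-1) ≤ 2*(H:ℤ)*H - H := by nlinarith
        have hHH2 : (0:ℤ) ≤ (H:ℤ)*H := by positivity
        nlinarith [mul_le_mul_of_nonneg_left hsq hHH2,
          mul_nonneg (mul_nonneg (by linarith : (0:ℤ) ≤ (H:ℤ)) hHH2)
            (by linarith : (0:ℤ) ≤ 2*(H:ℤ)-1)]
      | succ k hk ih =>
        have hH' : (1:ℤ) ≤ H := by exact_mod_cast hH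
        have f1 : ((H:ℤ)+1) * e k + 1 ≤ H * e (k+1) + H := by exact_mod_cast hE3 k hk
        have f2 : (e k : ℤ) + 1 ≤ e (k+1) := by exact_mod_cast hemono k hk
        have f3 : (H:ℤ) ≤ e k := by exact_mod_cast heH k hk
        have f4 : (S (k+1) : ℤ) = S k + e (k+1) := by exact_mod_cast hSrec k hk
        set a : ℤ := (e k : ℤ) with ha
        set b : ℤ := (e (k+1) : ℤ) with hb
        set Sk : ℤ := (S k : ℤ) with hSk
        rw [f4]
        -- key: H * ((2H-1) b - 2 H a) ≥ (H-1)(a - (2H-1))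
        have hkey : (H:ℤ) * ((2*H-1)*b - 2*H*a) ≥ (H-1)*(a - (2*H-1)) := by
          nlinarith [mul_le_mul_of_nonneg_left f1 (by linarith : (0:ℤ) ≤ 2*H-1)]
        set m : ℤ := max 0 (2*(H:ℤ)-1-a) with hm
        set m' : ℤ := max 0 (2*(H:ℤ)-1-b) with hm'
        have hq : m' * (m' + 1) ≤ m * (m+1) + 2*(a - (2*H-1)) := by
          rcases le_or_gt (2*(H:ℤ)-1-a) 0 with hμ | hμ
          · have hm0 : m = 0 := by rw [hm, max_eq_left hμ]
            have hm'0 : m' = 0 := by rw [hm', max_eq_left (by linarith)]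
            rw [hm0, hm'0]; linarith
          · have hm0 : m = 2*(H:ℤ)-1-a := by rw [hm, max_eq_right hμ.le]
            rcases le_or_gt (2*(H:ℤ)-1-b) 0 with hν | hν
            · have hm'0 : m' = 0 := by rw [hm', max_eq_left hν]
              rw [hm'0, hm0]
              nlinarith [mul_nonneg (by linarith : (0:ℤ) ≤ 2*H-1-a)
                (by linarith : (0:ℤ) ≤ 2*H-1-a-1)]
            · have hm'0 : m' = 2*(H:ℤ)-1-b := by rw [hm', max_eq_right hν.le]
              rw [hm'0, hm0]
              have h5 : 2*(H:ℤ)-1-b ≤ (2*H-1-a) - 1 := by linarith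
              have h6 : (2*(H:ℤ)-1-b) * (2*(H:ℤ)-1-b+1) ≤ ((2*H-1-a)-1) * (2*H-1-a) :=
                mul_le_mul h5 (by linarith) (by linarith) (by linarith)
              nlinarith [h6]
        have hkey2 : 2*(H:ℤ)*((H-1)*(a-(2*H-1))) ≤ 2*H*(H*((2*H-1)*b-2*H*a)) :=
          mul_le_mul_of_nonneg_left hkey (by linarith : (0:ℤ) ≤ 2*H)
        have hcomb : (H:ℤ)*(H-1)*(m'*(m'+1)) ≤ H*(H-1)*(m*(m+1) + 2*(a-(2*H-1))) :=
          mul_le_mul_of_nonneg_left hq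
            (mul_nonneg (by linarith : (0:ℤ) ≤ (H:ℤ)) (by linarith : (0:ℤ) ≤ (H:ℤ)-1))
        linarith [ih, hkey2, hcomb]
    intro k hk
    have h1 := inv k hk
    have hH' : (1:ℤ) ≤ H := by exact_mod_cast hH
    have hmnn : (0:ℤ) ≤ max 0 (2*H-1-(e k:ℤ)) := le_max_left _ _
    have h2 : (0:ℤ) ≤ (H:ℤ) * ((H:ℤ) - 1) * (max 0 (2*H-1-(e k:ℤ)))
        * ((max 0 (2*H-1-(e k:ℤ))) + 1) :=
      mul_nonneg (mul_nonneg (mul_nonneg (by linarith) (by linarith)) hmnn)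
        (by linarith)
    have hpos : (0:ℤ) < 2*(H:ℤ)^2 := by positivity
    have h4 : (0:ℤ) ≤ 2*H*(e k:ℤ) - S k :=
      le_of_mul_le_mul_left (by linarith [le_trans h2 h1] :
        2*(H:ℤ)^2 * 0 ≤ 2*(H:ℤ)^2 * (2*H*(e k:ℤ) - S k)) hpos
    linarith
  have hS4 : ∀ jj, 2 ≤ jj → S jj ≤ 4 * H * e (jj - 1) := by
    intro jj hjj
    obtain ⟨k, rfl⟩ : ∃ k, jj = k + 1 := ⟨jj - 1, by omega⟩
    have hk : 1 ≤ k := by omega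
    have h1 : (S k : ℤ) ≤ 2 * H * e k := hSle k hk
    have h2 := hdouble k hk
    have h3 := hSrec k hk
    have : (S (k+1) : ℤ) ≤ 4 * H * e k := by
      have h2' : (e (k+1) : ℤ) ≤ 2 * e k := by exact_mod_cast h2
      have h3' : (S (k+1) : ℤ) = S k + e (k+1) := by exact_mod_cast h3
      have hH' : (1:ℤ) ≤ H := by exact_mod_cast hH
      have : (0:ℤ) ≤ e k := by positivity
      nlinarith
    have := this
    simp only [Nat.add_sub_cancel]
    exact_mod_cast this
  -- counting facts
  have hcnt1 : ∀ t ∈ Finset.Icc 1 T, 1 ≤ cnt t := by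
    intro t ht
    rw [hcnt]
    refine Finset.card_pos.mpr ⟨t, ?_⟩
    simp only [Finset.mem_Icc] at ht
    simp only [Finset.mem_filter, Finset.mem_Icc]
    exact ⟨⟨ht.1, le_refl t⟩, trivial⟩
  have hcntNv : ∀ t ∈ Finset.Icc 1 T, cnt t ≤ Nv (x t) := by
    intro t ht
    rw [hcnt, hNv]
    apply Finset.card_le_card
    intro τ hτ
    simp only [Finset.mem_Icc] at ht
    simp only [Finset.mem_filter, Finset.mem_Icc] at hτ ⊢
    exact ⟨⟨hτ.1.1, le_trans hτ.1.2 ht.2⟩, hτ.2⟩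
  have hcnt_mono : ∀ t t', 1 ≤ t → t < t' → x t = x t' → cnt t < cnt t' := by
    intro t t' h1t htt' hxx
    rw [hcnt, hcnt]
    apply Finset.card_lt_card
    rw [Finset.ssubset_iff_of_subset]
    · refine ⟨t', ?_, ?_⟩
      · simp only [Finset.mem_filter, Finset.mem_Icc]
        exact ⟨⟨by omega, le_refl t'⟩, trivial⟩
      · simp only [Finset.mem_filter, Finset.mem_Icc]
        intro h
        omega
    · intro τ hτ
      simp only [Finset.mem_filter, Finset.mem_Icc] at hτ ⊢
      exact ⟨⟨hτ.1.1, by omega⟩, hτ.2.trans hxx⟩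
  -- fiberwise sum bound
  have hfiber : ∀ s : X,
      ∑ t ∈ (Finset.Icc 1 T).filter (fun t => x t = s), ((cnt t : ℝ) ^ α)⁻¹
        ≤ ∑ c ∈ Finset.Icc 1 (Nv s), ((c : ℝ) ^ α)⁻¹ := by
    intro s
    have hinj : ∀ t1 ∈ (Finset.Icc 1 T).filter (fun t => x t = s),
        ∀ t2 ∈ (Finset.Icc 1 T).filter (fun t => x t = s), cnt t1 = cnt t2 → t1 = t2 := by
      intro t1 h1 t2 h2 hc
      simp only [Finset.mem_filter, Finset.mem_Icc] at h1 h2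
      rcases lt_trichotomy t1 t2 with h | h | h
      · exact absurd hc (ne_of_lt (hcnt_mono t1 t2 h1.1.1 h (h1.2.trans h2.2.symm)))
      · exact h
      · exact absurd hc.symm (ne_of_lt (hcnt_mono t2 t1 h2.1.1 h (h2.2.trans h1.2.symm)))
    calc ∑ t ∈ (Finset.Icc 1 T).filter (fun t => x t = s), ((cnt t : ℝ) ^ α)⁻¹
        = ∑ c ∈ ((Finset.Icc 1 T).filter (fun t => x t = s)).image cnt, ((c : ℝ) ^ α)⁻¹ := by
          rw [Finset.sum_image hinj]
      _ ≤ ∑ c ∈ Finset.Icc 1 (Nv s), ((c : ℝ) ^ α)⁻¹ := by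
          apply Finset.sum_le_sum_of_subset_of_nonneg
          · intro c hc
            rw [Finset.mem_image] at hc
            obtain ⟨t, ht, rfl⟩ := hc
            have ht' := Finset.mem_filter.1 ht
            rw [Finset.mem_Icc]
            have h2 := hcntNv t ht'.1
            rw [ht'.2] at h2
            exact ⟨hcnt1 t ht'.1, h2⟩
          · intro c _ _
            positivity
  -- per-term bound
  set K : ℝ := ((4 * H : ℕ) : ℝ) ^ α with hK
  have hKpos : 0 < K := by
    rw [hK]
    apply Real.rpow_pos_of_pos
    push_cast
    nlinarith [hH0]
  have hterm : ∀ t ∈ (Finset.Icc 1 T).filter (fun t => 0 < eCheck t),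
      w (x t) / (eCheck t : ℝ) ^ α ≤ K * (w (x t) * ((cnt t : ℝ) ^ α)⁻¹) := by
    intro t ht
    rw [Finset.mem_filter] at ht
    obtain ⟨htT, hec⟩ := ht
    obtain ⟨hj1, hlt, hle⟩ := hj t htT
    have hj2 : 2 ≤ j t := by
      by_contra h
      rw [heCheck t, if_neg h] at hec
      exact absurd hec (lt_irrefl 0)
    have hecE : eCheck t = e (j t - 1) := by rw [heCheck t, if_pos hj2]
    have hcle : cnt t ≤ 4 * H * eCheck t := by
      rw [hecE]
      exact le_trans hle (hS4 (j t) hj2)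
    have hc1 : 1 ≤ cnt t := hcnt1 t htT
    have hEpos : (0:ℝ) < (eCheck t : ℝ) := by exact_mod_cast hec
    have hCpos : (0:ℝ) < (cnt t : ℝ) := by exact_mod_cast hc1
    have hrp : ((cnt t : ℝ)) ^ α ≤ K * (eCheck t : ℝ) ^ α := by
      have h1 : ((cnt t : ℝ)) ≤ ((4 * H : ℕ) : ℝ) * (eCheck t : ℝ) := by
        exact_mod_cast hcle
      calc ((cnt t : ℝ)) ^ α ≤ (((4 * H : ℕ) : ℝ) * (eCheck t : ℝ)) ^ α :=
            Real.rpow_le_rpow hCpos.le h1 hα0.le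
        _ = K * (eCheck t : ℝ) ^ α := by
            rw [Real.mul_rpow (Nat.cast_nonneg _) hEpos.le]
    have hEp : (0:ℝ) < (eCheck t : ℝ) ^ α := Real.rpow_pos_of_pos hEpos α
    have hCp : (0:ℝ) < (cnt t : ℝ) ^ α := Real.rpow_pos_of_pos hCpos α
    have hinv : ((eCheck t : ℝ) ^ α)⁻¹ ≤ K * ((cnt t : ℝ) ^ α)⁻¹ := by
      rw [show K * ((cnt t : ℝ) ^ α)⁻¹ = K / (cnt t : ℝ) ^ α from (div_eq_mul_inv _ _).symm,
        inv_eq_one_div, div_le_div_iff₀ hEp hCp, one_mul]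
      linarith [hrp]
    calc w (x t) / (eCheck t : ℝ) ^ α = w (x t) * ((eCheck t : ℝ) ^ α)⁻¹ :=
          div_eq_mul_inv _ _
      _ ≤ w (x t) * (K * ((cnt t : ℝ) ^ α)⁻¹) := mul_le_mul_of_nonneg_left hinv (hw _)
      _ = K * (w (x t) * ((cnt t : ℝ) ^ α)⁻¹) := by ring
  -- main chain
  have h1mα : (0:ℝ) < 1 - α := by linarith
  have main : ∑ t ∈ (Finset.Icc 1 T).filter (fun t => 0 < eCheck t),
      w (x t) / (eCheck t : ℝ) ^ α
      ≤ K * ∑ s : X, w s * ((Nv s : ℝ) ^ (1 - α) / (1 - α)) := by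
    calc ∑ t ∈ (Finset.Icc 1 T).filter (fun t => 0 < eCheck t),
          w (x t) / (eCheck t : ℝ) ^ α
        ≤ ∑ t ∈ (Finset.Icc 1 T).filter (fun t => 0 < eCheck t),
            K * (w (x t) * ((cnt t : ℝ) ^ α)⁻¹) := Finset.sum_le_sum hterm
      _ ≤ ∑ t ∈ Finset.Icc 1 T, K * (w (x t) * ((cnt t : ℝ) ^ α)⁻¹) := by
          apply Finset.sum_le_sum_of_subset_of_nonneg (Finset.filter_subset _ _)
          intro t _ _
          have : (0:ℝ) ≤ ((cnt t : ℝ) ^ α)⁻¹ := by positivity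
          exact mul_nonneg hKpos.le (mul_nonneg (hw _) this)
      _ = K * ∑ t ∈ Finset.Icc 1 T, w (x t) * ((cnt t : ℝ) ^ α)⁻¹ :=
          (Finset.mul_sum _ _ _).symm
      _ = K * ∑ s : X, ∑ t ∈ (Finset.Icc 1 T).filter (fun t => x t = s),
            w (x t) * ((cnt t : ℝ) ^ α)⁻¹ := by
          rw [Finset.sum_fiberwise]
      _ = K * ∑ s : X, w s * ∑ t ∈ (Finset.Icc 1 T).filter (fun t => x t = s),
            ((cnt t : ℝ) ^ α)⁻¹ := by
          congr 1
          apply Finset.sum_congr rfl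
          intro s _
          rw [Finset.mul_sum]
          apply Finset.sum_congr rfl
          intro t ht
          rw [(Finset.mem_filter.1 ht).2]
      _ ≤ K * ∑ s : X, w s * ∑ c ∈ Finset.Icc 1 (Nv s), ((c : ℝ) ^ α)⁻¹ := by
          apply mul_le_mul_of_nonneg_left _ hKpos.le
          apply Finset.sum_le_sum
          intro s _
          exact mul_le_mul_of_nonneg_left (hfiber s) (hw s)
      _ ≤ K * ∑ s : X, w s * ((Nv s : ℝ) ^ (1 - α) / (1 - α)) := by
          apply mul_le_mul_of_nonneg_left _ hKpos.le
          apply Finset.sum_le_sum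
          intro s _
          exact mul_le_mul_of_nonneg_left (sum_inv_rpow_le hα0 hα1 (Nv s)) (hw s)
  -- restrict to the support and identify the constant
  have hrestrict : ∑ s : X, w s * ((Nv s : ℝ) ^ (1 - α) / (1 - α))
      = ∑ s ∈ Finset.univ.filter (fun s : X => 1 ≤ Nv s),
          w s * ((Nv s : ℝ) ^ (1 - α) / (1 - α)) := by
    symm
    apply Finset.sum_filter_of_ne
    intro s _ hne
    by_contra h
    push_neg at h
    have h0 : Nv s = 0 := by omega
    rw [h0] at hne
    simp [Real.zero_rpow (by linarith : (1:ℝ) - α ≠ 0)] at hne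
  have hKeq : K = (2:ℝ) ^ (2 * α) * (H : ℝ) ^ α := by
    have h24 : (2:ℝ) ^ ((2:ℕ):ℝ) = 4 := by
      rw [Real.rpow_natCast]
      norm_num
    have h4 : (4:ℝ) ^ α = (2:ℝ) ^ (2 * α) := by
      rw [← h24, ← Real.rpow_mul (by norm_num : (0:ℝ) ≤ 2)]
      norm_num
    rw [hK]
    push_cast
    rw [Real.mul_rpow (by norm_num) (Nat.cast_nonneg H), h4]
  calc ∑ t ∈ (Finset.Icc 1 T).filter (fun t => 0 < eCheck t),
        w (x t) / (eCheck t : ℝ) ^ α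
      ≤ K * ∑ s : X, w s * ((Nv s : ℝ) ^ (1 - α) / (1 - α)) := main
    _ = K * ∑ s ∈ Finset.univ.filter (fun s : X => 1 ≤ Nv s),
          w s * ((Nv s : ℝ) ^ (1 - α) / (1 - α)) := by rw [hrestrict]
    _ = (2 : ℝ) ^ (2 * α) * (H : ℝ) ^ α / (1 - α)
          * ∑ s ∈ Finset.univ.filter (fun s : X => 1 ≤ Nv s),
              w s * (Nv s : ℝ) ^ (1 - α) := by
        rw [hKeq, Finset.mul_sum, Finset.mul_sum]
        apply Finset.sum_congr rfl
        intro s _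
        field_simp
end

section
/- For every nonnegative weight function w : X → [0,∞), the previous-stage lengths satisfy ∑_{t ∈ {1,…,T}, ě(t) > 0} w(x_t)/ě(t) ≤ 4H · ∑_{x ∈ X, N(x) ≥ 1} w(x)·log(N(x)). -/
/-- The telescoping bound function: `g n = 4H (log n - log (n-1))` for `n ≥ 2`, else `0`. -/
noncomputable def gfun (H : ℕ) (n : ℕ) : ℝ :=
  if 2 ≤ n then 4 * (H : ℝ) * (Real.log n - Real.log (n - 1 : ℕ)) else 0

lemma gfun_nonneg (H n : ℕ) : 0 ≤ gfun H n := by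
  unfold gfun
  split_ifs with h
  · have h1 : (0 : ℝ) < ((n - 1 : ℕ) : ℝ) := by
      have : 1 ≤ n - 1 := by omega
      exact_mod_cast Nat.lt_of_lt_of_le Nat.zero_lt_one this
    have h2 : ((n - 1 : ℕ) : ℝ) ≤ (n : ℝ) := by
      exact_mod_cast Nat.sub_le n 1
    have := Real.log_le_log h1 h2
    have hH : (0 : ℝ) ≤ 4 * (H : ℝ) := by positivity
    nlinarith
  · exact le_refl 0

lemma gfun_sum_le (H : ℕ) : ∀ N : ℕ, 1 ≤ N →
    ∑ n ∈ Finset.Icc 1 N, gfun H n ≤ 4 * (H : ℝ) * Real.log N := by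
  intro N hN
  induction N, hN using Nat.le_induction with
  | base =>
    simp [gfun]
  | succ N hN ih =>
    rw [Finset.sum_Icc_succ_top (by omega : 1 ≤ N + 1)]
    have hg : gfun H (N + 1) = 4 * (H : ℝ) * (Real.log ((N : ℝ) + 1) - Real.log N) := by
      unfold gfun
      rw [if_pos (by omega : 2 ≤ N + 1)]
      push_cast [Nat.add_sub_cancel]
      ring
    rw [hg]
    push_cast
    linarith [ih]

/-- Core real inequality: if `2 ≤ n`, `1 ≤ e'` and `n ≤ 4 H e'` then `1/e' ≤ gfun H n`. -/
lemma one_div_le_gfun (H n e' : ℕ) (hn : 2 ≤ n) (he' : 1 ≤ e') (hle : n ≤ 4 * H * e') :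
    1 / (e' : ℝ) ≤ gfun H n := by
  have hnR : (2 : ℝ) ≤ (n : ℝ) := by exact_mod_cast hn
  have hn0 : (0 : ℝ) < (n : ℝ) := by linarith
  have hn1cast : ((n - 1 : ℕ) : ℝ) = (n : ℝ) - 1 := by
    have : 1 ≤ n := by omega
    push_cast [Nat.cast_sub this]
    ring
  have hn1pos : (0 : ℝ) < (n : ℝ) - 1 := by linarith
  -- log n - log (n-1) ≥ 1/n
  have hlog : 1 / (n : ℝ) ≤ Real.log n - Real.log ((n - 1 : ℕ)) := by
    have hx : (0 : ℝ) < ((n : ℝ) - 1) / (n : ℝ) := by positivity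
    have h1 := Real.log_le_sub_one_of_pos hx
    rw [Real.log_div (by linarith) (by linarith)] at h1
    rw [hn1cast]
    have : ((n : ℝ) - 1) / (n : ℝ) - 1 = -(1 / (n : ℝ)) := by
      field_simp
      ring
    rw [this] at h1
    linarith
  have hgf : gfun H n = 4 * (H : ℝ) * (Real.log n - Real.log ((n - 1 : ℕ))) := by
    unfold gfun; rw [if_pos hn]
  rw [hgf]
  have he'0 : (0 : ℝ) < (e' : ℝ) := by exact_mod_cast he'
  have hcast : (n : ℝ) ≤ 4 * (H : ℝ) * (e' : ℝ) := by exact_mod_cast hle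
  have hchain : 1 / (e' : ℝ) ≤ 4 * (H : ℝ) * (1 / (n : ℝ)) := by
    have h2 : (1 : ℝ) / (e' : ℝ) ≤ (4 * (H : ℝ)) / (n : ℝ) := by
      rw [div_le_div_iff₀ he'0 hn0]
      linarith
    calc 1 / (e' : ℝ) ≤ (4 * (H : ℝ)) / (n : ℝ) := h2
      _ = 4 * (H : ℝ) * (1 / (n : ℝ)) := by ring
  have h4H : (0 : ℝ) ≤ 4 * (H : ℝ) := by positivity
  calc 1 / (e' : ℝ) ≤ 4 * (H : ℝ) * (1 / (n : ℝ)) := hchain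
    _ ≤ 4 * (H : ℝ) * (Real.log n - Real.log ((n - 1 : ℕ))) :=
        mul_le_mul_of_nonneg_left hlog h4H

set_option maxHeartbeats 1600000

/-- Lemma 4 (α = 1, previous-stage case): weighted sum of `1/ě(t)` over time steps, where
`ě(t)` is the length of the stage immediately before the current stage of `x_t`. -/
theorem prev_stage_sum_log_bound
    (H : ℕ) (hH : 1 ≤ H) (e : ℕ → ℕ)
    (he1 : e 1 = H)
    (herec : ∀ i : ℕ, 1 ≤ i → e (i + 1) = ⌊(1 + 1 / (H : ℝ)) * (e i : ℝ)⌋₊)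
    (S : ℕ → ℕ) (hS : ∀ j : ℕ, S j = ∑ i ∈ Finset.Icc 1 j, e i)
    (X : Type*) [Fintype X] [DecidableEq X]
    (T : ℕ) (hT : 1 ≤ T) (x : ℕ → X)
    (cnt : ℕ → ℕ)
    (hcnt : ∀ t : ℕ, cnt t = ((Finset.Icc 1 t).filter (fun τ => x τ = x t)).card)
    (Nv : X → ℕ)
    (hNv : ∀ s : X, Nv s = ((Finset.Icc 1 T).filter (fun t => x t = s)).card)
    (j : ℕ → ℕ)
    (hj : ∀ t ∈ Finset.Icc 1 T, 1 ≤ j t ∧ S (j t - 1) < cnt t ∧ cnt t ≤ S (j t))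
    (eCheck : ℕ → ℕ) (heCheck : ∀ t : ℕ, eCheck t = if 2 ≤ j t then e (j t - 1) else 0)
    (w : X → ℝ) (hw : ∀ s : X, 0 ≤ w s) :
    ∑ t ∈ (Finset.Icc 1 T).filter (fun t => 0 < eCheck t), w (x t) / (eCheck t : ℝ)
      ≤ 4 * (H : ℝ)
          * ∑ s ∈ Finset.univ.filter (fun s : X => 1 ≤ Nv s), w s * Real.log (Nv s) := by
  classical
  have hHpos : 0 < H := hH
  -- natural-number form of the recursion: e (i+1) = e i + e i / H
  have herec' : ∀ i : ℕ, 1 ≤ i → e (i + 1) = e i + e i / H := by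
    intro i hi
    rw [herec i hi]
    have h1 : (1 + 1 / (H : ℝ)) * (e i : ℝ) = ((e i : ℝ) / (H : ℝ)) + ((e i : ℕ) : ℝ) := by
      have : (H : ℝ) ≠ 0 := by positivity
      field_simp
      ring
    rw [h1, Nat.floor_add_natCast (by positivity), Nat.floor_div_natCast, Nat.floor_natCast]
    omega
  -- e i ≥ H for i ≥ 1
  have heH : ∀ i : ℕ, 1 ≤ i → H ≤ e i := by
    intro i hi
    induction i with
    | zero => omega
    | succ k ih =>
      by_cases hk : 1 ≤ k
      · rw [herec' k hk]
        exact le_trans (ih hk) (Nat.le_add_right _ _)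
      · have : k = 0 := by omega
        subst this
        rw [he1]
  have he_pos : ∀ i : ℕ, 1 ≤ i → 1 ≤ e i := fun i hi => le_trans hH (heH i hi)
  -- S basics
  have hS_succ : ∀ k : ℕ, S (k + 1) = S k + e (k + 1) := by
    intro k
    rw [hS, hS, Finset.sum_Icc_succ_top (by omega : 1 ≤ k + 1)]
  have hS1 : S 1 = H := by
    rw [hS]
    simp [he1]
  have hSmono : ∀ a b : ℕ, a ≤ b → S a ≤ S b := by
    intro a b hab
    rw [hS, hS]
    exact Finset.sum_le_sum_of_subset (Finset.Icc_subset_Icc_right hab)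
  -- Claim A : S k ≤ 4 H e (k-1) for k ≥ 2
  have claimA : ∀ k : ℕ, 2 ≤ k → S k ≤ 4 * H * e (k - 1) := by
    intro k hk
    induction k, hk using Nat.le_induction with
    | base =>
      have he2 : e 2 = H + 1 := by
        have h := herec' 1 le_rfl
        norm_num at h
        rw [he1] at h
        rw [h, Nat.div_self hHpos]
      have hs2 : S 2 = H + (H + 1) := by
        have h := hS_succ 1
        norm_num at h
        rw [hS1, he2] at h
        exact h
      have : (2 : ℕ) - 1 = 1 := rfl
      rw [this, hs2, he1]
      nlinarith [hH]
    | succ k hk ih =>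
      have hk1 : 1 ≤ k - 1 := by omega
      have hek : e k = e (k - 1) + e (k - 1) / H := by
        have h := herec' (k - 1) hk1
        rwa [Nat.sub_add_cancel (by omega : 1 ≤ k)] at h
      have hek1 : e (k + 1) = e k + e k / H := herec' k (by omega)
      set a := e (k - 1) with ha
      set q := a / H with hq
      set r := a % H with hr
      have haqr : H * q + r = a := Nat.div_add_mod a H
      have hrH : r < H := Nat.mod_lt _ hHpos
      have hq1 : 1 ≤ q := (Nat.one_le_div_iff hHpos).mpr (heH (k - 1) hk1)
      -- e k = a + q
      have hekq : e k = a + q := hek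
      -- e (k+1) = a + q + (q + (r + q)/H)
      set d : ℕ := (r + q) / H with hd
      have hdiv : (a + q) / H = q + d := by
        have : a + q = H * q + (r + q) := by omega
        rw [this, Nat.mul_add_div hHpos]
      have hek1' : e (k + 1) = a + q + (q + d) := by
        rw [hek1, hekq, hdiv]
      -- d ≤ q
      have hdq : d ≤ q := by
        have h1 : r + q < (q + 1) * H := by
          have hqH : q ≤ q * H := Nat.le_mul_of_pos_right q hHpos
          have : (q + 1) * H = q * H + H := by ring
          omega
        have := (Nat.div_lt_iff_lt_mul hHpos).mpr h1
        omega
      -- key arithmetic: e (k+1) ≤ 4 H q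
      have hkey : e (k + 1) ≤ 4 * (H * q) := by
        rw [hek1']
        have harith : H * q + r + 2 * q + d ≤ 4 * (H * q) := by
          zify
          have h1 : (0 : ℤ) ≤ ((q : ℤ) - 1) * ((H : ℤ) - 1) := by
            have : (1 : ℤ) ≤ (q : ℤ) := by exact_mod_cast hq1
            have : (1 : ℤ) ≤ (H : ℤ) := by exact_mod_cast hH
            nlinarith [show (1 : ℤ) ≤ (q : ℤ) from by exact_mod_cast hq1,
                       show (1 : ℤ) ≤ (H : ℤ) from by exact_mod_cast hH]
          have h2 : (r : ℤ) + 1 ≤ (H : ℤ) := by exact_mod_cast hrH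
          have h3 : (d : ℤ) ≤ (q : ℤ) := by exact_mod_cast hdq
          have h4 : (0 : ℤ) ≤ (r : ℤ) := Int.natCast_nonneg r
          nlinarith [h1, h2, h3, h4]
        omega
      -- assemble
      have hstep : S (k + 1) ≤ 4 * H * a + e (k + 1) := by
        rw [hS_succ k]
        have := ih
        omega
      have hfin : 4 * H * a + e (k + 1) ≤ 4 * H * e k := by
        rw [hekq, Nat.mul_add]
        have : 4 * H * q = 4 * (H * q) := by ring
        omega
      have : (k + 1) - 1 = k := by omega
      rw [this]
      omega
  -- injectivity of cnt on times with the same x-value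
  have hmono : ∀ t1 t2 : ℕ, 1 ≤ t1 → t1 < t2 → x t1 = x t2 → cnt t1 < cnt t2 := by
    intro t1 t2 h1 h12 hxx
    rw [hcnt t1, hcnt t2]
    apply Finset.card_lt_card
    rw [Finset.ssubset_iff_of_subset]
    · refine ⟨t2, ?_, ?_⟩
      · simp only [Finset.mem_filter, Finset.mem_Icc]
        exact ⟨⟨by omega, le_rfl⟩, trivial⟩
      · simp only [Finset.mem_filter, Finset.mem_Icc]
        intro hmem
        omega
    · intro τ hτ
      simp only [Finset.mem_filter, Finset.mem_Icc] at hτ ⊢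
      exact ⟨⟨hτ.1.1, by omega⟩, hτ.2.trans hxx⟩
  -- set up the main sum
  set A : Finset ℕ := (Finset.Icc 1 T).filter (fun t => 0 < eCheck t) with hA
  -- per-term bound
  have step1 : ∑ t ∈ A, w (x t) / (eCheck t : ℝ)
      ≤ ∑ t ∈ A, w (x t) * gfun H (cnt t) := by
    apply Finset.sum_le_sum
    intro t ht
    rw [hA, Finset.mem_filter, Finset.mem_Icc] at ht
    obtain ⟨⟨ht1, htT⟩, hepos⟩ := ht
    obtain ⟨hj1, hjlo, hjhi⟩ := hj t (Finset.mem_Icc.mpr ⟨ht1, htT⟩)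
    have hjt2 : 2 ≤ j t := by
      by_contra h2
      rw [heCheck t, if_neg h2] at hepos
      omega
    have hech : eCheck t = e (j t - 1) := by rw [heCheck t, if_pos hjt2]
    have hcnt2 : 2 ≤ cnt t := by
      have hS1le : S 1 ≤ S (j t - 1) := hSmono 1 (j t - 1) (by omega)
      rw [hS1] at hS1le
      omega
    have hcntle : cnt t ≤ 4 * H * e (j t - 1) :=
      le_trans hjhi (claimA (j t) hjt2)
    have hcore := one_div_le_gfun H (cnt t) (e (j t - 1)) hcnt2
      (he_pos (j t - 1) (by omega)) hcntle
    calc w (x t) / (eCheck t : ℝ)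
        = w (x t) * (1 / (e (j t - 1) : ℝ)) := by rw [hech]; ring
      _ ≤ w (x t) * gfun H (cnt t) := mul_le_mul_of_nonneg_left hcore (hw _)
  -- fiberwise decomposition
  have step2 : ∑ t ∈ A, w (x t) * gfun H (cnt t)
      = ∑ s ∈ Finset.univ, ∑ t ∈ A.filter (fun t => x t = s), w (x t) * gfun H (cnt t) :=
    (Finset.sum_fiberwise_of_maps_to (fun t _ => Finset.mem_univ (x t)) _).symm
  -- per-fiber bound
  have step3 : ∀ s : X, ∑ t ∈ A.filter (fun t => x t = s), w (x t) * gfun H (cnt t)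
      ≤ if 1 ≤ Nv s then w s * (4 * (H : ℝ) * Real.log (Nv s)) else 0 := by
    intro s
    set As : Finset ℕ := A.filter (fun t => x t = s) with hAs
    have hmem : ∀ t ∈ As, 1 ≤ t ∧ t ≤ T ∧ x t = s := by
      intro t ht
      rw [hAs, Finset.mem_filter, hA, Finset.mem_filter, Finset.mem_Icc] at ht
      exact ⟨ht.1.1.1, ht.1.1.2, ht.2⟩
    have hcnt_mem : ∀ t ∈ As, cnt t ∈ Finset.Icc 1 (Nv s) := by
      intro t ht
      obtain ⟨ht1, htT, hts⟩ := hmem t ht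
      rw [Finset.mem_Icc]
      constructor
      · rw [hcnt t]
        have : t ∈ (Finset.Icc 1 t).filter (fun τ => x τ = x t) := by
          simp only [Finset.mem_filter, Finset.mem_Icc]
          exact ⟨⟨ht1, le_rfl⟩, trivial⟩
        exact Finset.card_pos.mpr ⟨t, this⟩
      · rw [hcnt t, hNv s]
        apply Finset.card_le_card
        intro τ hτ
        simp only [Finset.mem_filter, Finset.mem_Icc] at hτ ⊢
        exact ⟨⟨hτ.1.1, hτ.1.2.trans htT⟩, hτ.2.trans hts⟩
    by_cases hNs : 1 ≤ Nv s
    · rw [if_pos hNs]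
      have hwsum : ∀ t ∈ As, w (x t) * gfun H (cnt t) = w s * gfun H (cnt t) := by
        intro t ht
        rw [(hmem t ht).2.2]
      rw [Finset.sum_congr rfl hwsum, ← Finset.mul_sum]
      apply mul_le_mul_of_nonneg_left _ (hw s)
      have hinj : Set.InjOn cnt As := by
        intro t1 ht1 t2 ht2 hceq
        obtain ⟨h11, h1T, h1s⟩ := hmem t1 ht1
        obtain ⟨h21, h2T, h2s⟩ := hmem t2 ht2
        rcases lt_trichotomy t1 t2 with h | h | h
        · have := hmono t1 t2 h11 h (h1s.trans h2s.symm)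
          omega
        · exact h
        · have := hmono t2 t1 h21 h (h2s.trans h1s.symm)
          omega
      calc ∑ t ∈ As, gfun H (cnt t)
          = ∑ n ∈ As.image cnt, gfun H n := (Finset.sum_image
            (fun t1 ht1 t2 ht2 h => hinj ht1 ht2 h)).symm
        _ ≤ ∑ n ∈ Finset.Icc 1 (Nv s), gfun H n := by
            apply Finset.sum_le_sum_of_subset_of_nonneg
            · intro n hn
              rw [Finset.mem_image] at hn
              obtain ⟨t, ht, rfl⟩ := hn
              exact hcnt_mem t ht
            · intro n _ _
              exact gfun_nonneg H n
        _ ≤ 4 * (H : ℝ) * Real.log (Nv s) := gfun_sum_le H (Nv s) hNs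
    · rw [if_neg hNs]
      have hempty : As = ∅ := by
        apply Finset.eq_empty_of_forall_notMem
        intro t ht
        have := hcnt_mem t ht
        rw [Finset.mem_Icc] at this
        omega
      rw [hempty, Finset.sum_empty]
  -- assemble
  calc ∑ t ∈ A, w (x t) / (eCheck t : ℝ)
      ≤ ∑ t ∈ A, w (x t) * gfun H (cnt t) := step1
    _ = ∑ s ∈ Finset.univ, ∑ t ∈ A.filter (fun t => x t = s),
          w (x t) * gfun H (cnt t) := step2
    _ ≤ ∑ s ∈ Finset.univ,
          (if 1 ≤ Nv s then w s * (4 * (H : ℝ) * Real.log (Nv s)) else 0) :=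
        Finset.sum_le_sum (fun s _ => step3 s)
    _ = ∑ s ∈ Finset.univ.filter (fun s : X => 1 ≤ Nv s),
          w s * (4 * (H : ℝ) * Real.log (Nv s)) := by
        rw [Finset.sum_filter]
    _ = 4 * (H : ℝ) * ∑ s ∈ Finset.univ.filter (fun s : X => 1 ≤ Nv s),
          w s * Real.log (Nv s) := by
        rw [Finset.mul_sum]
        apply Finset.sum_congr rfl
        intro s _
        ring
end

section
/- For every integer j ≥ 1 and every real N ≥ 1, if S_j ≤ N then j ≤ 4H·log(N/(2H) + 1); that is, at most 4H·log(N/(2H) + 1) stages are completed within the first N items. -/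
/-- At most `4H·log(N/(2H) + 1)` stages are completed within the first `N` items. -/
theorem stage_count_log_bound
    (H : ℕ) (hH : 1 ≤ H) (e : ℕ → ℕ)
    (he1 : e 1 = H)
    (herec : ∀ i : ℕ, 1 ≤ i → e (i + 1) = ⌊(1 + 1 / (H : ℝ)) * (e i : ℝ)⌋₊)
    (S : ℕ → ℕ) (hS : ∀ j : ℕ, S j = ∑ i ∈ Finset.Icc 1 j, e i) :
    ∀ (j : ℕ) (N : ℝ), 1 ≤ j → 1 ≤ N → (S j : ℝ) ≤ N →
      (j : ℝ) ≤ 4 * (H : ℝ) * Real.log (N / (2 * (H : ℝ)) + 1) := by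
  have hHpos : (0:ℝ) < H := by exact_mod_cast hH
  have hH1 : (1:ℝ) ≤ H := by exact_mod_cast hH
  set q : ℝ := 1 + 1 / (2 * (H:ℝ)) with hq
  have hq1 : 1 < q := by
    rw [hq]
    have : 0 < 1 / (2 * (H:ℝ)) := by positivity
    linarith
  -- the recursion in closed nat form
  have hrec' : ∀ i : ℕ, 1 ≤ i → e (i + 1) = e i + e i / H := by
    intro i hi
    rw [herec i hi]
    have : (1 + 1 / (H : ℝ)) * (e i : ℝ) = (e i : ℝ) / (H:ℝ) + (e i : ℕ) := by
      field_simp; ring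
    rw [this, Nat.floor_add_natCast (by positivity), Nat.floor_div_natCast, Nat.floor_natCast]
    omega
  -- e i ≥ H
  have key1 : ∀ i : ℕ, 1 ≤ i → H ≤ e i := by
    intro i hi
    induction i, hi using Nat.le_induction with
    | base => omega
    | succ n hn ih =>
      rw [hrec' n hn]
      exact Nat.le_trans ih (Nat.le_add_right _ _)
  -- nat division bound
  have hdiv : ∀ n : ℕ, H ≤ n → n ≤ 2 * (n / H) * H := by
    intro n hn
    have h1 := Nat.div_add_mod n H
    have h2 : n % H < H := Nat.mod_lt _ (by omega)
    have h3 : 1 ≤ n / H := (Nat.one_le_div_iff (by omega)).mpr hn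
    nlinarith [h1, h2, h3]
  -- one-step growth in ℝ
  have step : ∀ i : ℕ, 1 ≤ i → q * (e i : ℝ) ≤ (e (i+1) : ℝ) := by
    intro i hi
    rw [hrec' i hi]
    have h1 : (e i : ℝ) ≤ 2 * ((e i / H : ℕ) : ℝ) * (H : ℝ) := by
      exact_mod_cast hdiv (e i) (key1 i hi)
    have h2 : (e i : ℝ) / (2 * (H:ℝ)) ≤ ((e i / H : ℕ) : ℝ) := by
      rw [div_le_iff₀ (by positivity)]
      linarith
    push_cast
    rw [hq]
    have : (1 + 1 / (2 * (H:ℝ))) * (e i : ℝ) = (e i : ℝ) + (e i : ℝ) / (2 * (H:ℝ)) := by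
      field_simp
    rw [this]
    linarith
  -- geometric lower bound for e
  have key2 : ∀ i : ℕ, 1 ≤ i → (H:ℝ) * q ^ (i - 1) ≤ (e i : ℝ) := by
    intro i hi
    induction i, hi using Nat.le_induction with
    | base => simp [he1]
    | succ n hn ih =>
      have h1 := step n hn
      have h2 := ih
      have hq0 : 0 < q := by linarith
      have hpow : (H:ℝ) * q ^ (n + 1 - 1) = q * ((H:ℝ) * q ^ (n - 1)) := by
        rw [show n + 1 - 1 = (n - 1) + 1 by omega, pow_succ]
        ring
      rw [hpow]
      calc q * ((H:ℝ) * q ^ (n - 1)) ≤ q * (e n : ℝ) := by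
            apply mul_le_mul_of_nonneg_left h2 (le_of_lt hq0)
        _ ≤ (e (n+1) : ℝ) := h1
  -- geometric lower bound for S
  have key3 : ∀ j : ℕ, 1 ≤ j → 2 * (H:ℝ)^2 * (q ^ j - 1) ≤ (S j : ℝ) := by
    intro j hj
    induction j, hj using Nat.le_induction with
    | base =>
      have hS1 : (S 1 : ℝ) = (H:ℝ) := by rw [hS 1]; simp [he1]
      rw [hS1]
      have heq : 2 * (H:ℝ)^2 * (q ^ 1 - 1) = (H:ℝ) := by
        rw [pow_one, hq]; field_simp; ring
      rw [heq]
    | succ n hn ih =>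
      have hSn : (S (n+1) : ℝ) = (S n : ℝ) + (e (n+1) : ℝ) := by
        rw [hS (n+1), hS n]
        rw [Finset.sum_Icc_succ_top (by omega)]
        push_cast; ring
      have he : (H:ℝ) * q ^ n ≤ (e (n+1) : ℝ) := by
        have := key2 (n+1) (by omega)
        simpa using this
      rw [hSn]
      have expand : 2 * (H:ℝ)^2 * (q ^ (n+1) - 1)
          = 2 * (H:ℝ)^2 * (q ^ n - 1) + (H:ℝ) * q ^ n := by
        rw [pow_succ, hq]
        field_simp
        rw [pow_succ]
        field_simp
        ring
      rw [expand]
      linarith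
  -- log q lower bound
  have hlogq : 1 / (4 * (H:ℝ)) ≤ Real.log q := by
    have hq0 : 0 < q := by linarith
    have h1 : Real.log (1/q) ≤ 1/q - 1 := Real.log_le_sub_one_of_pos (by positivity)
    rw [Real.log_div one_ne_zero (ne_of_gt hq0), Real.log_one] at h1
    have h2 : 1 - 1/q ≤ Real.log q := by linarith
    have h3 : 1 / (4 * (H:ℝ)) ≤ 1 - 1/q := by
      rw [hq]
      have hd : (0:ℝ) < 2 * (H:ℝ) := by positivity
      have : 1 - 1/(1 + 1 / (2 * (H:ℝ))) = 1 / (2*(H:ℝ) + 1) := by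
        field_simp
        ring
      rw [this]
      apply one_div_le_one_div_of_le (by positivity)
      linarith
    linarith
  -- finish
  intro j N hj hN hSN
  have hpowle : q ^ j ≤ N / (2 * (H:ℝ)) + 1 := by
    have h1 := key3 j hj
    have h2 : 2 * (H:ℝ)^2 * (q ^ j - 1) ≤ N := le_trans h1 hSN
    have h3 : q ^ j - 1 ≤ N / (2 * (H:ℝ)^2) := by
      rw [le_div_iff₀ (by positivity)]
      linarith
    have h4 : N / (2 * (H:ℝ)^2) ≤ N / (2 * (H:ℝ)) := by
      apply div_le_div_of_nonneg_left (by linarith) (by positivity)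
      nlinarith
    linarith
  have hq0 : 0 < q := by linarith
  have hpow1 : (1:ℝ) ≤ q ^ j := one_le_pow₀ (le_of_lt hq1)
  have hlog1 : (j : ℝ) * Real.log q ≤ Real.log (N / (2 * (H:ℝ)) + 1) := by
    rw [← Real.log_pow]
    exact Real.log_le_log (by positivity) hpowle
  have hjlog : (j : ℝ) * (1 / (4 * (H:ℝ))) ≤ Real.log (N / (2 * (H:ℝ)) + 1) := by
    calc (j : ℝ) * (1 / (4 * (H:ℝ))) ≤ (j : ℝ) * Real.log q := by
          apply mul_le_mul_of_nonneg_left hlogq (by positivity)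
      _ ≤ _ := hlog1
  have h4H : (0:ℝ) < 4 * (H:ℝ) := by positivity
  calc (j : ℝ) = 4 * (H:ℝ) * ((j : ℝ) * (1 / (4 * (H:ℝ)))) := by
        field_simp
    _ ≤ 4 * (H:ℝ) * Real.log (N / (2 * (H:ℝ)) + 1) := by
        apply mul_le_mul_of_nonneg_left hjlog (le_of_lt h4H)
end

section
/- For every real T ≥ 1, ∑_{z ≥ 2, S_{z−1} ≤ T} e_z/S_{z−1} ≤ 2·(log T + 1), where the (finite) sum ranges over all indices z ≥ 2 with S_{z−1} ≤ T. -/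
/-- Summing the ratio of each stage length to the number of items before that stage,
over all stages starting within the first `T` items, is at most `2(log T + 1)`. -/
theorem stage_ratio_sum_bound
    (H : ℕ) (hH : 1 ≤ H) (e : ℕ → ℕ)
    (he1 : e 1 = H)
    (herec : ∀ i : ℕ, 1 ≤ i → e (i + 1) = ⌊(1 + 1 / (H : ℝ)) * (e i : ℝ)⌋₊)
    (S : ℕ → ℕ) (hS : ∀ j : ℕ, S j = ∑ i ∈ Finset.Icc 1 j, e i)
    (T : ℝ) (hT : 1 ≤ T) :
    ∑' z : {z : ℕ // 2 ≤ z ∧ (S (z - 1) : ℝ) ≤ T},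
        (e (z : ℕ) : ℝ) / (S ((z : ℕ) - 1) : ℝ)
      ≤ 2 * (Real.log T + 1) := by
  classical
  have hHpos : (0:ℝ) < H := by exact_mod_cast hH
  have hHone : (1:ℝ) ≤ H := by exact_mod_cast hH
  -- e is monotone from index 1 on, with e 1 = H
  have hmono : ∀ i, 1 ≤ i → e i ≤ e (i + 1) := by
    intro i hi
    rw [herec i hi]
    apply Nat.le_floor
    have h0 : (0:ℝ) < 1 / H := by positivity
    have : (1:ℝ) ≤ 1 + 1 / H := by linarith
    nlinarith [(Nat.cast_nonneg (e i) : (0:ℝ) ≤ (e i : ℝ))]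
  have heH : ∀ i, 1 ≤ i → H ≤ e i := by
    intro i hi
    induction i with
    | zero => omega
    | succ n ih =>
      rcases Nat.lt_or_ge 1 (n + 1) with h | h
      · have hn : 1 ≤ n := by omega
        exact le_trans (ih hn) (hmono n hn)
      · have : n = 0 := by omega
        simp [this, he1]
  have hdouble : ∀ i, 1 ≤ i → (e (i + 1) : ℝ) ≤ 2 * e i := by
    intro i hi
    rw [herec i hi]
    have h1 : (⌊(1 + 1 / (H : ℝ)) * (e i : ℝ)⌋₊ : ℝ) ≤ (1 + 1 / (H : ℝ)) * e i :=
      Nat.floor_le (by positivity)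
    have h2 : 1 / (H:ℝ) ≤ 1 := by
      rw [div_le_one hHpos]; exact hHone
    nlinarith [(Nat.cast_nonneg (e i) : (0:ℝ) ≤ (e i : ℝ))]
  have hSsucc : ∀ j, S (j + 1) = S j + e (j + 1) := by
    intro j
    rw [hS, hS, Finset.sum_Icc_succ_top (by omega : 1 ≤ j + 1)]
  have hS1 : S 1 = H := by rw [hS]; simp [he1]
  have hSmono : Monotone S := by
    apply monotone_nat_of_le_succ
    intro n; rw [hSsucc]; omega
  have hSge1 : ∀ j, 1 ≤ j → 1 ≤ S j := by
    intro j hj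
    calc 1 ≤ S 1 := by omega
    _ ≤ S j := hSmono hj
  have hSgej : ∀ j, j ≤ S j := by
    intro j
    rw [hS]
    calc j = ∑ i ∈ Finset.Icc 1 j, 1 := by simp
    _ ≤ ∑ i ∈ Finset.Icc 1 j, e i := by
        apply Finset.sum_le_sum
        intro i hi
        have : 1 ≤ i := (Finset.mem_Icc.mp hi).1
        exact le_trans hH (heH i this)
  set A : Set ℕ := {z | 2 ≤ z ∧ (S (z - 1) : ℝ) ≤ T} with hA
  set f : ℕ → ℝ := fun z => (e z : ℝ) / (S (z - 1) : ℝ) with hf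
  -- the one-step bound
  have step : ∀ M, 1 ≤ M →
      A.indicator f (M + 2) ≤
        2 * Real.log (min ((S (M+1) : ℝ)) T) - 2 * Real.log (min ((S M : ℝ)) T) := by
    intro M hM
    have hb1 : (1:ℝ) ≤ (S M : ℝ) := by exact_mod_cast hSge1 M hM
    have hab : (S M : ℝ) ≤ (S (M+1) : ℝ) := by exact_mod_cast hSmono (Nat.le_succ M)
    have hminb1 : (1:ℝ) ≤ min ((S M : ℝ)) T := le_min hb1 hT
    have hminab : min ((S M : ℝ)) T ≤ min ((S (M+1) : ℝ)) T :=
      min_le_min hab le_rfl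
    have hlogmono : Real.log (min ((S M : ℝ)) T) ≤ Real.log (min ((S (M+1) : ℝ)) T) :=
      Real.log_le_log (by linarith) hminab
    by_cases hmem : (M + 2) ∈ A
    · rw [Set.indicator_of_mem hmem]
      obtain ⟨-, hST⟩ := hmem
      have hST' : (S (M + 1) : ℝ) ≤ T := by simpa using hST
      have hapos : (0:ℝ) < (S (M+1) : ℝ) := by linarith
      have hbpos : (0:ℝ) < (S M : ℝ) := by linarith
      -- f (M+2) = e (M+2) / S (M+1)
      have hfval : f (M + 2) = (e (M + 2) : ℝ) / (S (M + 1) : ℝ) := by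
        simp [hf]
      have he2 : (e (M + 2) : ℝ) ≤ 2 * (e (M + 1) : ℝ) := hdouble (M+1) (by omega)
      have heS : (e (M + 1) : ℝ) = (S (M+1) : ℝ) - (S M : ℝ) := by
        have := hSsucc M
        have : (S (M+1) : ℝ) = (S M : ℝ) + (e (M+1) : ℝ) := by exact_mod_cast this
        linarith
      have hfle : f (M + 2) ≤ 2 * (((S (M+1) : ℝ) - (S M : ℝ)) / (S (M+1) : ℝ)) := by
        rw [hfval, ← heS]
        rw [div_le_iff₀ hapos]
        have h2 : 2 * ((e (M+1) : ℝ) / (S (M+1) : ℝ)) * (S (M+1) : ℝ)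
            = 2 * (e (M+1) : ℝ) := by field_simp
        calc (e (M+2) : ℝ) ≤ 2 * (e (M+1) : ℝ) := he2
        _ = 2 * ((e (M+1) : ℝ) / (S (M+1) : ℝ)) * (S (M+1) : ℝ) := h2.symm
      -- log inequality
      have hlog : ((S (M+1) : ℝ) - (S M : ℝ)) / (S (M+1) : ℝ)
          ≤ Real.log (S (M+1) : ℝ) - Real.log (S M : ℝ) := by
        have hx : (0:ℝ) < (S M : ℝ) / (S (M+1) : ℝ) := by positivity
        have h1 := Real.log_le_sub_one_of_pos hx
        rw [Real.log_div (ne_of_gt hbpos) (ne_of_gt hapos)] at h1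
        have : ((S (M+1) : ℝ) - (S M : ℝ)) / (S (M+1) : ℝ)
            = 1 - (S M : ℝ) / (S (M+1) : ℝ) := by field_simp
        rw [this]; linarith
      have hmina : min ((S (M+1) : ℝ)) T = (S (M+1) : ℝ) := min_eq_left hST'
      have hminble : Real.log (min ((S M : ℝ)) T) ≤ Real.log (S M : ℝ) :=
        Real.log_le_log (by linarith) (min_le_left _ _)
      rw [hmina]
      calc f (M + 2) ≤ 2 * (((S (M+1) : ℝ) - (S M : ℝ)) / (S (M+1) : ℝ)) := hfle
      _ ≤ 2 * (Real.log (S (M+1) : ℝ) - Real.log (S M : ℝ)) := by linarith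
      _ ≤ 2 * Real.log (S (M+1) : ℝ) - 2 * Real.log (min ((S M : ℝ)) T) := by linarith
    · rw [Set.indicator_of_notMem hmem]
      linarith
  -- main induction
  have key : ∀ N, 1 ≤ N →
      ∑ z ∈ Finset.Icc 2 (N + 1), A.indicator f z
        ≤ 2 * Real.log (min ((S N : ℝ)) T) + 2 := by
    intro N hN
    induction N, hN using Nat.le_induction with
    | base =>
      rw [show (1:ℕ) + 1 = 2 from rfl, Finset.Icc_self, Finset.sum_singleton]
      have hlog0 : 0 ≤ Real.log (min ((S 1 : ℝ)) T) := by
        apply Real.log_nonneg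
        apply le_min _ hT
        exact_mod_cast hSge1 1 le_rfl
      have hind : A.indicator f 2 ≤ 2 := by
        by_cases hmem : (2:ℕ) ∈ A
        · rw [Set.indicator_of_mem hmem]
          have hfval : f 2 = (e 2 : ℝ) / (S 1 : ℝ) := by simp [hf]
          have hS1pos : (0:ℝ) < (S 1 : ℝ) := by
            exact_mod_cast hSge1 1 le_rfl
          have he2 : (e 2 : ℝ) ≤ 2 * (e 1 : ℝ) := hdouble 1 le_rfl
          have heS1 : (e 1 : ℝ) = (S 1 : ℝ) := by
            rw [he1, hS1]
          rw [hfval, div_le_iff₀ hS1pos]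
          rw [heS1] at he2
          linarith
        · rw [Set.indicator_of_notMem hmem]; norm_num
      linarith
    | succ M hM ih =>
      rw [Finset.sum_Icc_succ_top (by omega : 2 ≤ M + 1 + 1)]
      have := step M hM
      have h2 : A.indicator f (M + 1 + 1) = A.indicator f (M + 2) := by norm_num
      rw [h2]
      linarith
  -- convert the tsum to a finite sum
  set N : ℕ := ⌊T⌋₊ with hNdef
  have hN1 : 1 ≤ N := by
    rw [hNdef]
    exact Nat.le_floor (by exact_mod_cast hT)
  have hvanish : ∀ z ∉ Finset.Icc 2 (N + 1), A.indicator f z = 0 := by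
    intro z hz
    apply Set.indicator_of_notMem
    intro hzA
    obtain ⟨hz2, hzT⟩ := hzA
    have h1 : (z - 1 : ℕ) ≤ S (z - 1) := hSgej (z - 1)
    have h2 : ((z - 1 : ℕ) : ℝ) ≤ T := le_trans (by exact_mod_cast h1) hzT
    have h3 : (z - 1 : ℕ) ≤ N := Nat.le_floor h2
    apply hz
    rw [Finset.mem_Icc]
    omega
  have htsum : (∑' z : ↥A, f (z : ℕ))
      = ∑ z ∈ Finset.Icc 2 (N + 1), A.indicator f z := by
    rw [tsum_subtype A f]
    exact tsum_eq_sum hvanish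
  have hgoaleq : ∑' z : {z : ℕ // 2 ≤ z ∧ (S (z - 1) : ℝ) ≤ T},
        (e (z : ℕ) : ℝ) / (S ((z : ℕ) - 1) : ℝ) = ∑' z : ↥A, f (z : ℕ) := rfl
  rw [hgoaleq, htsum]
  have hfinal := key (N + 1) (by omega)
  have hminT : Real.log (min ((S (N + 1) : ℝ)) T) ≤ Real.log T := by
    apply Real.log_le_log _ (min_le_right _ _)
    apply lt_of_lt_of_le zero_lt_one
    apply le_min _ hT
    exact_mod_cast hSge1 (N + 1) (by omega)
  calc ∑ z ∈ Finset.Icc 2 (N + 1), A.indicator f z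
      ≤ ∑ z ∈ Finset.Icc 2 (N + 1 + 1), A.indicator f z := by
        apply Finset.sum_le_sum_of_subset_of_nonneg
        · apply Finset.Icc_subset_Icc_right; omega
        · intro i _ _
          apply Set.indicator_nonneg
          intro x _
          positivity
  _ ≤ 2 * Real.log (min ((S (N + 1) : ℝ)) T) + 2 := hfinal
  _ ≤ 2 * (Real.log T + 1) := by linarith
end

section
/- For every real V ≥ H, ∑_{j ≥ 1, S_{j−1} ≤ V} √(e_j) ≤ 10·√(H·V), where the (finite) sum ranges over all indices j ≥ 1 with S_{j−1} ≤ V. -/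
open Finset

/-- Summing `√(e_j)` over all stages that start within the first `V` items is at most
`10·√(H·V)`. -/
theorem stage_sqrt_sum_bound
    (H : ℕ) (hH : 1 ≤ H) (e : ℕ → ℕ)
    (he1 : e 1 = H)
    (herec : ∀ i : ℕ, 1 ≤ i → e (i + 1) = ⌊(1 + 1 / (H : ℝ)) * (e i : ℝ)⌋₊)
    (S : ℕ → ℕ) (hS : ∀ j : ℕ, S j = ∑ i ∈ Finset.Icc 1 j, e i)
    (V : ℝ) (hV : (H : ℝ) ≤ V) :
    ∑' j : {j : ℕ // 1 ≤ j ∧ (S ((j : ℕ) - 1) : ℝ) ≤ V}, Real.sqrt (e (j : ℕ))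
      ≤ 10 * Real.sqrt ((H : ℝ) * V) := by
  classical
  have hHR : (1:ℝ) ≤ (H:ℝ) := by exact_mod_cast hH
  have hHR0 : (0:ℝ) < (H:ℝ) := by linarith
  have hV0 : (0:ℝ) ≤ V := by linarith
  -- natural-number recurrence
  have herec' : ∀ i : ℕ, 1 ≤ i → e (i + 1) = e i + e i / H := by
    intro i hi
    rw [herec i hi]
    have h1 : (1 + 1 / (H : ℝ)) * (e i : ℝ) = (e i : ℝ) / (H:ℝ) + (e i : ℕ) := by
      field_simp; ring
    rw [h1, Nat.floor_add_natCast (by positivity), Nat.floor_div_natCast, Nat.floor_natCast]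
    omega
  -- e i ≥ H for i ≥ 1
  have heH : ∀ i : ℕ, 1 ≤ i → H ≤ e i := by
    intro i hi
    induction i with
    | zero => omega
    | succ n ih =>
      rcases Nat.eq_or_lt_of_le hi with h | h
      · rw [← h]; exact he1.ge
      · have hn : 1 ≤ n := by omega
        rw [herec' n hn]
        exact le_trans (ih hn) (Nat.le_add_right _ _)
  have hemono : ∀ i : ℕ, 1 ≤ i → e i ≤ e (i+1) := by
    intro i hi; rw [herec' i hi]; exact Nat.le_add_right _ _
  have he2 : ∀ i : ℕ, 1 ≤ i → e (i+1) ≤ 2 * e i := by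
    intro i hi; rw [herec' i hi]
    have h := Nat.div_le_self (e i) H
    omega
  have hkey : ∀ i : ℕ, 1 ≤ i → (2*H+1) * e i ≤ 2*H * e (i+1) := by
    intro i hi
    rw [herec' i hi]
    have hd : 1 ≤ e i / H := (Nat.one_le_div_iff (by omega)).2 (heH i hi)
    have hdm := Nat.div_add_mod (e i) H
    have hm : e i % H < H := Nat.mod_lt _ (by omega)
    nlinarith [hd, hdm, hm]
  have hS0 : S 0 = 0 := by rw [hS]; simp
  have hSrec : ∀ j : ℕ, S (j+1) = S j + e (j+1) := by
    intro j
    rw [hS, hS, Finset.sum_Icc_succ_top (by omega : 1 ≤ j + 1)]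
  -- S J ≤ (2H+1) e J
  have hSle : ∀ J : ℕ, S J ≤ (2*H+1) * e J := by
    intro J
    induction J with
    | zero => simp [hS0]
    | succ n ih =>
      rcases Nat.eq_zero_or_pos n with h | h
      · subst h
        rw [hSrec 0, hS0, he1]
        nlinarith [hH]
      · rw [hSrec n]
        have h2 := hkey n h
        nlinarith [ih, h2]
  have hSle3 : ∀ J : ℕ, S J ≤ 3 * H * e (J+1) := by
    intro J
    rcases Nat.eq_zero_or_pos J with h | h
    · subst h; simp [hS0]
    · calc S J ≤ (2*H+1) * e J := hSle J
        _ ≤ (2*H+1) * e (J+1) := Nat.mul_le_mul_left _ (hemono J h)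
        _ ≤ 3 * H * e (J+1) := Nat.mul_le_mul_right _ (by omega)
  -- main induction
  have hmain : ∀ J : ℕ, ∑ j ∈ Finset.Icc 1 J, Real.sqrt (e j)
      ≤ 4 * Real.sqrt ((H:ℝ) * S J) := by
    intro J
    induction J with
    | zero =>
      rw [Finset.Icc_eq_empty (by omega), Finset.sum_empty]
      positivity
    | succ n ih =>
      rw [Finset.sum_Icc_succ_top (by omega : 1 ≤ n + 1)]
      have hstep : 4 * Real.sqrt ((H:ℝ) * S n) + Real.sqrt (e (n+1))
          ≤ 4 * Real.sqrt ((H:ℝ) * S (n+1)) := by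
        have ha : (0:ℝ) ≤ (H:ℝ) * S n := by positivity
        have hb : (0:ℝ) ≤ (e (n+1) : ℝ) := by positivity
        have h3 : (S n : ℝ) ≤ 3 * (H:ℝ) * (e (n+1):ℝ) := by exact_mod_cast hSle3 n
        have hc : (H:ℝ) * S (n+1) = (H:ℝ) * S n + (H:ℝ) * (e (n+1):ℝ) := by
          rw [hSrec n]; push_cast; ring
        -- sqrt of product bound
        have hstep1 : Real.sqrt ((H:ℝ) * S n * (e (n+1):ℝ))
            ≤ 15/8 * ((H:ℝ) * (e (n+1):ℝ)) := by
          rw [show (15/8 * ((H:ℝ) * (e (n+1):ℝ)))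
              = Real.sqrt ((15/8 * ((H:ℝ) * (e (n+1):ℝ)))^2) from
            (Real.sqrt_sq (by positivity)).symm]
          apply Real.sqrt_le_sqrt
          nlinarith [h3, hHR0.le, hb]
        have hsab : Real.sqrt ((H:ℝ) * S n) * Real.sqrt (e (n+1))
            = Real.sqrt ((H:ℝ) * S n * (e (n+1):ℝ)) := (Real.sqrt_mul ha _).symm
        have hsa := Real.sq_sqrt ha
        have hsb := Real.sq_sqrt hb
        have h2 : (4 * Real.sqrt ((H:ℝ) * S n) + Real.sqrt (e (n+1)))^2
            ≤ 16 * ((H:ℝ) * S n + (H:ℝ) * (e (n+1):ℝ)) := by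
          nlinarith [hstep1, hsa, hsb, hsab, mul_nonneg (sub_nonneg.2 hHR) hb]
        have h4 : 4 * Real.sqrt ((H:ℝ) * S n) + Real.sqrt (e (n+1))
            ≤ Real.sqrt (16 * ((H:ℝ) * S n + (H:ℝ) * (e (n+1):ℝ))) := by
          rw [Real.le_sqrt (by positivity) (by positivity)]
          exact h2
        calc 4 * Real.sqrt ((H:ℝ) * S n) + Real.sqrt (e (n+1))
            ≤ Real.sqrt (16 * ((H:ℝ) * S n + (H:ℝ) * (e (n+1):ℝ))) := h4
          _ = 4 * Real.sqrt ((H:ℝ) * S (n+1)) := by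
              rw [hc, show (16:ℝ) = 4^2 by norm_num,
                Real.sqrt_mul (by positivity), Real.sqrt_sq (by norm_num)]
      calc ∑ j ∈ Finset.Icc 1 n, Real.sqrt (e j) + Real.sqrt (e (n+1))
          ≤ 4 * Real.sqrt ((H:ℝ) * S n) + Real.sqrt (e (n+1)) := by
            linarith [ih]
        _ ≤ 4 * Real.sqrt ((H:ℝ) * S (n+1)) := hstep
  -- S is at least the index
  have hSge : ∀ j : ℕ, j ≤ S j := by
    intro j
    rw [hS]
    calc j = ∑ _i ∈ Finset.Icc 1 j, 1 := by simp
      _ ≤ ∑ i ∈ Finset.Icc 1 j, e i := by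
          apply Finset.sum_le_sum
          intro i hi
          have := heH i (Finset.mem_Icc.mp hi).1
          omega
  set P : ℕ → Prop := fun j => 1 ≤ j ∧ (S (j - 1) : ℝ) ≤ V with hP_def
  set N : ℕ := ⌊V⌋₊ + 1 with hN_def
  have hub : ∀ j : ℕ, P j → j ≤ N := by
    intro j hj
    have h1 : ((j - 1 : ℕ) : ℝ) ≤ V := by
      calc ((j-1:ℕ):ℝ) ≤ (S (j-1) : ℝ) := by exact_mod_cast hSge (j-1)
        _ ≤ V := hj.2
    have := Nat.le_floor h1
    omega
  set J : ℕ := Nat.findGreatest P N with hJ_def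
  have hP1 : P 1 := by
    constructor
    · exact le_refl 1
    · simp only [Nat.sub_self, hS0]
      push_cast
      linarith
  have hJ1 : 1 ≤ J := Nat.le_findGreatest (by omega) hP1
  have hPJ : P J := Nat.findGreatest_spec (P := P) (by omega : (1:ℕ) ≤ N) hP1
  have hgt : ∀ j : ℕ, J < j → ¬ P j := by
    intro j hj hPj
    exact Nat.findGreatest_is_greatest hj (hub j hPj) hPj
  -- the tsum equals a finite sum
  have htsum : ∑' j : {j : ℕ // 1 ≤ j ∧ (S ((j : ℕ) - 1) : ℝ) ≤ V}, Real.sqrt (e (j : ℕ))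
      = ∑ j ∈ Finset.Icc 1 J, Set.indicator {j : ℕ | P j} (fun j => Real.sqrt (e j)) j := by
    have h0 : ∑' j : {j : ℕ // 1 ≤ j ∧ (S ((j:ℕ) - 1) : ℝ) ≤ V}, Real.sqrt (e (j:ℕ))
        = ∑' j : ℕ, Set.indicator {j : ℕ | P j} (fun j => Real.sqrt (e j)) j :=
      tsum_subtype {j : ℕ | P j} (fun j => Real.sqrt (e j))
    rw [h0]
    apply tsum_eq_sum
    intro j hj
    rw [Set.indicator_apply_eq_zero]
    intro hPj
    exfalso
    simp only [Finset.mem_Icc, not_and, not_le] at hj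
    have h1 : 1 ≤ j := hPj.1
    have h2 : J < j := hj h1
    exact hgt j h2 hPj
  rw [htsum]
  have hstep1 : ∑ j ∈ Finset.Icc 1 J, Set.indicator {j : ℕ | P j}
        (fun j => Real.sqrt (e j)) j ≤ ∑ j ∈ Finset.Icc 1 J, Real.sqrt (e j) := by
    apply Finset.sum_le_sum
    intro i _
    exact Set.indicator_le_self' (fun x _ => Real.sqrt_nonneg _) i
  -- S J ≤ 3 V
  have hSJ3V : (S J : ℝ) ≤ 3 * V := by
    rcases Nat.eq_or_lt_of_le hJ1 with h | h
    · rw [← h]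
      have hs1 : S 1 = H := by rw [hSrec 0, hS0, he1]; omega
      rw [hs1]
      linarith
    · -- J ≥ 2
      have hJm1 : 1 ≤ J - 1 := by omega
      have heJ : e J ≤ 2 * e (J-1) := by
        have h5 := he2 (J-1) hJm1
        have hJeq : J - 1 + 1 = J := by omega
        rwa [hJeq] at h5
      have heS : e (J-1) ≤ S (J-1) := by
        rw [hS]
        apply Finset.single_le_sum (f := e) (fun i _ => Nat.zero_le _)
        exact Finset.mem_Icc.mpr ⟨hJm1, le_refl _⟩
      have hSJeq : S J = S (J-1) + e J := by
        have h6 := hSrec (J-1)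
        have hJeq : J - 1 + 1 = J := by omega
        rwa [hJeq] at h6
      have h7 : (S (J-1) : ℝ) ≤ V := hPJ.2
      have h8 : (S J : ℝ) = (S (J-1) : ℝ) + (e J : ℝ) := by exact_mod_cast hSJeq
      have heJR : (e J : ℝ) ≤ 2 * (S (J-1) : ℝ) := by
        exact_mod_cast heJ.trans (Nat.mul_le_mul_left 2 heS)
      linarith
  have hfinal : 4 * Real.sqrt ((H:ℝ) * S J) ≤ 10 * Real.sqrt ((H:ℝ) * V) := by
    have h1 : (H:ℝ) * S J ≤ 3 * ((H:ℝ) * V) := by nlinarith [hSJ3V, hHR0.le]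
    calc 4 * Real.sqrt ((H:ℝ) * S J) ≤ 4 * Real.sqrt (3 * ((H:ℝ) * V)) := by
          have := Real.sqrt_le_sqrt h1
          linarith
      _ = 4 * (Real.sqrt 3 * Real.sqrt ((H:ℝ) * V)) := by
          rw [Real.sqrt_mul (by norm_num)]
      _ ≤ 10 * Real.sqrt ((H:ℝ) * V) := by
          have h3 : Real.sqrt 3 ≤ 2 := by
            nlinarith [Real.sq_sqrt (show (0:ℝ) ≤ 3 by norm_num), Real.sqrt_nonneg 3]
          nlinarith [Real.sqrt_nonneg ((H:ℝ) * V)]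
  calc _ ≤ ∑ j ∈ Finset.Icc 1 J, Real.sqrt (e j) := hstep1
    _ ≤ 4 * Real.sqrt ((H:ℝ) * S J) := hmain J
    _ ≤ 10 * Real.sqrt ((H:ℝ) * V) := hfinal
end

section
/- Let S be a finite set, let p : S → [0,1] satisfy ∑_{s ∈ S} p(s) = 1, let H > 0 be a real number, and let u, v : S → ℝ satisfy 0 ≤ v(s) ≤ u(s) ≤ H for all s ∈ S. Define 𝕍(p, w) = ∑_{s ∈ S} p(s)·w(s)² − (∑_{s ∈ S} p(s)·w(s))² for any w : S → ℝ. Then 𝕍(p, u) − 𝕍(p, v) ≤ 4H · ∑_{s ∈ S} p(s)·(u(s) − v(s)). -/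
/-- Variance comparison bound: if `0 ≤ v ≤ u ≤ H` pointwise and `p` is a probability
vector, then `𝕍(p, u) − 𝕍(p, v) ≤ 4H · ∑ s, p(s)(u(s) − v(s))`. -/
theorem variance_comparison_bound
    (S : Type*) [Fintype S] (p : S → ℝ)
    (hp0 : ∀ s : S, 0 ≤ p s) (hp1 : ∀ s : S, p s ≤ 1)
    (hpsum : ∑ s : S, p s = 1)
    (H : ℝ) (hH : 0 < H) (u v : S → ℝ)
    (huv : ∀ s : S, 0 ≤ v s ∧ v s ≤ u s ∧ u s ≤ H) :
    (∑ s : S, p s * (u s) ^ 2 - (∑ s : S, p s * u s) ^ 2)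
      - (∑ s : S, p s * (v s) ^ 2 - (∑ s : S, p s * v s) ^ 2)
      ≤ 4 * H * ∑ s : S, p s * (u s - v s) := by
  have hD : (0:ℝ) ≤ ∑ s : S, p s * (u s - v s) := by
    apply Finset.sum_nonneg
    intro s _
    exact mul_nonneg (hp0 s) (sub_nonneg.2 (huv s).2.1)
  have h1 : ∑ s : S, p s * (u s) ^ 2 - ∑ s : S, p s * (v s) ^ 2
      ≤ 2 * H * ∑ s : S, p s * (u s - v s) := by
    rw [← Finset.sum_sub_distrib, Finset.mul_sum]
    apply Finset.sum_le_sum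
    intro s _
    have h := huv s
    have : p s * (u s) ^ 2 - p s * (v s) ^ 2 = p s * ((u s - v s) * (u s + v s)) := by ring
    rw [this]
    have hle : (u s - v s) * (u s + v s) ≤ (u s - v s) * (2 * H) := by
      apply mul_le_mul_of_nonneg_left _ (sub_nonneg.2 h.2.1)
      nlinarith [h.1, h.2.1, h.2.2]
    calc p s * ((u s - v s) * (u s + v s)) ≤ p s * ((u s - v s) * (2 * H)) :=
          mul_le_mul_of_nonneg_left hle (hp0 s)
      _ = 2 * H * (p s * (u s - v s)) := by ring
  have hB0 : (0:ℝ) ≤ ∑ s : S, p s * v s :=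
    Finset.sum_nonneg fun s _ => mul_nonneg (hp0 s) (huv s).1
  have hAB : ∑ s : S, p s * v s ≤ ∑ s : S, p s * u s :=
    Finset.sum_le_sum fun s _ => mul_le_mul_of_nonneg_left (huv s).2.1 (hp0 s)
  have h2 : (∑ s : S, p s * v s) ^ 2 ≤ (∑ s : S, p s * u s) ^ 2 := by
    nlinarith
  nlinarith [hD, hH.le]
end
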